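/- arXiv:2408.01288 — 7 statements merged into one kernel-verified Lean document; each statement's English description precedes it below -/
import Mathlib

section
/- If A ⊆ Q_n is a Hadamard simplex, then for every y ∈ Q_n \ A there exists x ∈ A with ⟨x,y⟩ < -1 (equivalently, d(x,y) > (n+1)/2). -/
/-- A set `A ⊆ Q_n = {±1}^n` is a Hadamard simplex if `|A| = n+1` and
`⟨x,y⟩ = -1` for all distinct `x, y ∈ A`. -/
def IsHadamardSimplex {n : ℕ} (A : Finset (Fin n → ℤ)) : Prop :=
  (∀ x ∈ A, ∀ i, x i = 1 ∨ x i = -1) ∧ A.card = n + 1 ∧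
    ∀ x ∈ A, ∀ y ∈ A, x ≠ y → ∑ i, x i * y i = -1

theorem stmt_5 (n : ℕ) (A : Finset (Fin n → ℤ)) (hA : IsHadamardSimplex A)
    (y : Fin n → ℤ) (hy : ∀ i, y i = 1 ∨ y i = -1) (hyA : y ∉ A) :
    ∃ x ∈ A, ∑ i, x i * y i < -1 := by
  obtain ⟨hpm, hcard, hinner⟩ := hA
  by_contra hcon
  push_neg at hcon
  -- `hcon : ∀ x ∈ A, -1 ≤ ∑ i, x i * y i`
  -- self inner products
  have hself : ∀ x ∈ A, ∑ i, x i * x i = (n : ℤ) := by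
    intro x hx
    have : ∀ i ∈ Finset.univ, x i * x i = 1 := by
      intro i _
      rcases hpm x hx i with h | h <;> rw [h] <;> ring
    rw [Finset.sum_congr rfl this]
    simp
  -- terms bounded by 1
  have hterm : ∀ x ∈ A, ∀ i, x i * y i ≤ 1 := by
    intro x hx i
    rcases hpm x hx i with h | h <;> rcases hy i with h' | h' <;> rw [h, h'] <;> norm_num
  -- the sum of all vectors of A is zero
  have hs : ∀ i, ∑ x ∈ A, x i = 0 := by
    have h0 : ∑ i, (∑ x ∈ A, x i) * (∑ x ∈ A, x i) = 0 := by
      have e1 : ∀ i ∈ Finset.univ, (∑ x ∈ A, x i) * (∑ x ∈ A, x i)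
          = ∑ x ∈ A, ∑ z ∈ A, x i * z i := by
        intro i _
        rw [Finset.sum_mul_sum]
      rw [Finset.sum_congr rfl e1, Finset.sum_comm]
      have e2 : ∀ x ∈ A, ∑ i : Fin n, ∑ z ∈ A, x i * z i = 0 := by
        intro x hx
        rw [Finset.sum_comm]
        rw [← Finset.add_sum_erase _ _ hx]
        have e3 : ∀ z ∈ A.erase x, ∑ i, z i * x i = -1 := by
          intro z hz
          exact hinner z (Finset.mem_of_mem_erase hz) x hx (Finset.ne_of_mem_erase hz)
        have e4 : ∀ z ∈ A.erase x, (∑ i, x i * z i) = -1 := by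
          intro z hz
          have := e3 z hz
          rw [← this]
          exact Finset.sum_congr rfl fun i _ => mul_comm _ _
        rw [Finset.sum_congr rfl e4, hself x hx, Finset.sum_const,
          Finset.card_erase_of_mem hx, hcard]
        simp
      rw [Finset.sum_congr rfl e2]
      simp
    intro i
    have hnn : ∀ i ∈ Finset.univ, 0 ≤ (∑ x ∈ A, x i) * (∑ x ∈ A, x i) :=
      fun i _ => mul_self_nonneg _
    have := (Finset.sum_eq_zero_iff_of_nonneg hnn).mp h0 i (Finset.mem_univ i)
    exact mul_self_eq_zero.mp this
  -- sum of inner products with y is 0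
  have hsumc : ∑ x ∈ A, (∑ i, x i * y i) = 0 := by
    rw [Finset.sum_comm]
    have : ∀ i ∈ Finset.univ, ∑ x ∈ A, x i * y i = 0 := by
      intro i _
      rw [← Finset.sum_mul, hs i, zero_mul]
    rw [Finset.sum_congr rfl this]
    simp
  -- Matrix step: extended rows form a Hadamard-type matrix
  have hcardA : Fintype.card {x // x ∈ A} = Fintype.card (Option (Fin n)) := by
    simp [hcard]
  let e : {x // x ∈ A} ≃ Option (Fin n) := Fintype.equivOfCardEq hcardA
  let row : (Fin n → ℤ) → Option (Fin n) → ℚ :=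
    fun x j => Option.elim j 1 (fun i => (x i : ℚ))
  let H : Matrix (Option (Fin n)) (Option (Fin n)) ℚ := fun k j => row (e.symm k : Fin n → ℤ) j
  have hrowsum : ∀ x ∈ A, ∀ z ∈ A, ∑ j, row x j * row z j
      = if x = z then (n : ℚ) + 1 else 0 := by
    intro x hx z hz
    rw [Fintype.sum_option]
    simp only [row, Option.elim]
    by_cases hxz : x = z
    · subst hxz
      rw [if_pos rfl]
      have : ∑ i, (x i : ℚ) * (x i : ℚ) = ((∑ i, x i * x i : ℤ) : ℚ) := by
        rw [Int.cast_sum]; exact Finset.sum_congr rfl fun i _ => by push_cast; ring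
      rw [this, hself x hx]
      push_cast; ring
    · rw [if_neg hxz]
      have : ∑ i, (x i : ℚ) * (z i : ℚ) = ((∑ i, x i * z i : ℤ) : ℚ) := by
        rw [Int.cast_sum]; exact Finset.sum_congr rfl fun i _ => by push_cast; ring
      rw [this, hinner x hx z hz hxz]
      push_cast; ring
  have hHHt : H * H.transpose = ((n : ℚ) + 1) • 1 := by
    ext k k'
    rw [Matrix.mul_apply]
    simp only [Matrix.transpose_apply, Matrix.smul_apply, Matrix.one_apply, smul_eq_mul]
    have := hrowsum (e.symm k : Fin n → ℤ) (e.symm k).2 (e.symm k : Fin n → ℤ)  (e.symm k).2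
    rw [hrowsum (e.symm k : Fin n → ℤ) (e.symm k).2 (e.symm k' : Fin n → ℤ) (e.symm k').2]
    by_cases hk : k = k'
    · subst hk; simp
    · have : (e.symm k : Fin n → ℤ) ≠ (e.symm k' : Fin n → ℤ) := by
        intro hh
        exact hk (e.symm.injective (Subtype.ext hh))
      rw [if_neg this, if_neg hk, mul_zero]
  have hne : ((n : ℚ) + 1) ≠ 0 := by positivity
  have hHtH : H.transpose * H = ((n : ℚ) + 1) • 1 := by
    have h1 : H * (((n : ℚ) + 1)⁻¹ • H.transpose) = 1 := by
      rw [Matrix.mul_smul, hHHt, smul_smul, inv_mul_cancel₀ hne, one_smul]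
    have h2 := mul_eq_one_comm.mp h1
    have h3 : (((n : ℚ) + 1)⁻¹ • H.transpose) * H = ((n : ℚ) + 1)⁻¹ • (H.transpose * H) := by
      rw [Matrix.smul_mul]
    rw [h3] at h2
    calc H.transpose * H = ((n : ℚ) + 1) • (((n : ℚ) + 1)⁻¹ • (H.transpose * H)) := by
          rw [smul_smul, mul_inv_cancel₀ hne, one_smul]
      _ = ((n : ℚ) + 1) • 1 := by rw [h2]
  have hcol : ∀ j j', ∑ k, H k j * H k j' = if j = j' then (n : ℚ) + 1 else 0 := by
    intro j j'
    have := congrFun (congrFun hHtH j) j'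
    rw [Matrix.mul_apply] at this
    simp only [Matrix.transpose_apply, Matrix.smul_apply, Matrix.one_apply, smul_eq_mul] at this
    rw [this]
    split <;> simp
  -- extended y
  let yh : Option (Fin n) → ℚ := fun j => Option.elim j 1 (fun i => (y i : ℚ))
  have hyh : ∀ j, yh j * yh j = 1 := by
    intro j
    cases j with
    | none => simp [yh]
    | some i =>
        simp only [yh, Option.elim]
        rcases hy i with h | h <;> rw [h] <;> norm_num
  have keyQ : ∑ k, (∑ j, H k j * yh j) ^ 2 = ((n : ℚ) + 1) ^ 2 := by
    have e1 : ∀ k ∈ Finset.univ, (∑ j, H k j * yh j) ^ 2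
        = ∑ j, ∑ j', (H k j * yh j) * (H k j' * yh j') := by
      intro k _
      rw [sq, Finset.sum_mul_sum]
    rw [Finset.sum_congr rfl e1, Finset.sum_comm]
    have e2 : ∀ j ∈ Finset.univ, ∑ k, ∑ j', (H k j * yh j) * (H k j' * yh j')
        = (n : ℚ) + 1 := by
      intro j _
      rw [Finset.sum_comm]
      have e3 : ∀ j' ∈ Finset.univ, ∑ k, (H k j * yh j) * (H k j' * yh j')
          = (if j = j' then (n : ℚ) + 1 else 0) * (yh j * yh j') := by
        intro j' _
        rw [← hcol j j', Finset.sum_mul]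
        exact Finset.sum_congr rfl fun k _ => by ring
      rw [Finset.sum_congr rfl e3]
      rw [Finset.sum_eq_single j (fun j' _ hj' => by rw [if_neg (Ne.symm hj'), zero_mul])
        (fun hj => absurd (Finset.mem_univ j) hj)]
      rw [if_pos rfl, hyh j, mul_one]
    rw [Finset.sum_congr rfl e2]
    simp [Fintype.card_option]
    ring
  -- transfer keyQ to a sum over A in ℤ
  have hrowy : ∀ a : {x // x ∈ A}, (∑ j, row (a : Fin n → ℤ) j * yh j) ^ 2
      = (((∑ i, (a : Fin n → ℤ) i * y i : ℤ) : ℚ) + 1) ^ 2 := by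
    intro a
    congr 1
    rw [Fintype.sum_option]
    simp only [row, yh, Option.elim]
    rw [Int.cast_sum, add_comm]
    congr 1
    · exact Finset.sum_congr rfl fun i _ => by push_cast; ring
    · norm_num
  have keyQ' : ∑ x ∈ A, (((∑ i, x i * y i : ℤ) : ℚ) + 1) ^ 2 = ((n : ℚ) + 1) ^ 2 := by
    calc ∑ x ∈ A, (((∑ i, x i * y i : ℤ) : ℚ) + 1) ^ 2
        = ∑ a : {x // x ∈ A}, (((∑ i, (a : Fin n → ℤ) i * y i : ℤ) : ℚ) + 1) ^ 2 :=
          (Finset.sum_coe_sort A _).symm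
      _ = ∑ a : {x // x ∈ A}, (∑ j, row (a : Fin n → ℤ) j * yh j) ^ 2 :=
          Finset.sum_congr rfl fun a _ => (hrowy a).symm
      _ = ∑ k, (∑ j, row ((e.symm k : {x // x ∈ A}) : Fin n → ℤ) j * yh j) ^ 2 :=
          (Equiv.sum_comp e.symm fun a : {x // x ∈ A} =>
            (∑ j, row (a : Fin n → ℤ) j * yh j) ^ 2).symm
      _ = ∑ k, (∑ j, H k j * yh j) ^ 2 := rfl
      _ = ((n : ℚ) + 1) ^ 2 := keyQ
  have keyZ : ∑ x ∈ A, ((∑ i, x i * y i) + 1) ^ 2 = ((n : ℤ) + 1) ^ 2 := by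
    exact_mod_cast keyQ'
  -- upper bound: since x ≠ y, the inner product is at most n - 1
  have hub : ∀ x ∈ A, (∑ i, x i * y i) ≤ (n : ℤ) - 1 := by
    intro x hx
    have hxy : x ≠ y := fun h => hyA (h ▸ hx)
    obtain ⟨i₀, hi₀⟩ := Function.ne_iff.mp hxy
    have h1 : x i₀ * y i₀ = -1 := by
      rcases hpm x hx i₀ with h | h <;> rcases hy i₀ with h' | h' <;>
        first
          | (exact absurd (h.trans h'.symm) hi₀)
          | (rw [h, h']; ring)
    have hn1 : 1 ≤ n := i₀.pos
    rw [← Finset.add_sum_erase _ _ (Finset.mem_univ i₀), h1]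
    have h2 : ∑ i ∈ Finset.univ.erase i₀, x i * y i
        ≤ ∑ _i ∈ Finset.univ.erase i₀, (1 : ℤ) :=
      Finset.sum_le_sum fun i _ => hterm x hx i
    have h3 : ∑ _i ∈ Finset.univ.erase i₀, (1 : ℤ) = (n : ℤ) - 1 := by
      rw [Finset.sum_const, Finset.card_erase_of_mem (Finset.mem_univ i₀), Finset.card_univ,
        Fintype.card_fin, nsmul_eq_mul, mul_one, Nat.cast_sub hn1, Nat.cast_one]
    linarith
  have hfin : ((n : ℤ) + 1) ^ 2 ≤ (n : ℤ) * ((n : ℤ) + 1) := by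
    calc ((n : ℤ) + 1) ^ 2 = ∑ x ∈ A, ((∑ i, x i * y i) + 1) ^ 2 := keyZ.symm
      _ ≤ ∑ x ∈ A, (n : ℤ) * ((∑ i, x i * y i) + 1) :=
          Finset.sum_le_sum fun x hx => by nlinarith [hcon x hx, hub x hx]
      _ = (n : ℤ) * (∑ x ∈ A, ((∑ i, x i * y i) + 1)) := by rw [Finset.mul_sum]
      _ = (n : ℤ) * ((n : ℤ) + 1) := by
          rw [Finset.sum_add_distrib, hsumc, Finset.sum_const, hcard]
          ring
  have : (0 : ℤ) ≤ (n : ℤ) := Int.ofNat_nonneg n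
  nlinarith
end

section
/- If A ⊆ Q_n is a Hadamard simplex, then A is a rigid, maximally diameter-r subset of Q_n with r = (n+1)/2: the diameter of A equals (n+1)/2, every point of A realizes the diameter (rigidity), and for every y ∈ Q_n \ A there is a ∈ A with d(y,a) > (n+1)/2. -/
open Finset

lemma inner_eq_sub {n : ℕ} (x y : Fin n → ℤ)
    (hx : ∀ i, x i = 1 ∨ x i = -1) (hy : ∀ i, y i = 1 ∨ y i = -1) :
    ∑ i, x i * y i = n - 2 * hammingDist x y := by
  have key : ∀ i, x i * y i = 1 - 2 * (if x i ≠ y i then (1:ℤ) else 0) := by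
    intro i
    rcases hx i with h1 | h1 <;> rcases hy i with h2 | h2 <;> simp [h1, h2]
  have hd : (hammingDist x y : ℤ) = ∑ i : Fin n, (if x i ≠ y i then (1:ℤ) else 0) := by
    simp [hammingDist, Finset.sum_ite, Finset.filter_eq']
  calc ∑ i, x i * y i = ∑ i : Fin n, (1 - 2 * (if x i ≠ y i then (1:ℤ) else 0)) :=
        Finset.sum_congr rfl fun i _ => key i
    _ = n - 2 * hammingDist x y := by
        rw [Finset.sum_sub_distrib, ← Finset.mul_sum, ← hd]
        simp [mul_comm]

open Finset

lemma columns {n : ℕ} (A : Finset (Fin n → ℤ))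
    (hQ : ∀ x ∈ A, ∀ i, x i = 1 ∨ x i = -1) (hcard : A.card = n + 1)
    (hinner : ∀ x ∈ A, ∀ y ∈ A, x ≠ y → ∑ i, x i * y i = -1) :
    ∀ j l : Option (Fin n),
      ∑ x ∈ A, (j.elim 1 x) * (l.elim 1 x) = if j = l then ((n:ℤ)+1) else 0 := by
  classical
  have hself : ∀ x ∈ A, ∑ i, x i * x i = (n:ℤ) := by
    intro x hx
    have h : ∀ i, x i * x i = 1 := fun i => by rcases hQ x hx i with h|h <;> simp [h]
    simp [h]
  have hcardeq : Fintype.card ↥A = Fintype.card (Option (Fin n)) := by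
    simp [hcard]
  let e : ↥A ≃ Option (Fin n) := Fintype.equivOfCardEq hcardeq
  let M : Matrix ↥A (Option (Fin n)) ℚ := fun a j => ((j.elim 1 (a : Fin n → ℤ) : ℤ) : ℚ)
  have hS : ∀ a b : ↥A, ∑ j : Option (Fin n), M a j * M b j
      = if a = b then ((n:ℚ)+1) else 0 := by
    intro a b
    rw [Fintype.sum_option]
    have : ∑ i : Fin n, M a (some i) * M b (some i)
        = ((∑ i, (a:Fin n → ℤ) i * (b:Fin n → ℤ) i : ℤ) : ℚ) := by
      push_cast [M]; rfl
    rw [this]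
    by_cases hab : a = b
    · subst hab
      rw [hself _ a.2]
      simp [M, add_comm]
    · have : (a : Fin n → ℤ) ≠ (b : Fin n → ℤ) := fun h => hab (Subtype.ext h)
      rw [hinner _ a.2 _ b.2 this]
      simp [M, hab]
  have hn1 : ((n:ℚ)+1) ≠ 0 := by positivity
  have hMMT : M * (((n:ℚ)+1)⁻¹ • M.transpose) = 1 := by
    ext a b
    rw [Matrix.mul_apply, Matrix.one_apply]
    simp only [Matrix.smul_apply, Matrix.transpose_apply, smul_eq_mul]
    have : ∀ j, M a j * (((n:ℚ)+1)⁻¹ * M b j) = ((n:ℚ)+1)⁻¹ * (M a j * M b j) := by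
      intro j; ring
    rw [Finset.sum_congr rfl fun j _ => this j, ← Finset.mul_sum, hS a b]
    by_cases hab : a = b <;> simp [hab, hn1]
  have hTM : (((n:ℚ)+1)⁻¹ • M.transpose) * M = 1 :=
    (Matrix.mul_eq_one_comm_of_equiv e).mp hMMT
  intro j l
  have h1 := congrFun (congrFun hTM j) l
  rw [Matrix.mul_apply, Matrix.one_apply] at h1
  simp only [Matrix.smul_apply, Matrix.transpose_apply, smul_eq_mul] at h1
  have h2 : ∑ a : ↥A, M a j * M a l = if j = l then ((n:ℚ)+1) else 0 := by
    have : ∀ a : ↥A, ((n:ℚ)+1)⁻¹ * M a j * M a l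
        = ((n:ℚ)+1)⁻¹ * (M a j * M a l) := fun a => by ring
    rw [Finset.sum_congr rfl (fun a _ => this a), ← Finset.mul_sum] at h1
    field_simp at h1
    by_cases hjl : j = l
    · simpa [hjl, hn1, mul_comm] using h1
    · simpa [hjl, hn1] using h1
  have h3 : ∑ a : ↥A, M a j * M a l
      = ((∑ x ∈ A, (j.elim 1 x) * (l.elim 1 x) : ℤ) : ℚ) := by
    push_cast
    rw [← Finset.sum_coe_sort A (fun x => ((j.elim 1 x : ℤ):ℚ) * ((l.elim 1 x : ℤ):ℚ))]
  rw [h3] at h2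
  by_cases hjl : j = l
  · simp only [hjl, if_true] at h2 ⊢
    exact_mod_cast h2
  · simp only [hjl, if_false] at h2 ⊢
    exact_mod_cast h2


/-- Diameter of a finite subset of the hypercube, w.r.t. Hamming distance. -/
def hDiam {n : ℕ} (A : Finset (Fin n → ℤ)) : ℕ :=
  A.sup fun x => A.sup fun y => hammingDist x y

/-- `A` is maximally diameter-`r` in `Q_n`: its diameter is `r` and adding any
point of the hypercube not in `A` increases the diameter. -/
def IsMaxDiam {n : ℕ} (A : Finset (Fin n → ℤ)) (r : ℕ) : Prop :=
  hDiam A = r ∧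
    ∀ y : Fin n → ℤ, (∀ i, y i = 1 ∨ y i = -1) → y ∉ A → ∃ a ∈ A, r < hammingDist y a

/-- `A` is rigid: every point of `A` realizes the diameter. -/
def IsRigid {n : ℕ} (A : Finset (Fin n → ℤ)) : Prop :=
  ∀ a ∈ A, (A.sup fun x => hammingDist x a) = hDiam A

theorem stmt_6 (n r : ℕ) (h2r : 2 * r = n + 1) (A : Finset (Fin n → ℤ))
    (hQ : ∀ x ∈ A, ∀ i, x i = 1 ∨ x i = -1) (hcard : A.card = n + 1)
    (hinner : ∀ x ∈ A, ∀ y ∈ A, x ≠ y → ∑ i, x i * y i = -1) :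
    IsMaxDiam A r ∧ IsRigid A := by
  classical
  have hn1 : 1 ≤ n := by omega
  have hr1 : 1 ≤ r := by omega
  -- all pairwise distances equal r
  have hdist : ∀ x ∈ A, ∀ z ∈ A, x ≠ z → hammingDist x z = r := by
    intro x hx z hz hne
    have h1 := hinner x hx z hz hne
    rw [inner_eq_sub x z (hQ x hx) (hQ z hz)] at h1
    omega
  have hA2 : 1 < A.card := by omega
  -- sups
  have hsup : ∀ a ∈ A, (A.sup fun x => hammingDist x a) = r := by
    intro a ha
    apply le_antisymm
    · apply Finset.sup_le
      intro x hx
      by_cases hxa : x = a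
      · subst hxa; simp
      · exact (hdist x hx a ha hxa).le
    · obtain ⟨x, hx, hxa⟩ := Finset.exists_mem_ne hA2 a
      exact le_trans (le_of_eq (hdist x hx a ha hxa).symm)
        (Finset.le_sup (f := fun x => hammingDist x a) hx)
  have hdiam : hDiam A = r := by
    apply le_antisymm
    · apply Finset.sup_le
      intro x hx
      apply Finset.sup_le
      intro z hz
      by_cases hxz : x = z
      · subst hxz; simp
      · exact (hdist x hx z hz hxz).le
    · obtain ⟨a, ha⟩ := Finset.card_pos.mp (by omega : 0 < A.card)
      rw [← hsup a ha]
      apply Finset.sup_le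
      intro x hx
      have h1 : hammingDist x a ≤ A.sup fun z => hammingDist x z :=
        Finset.le_sup (f := fun z => hammingDist x z) ha
      exact h1.trans (Finset.le_sup (f := fun y => A.sup fun z => hammingDist y z) hx)
  have col0 : ∀ i, ∑ x ∈ A, x i = 0 := fun i => by
    simpa using columns A hQ hcard hinner (some i) none
  have colij : ∀ i i' : Fin n, ∑ x ∈ A, x i * x i' = if i = i' then (n:ℤ)+1 else 0 :=
    fun i i' => by simpa using columns A hQ hcard hinner (some i) (some i')
  have hmax : ∀ y : Fin n → ℤ, (∀ i, y i = 1 ∨ y i = -1) → y ∉ A →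
      ∃ a ∈ A, r < hammingDist y a := by
    intro y hy hyA
    by_contra hcon
    push_neg at hcon
    set p : (Fin n → ℤ) → ℤ := fun x => ∑ i, y i * x i with hp
    have hval : ∀ a ∈ A, p a = (n:ℤ) - 2 * hammingDist y a :=
      fun a ha => inner_eq_sub y a hy (hQ a ha)
    have hsum0 : ∑ x ∈ A, p x = 0 := by
      rw [hp]
      rw [Finset.sum_comm]
      apply Finset.sum_eq_zero
      intro i _
      rw [← Finset.mul_sum, col0 i, mul_zero]
    have hysq : ∀ i, y i * y i = 1 := fun i => by rcases hy i with h|h <;> simp [h]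
    have hsumsq : ∑ x ∈ A, p x * p x = n * ((n:ℤ)+1) := by
      have e1 : ∀ x : Fin n → ℤ, p x * p x = ∑ i, ∑ i', (y i * y i') * (x i * x i') := by
        intro x
        rw [hp]
        simp only
        rw [Finset.sum_mul_sum]
        exact Finset.sum_congr rfl fun i _ => Finset.sum_congr rfl fun i' _ => by ring
      rw [Finset.sum_congr rfl fun x _ => e1 x, Finset.sum_comm]
      have e2 : ∀ i : Fin n, ∑ x ∈ A, ∑ i', (y i * y i') * (x i * x i') = (n:ℤ)+1 := by
        intro i
        rw [Finset.sum_comm]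
        have h5 : ∀ i' : Fin n, ∑ x ∈ A, (y i * y i') * (x i * x i')
            = (y i * y i') * (if i = i' then (n:ℤ)+1 else 0) := by
          intro i'
          rw [← Finset.mul_sum, colij i i']
        rw [Finset.sum_congr rfl fun i' _ => h5 i']
        simp only [mul_ite, mul_zero]
        rw [Finset.sum_ite_eq]
        simp [hysq i]
      rw [Finset.sum_congr rfl fun i _ => e2 i]
      simp
    have hub : ∀ a ∈ A, p a ≤ (n:ℤ) - 2 := by
      intro a ha
      have hne : y ≠ a := fun h => hyA (h ▸ ha)
      have hpos : 0 < hammingDist y a := hammingDist_pos.mpr hne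
      rw [hval a ha]
      omega
    have hlb : ∀ a ∈ A, -1 ≤ p a := by
      intro a ha
      have hle := hcon a ha
      rw [hval a ha]
      omega
    have hbound : ∑ x ∈ A, p x * p x ≤ ((n:ℤ) - 2) * ((n:ℤ)+1) := by
      have e3 : ∑ x ∈ A, p x * (p x + 1) = ∑ x ∈ A, p x * p x := by
        simp only [mul_add, mul_one]
        rw [Finset.sum_add_distrib, hsum0, add_zero]
      rw [← e3]
      have e4 : ∑ x ∈ A, ((n:ℤ)-2) * (p x + 1) = ((n:ℤ)-2)*((n:ℤ)+1) := by
        rw [← Finset.mul_sum]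
        congr 1
        rw [Finset.sum_add_distrib, hsum0, zero_add]
        simp [hcard]
      rw [← e4]
      apply Finset.sum_le_sum
      intro x hx
      have h1 := hlb x hx
      have h2 := hub x hx
      nlinarith
    rw [hsumsq] at hbound
    have hnn : (0:ℤ) ≤ n := Int.natCast_nonneg n
    nlinarith
  refine ⟨⟨hdiam, hmax⟩, fun a ha => ?_⟩
  rw [hdiam]
  exact hsup a ha
end

section
/- If A₁ is a rigid, maximally diameter-r₁ subset of Q_{n₁} and A₂ is a rigid, maximally diameter-r₂ subset of Q_{n₂}, then A₁ × A₂ is a rigid, maximally diameter-(r₁+r₂) subset of Q_{n₁+n₂} (under the natural identification Q_{n₁} × Q_{n₂} ≅ Q_{n₁+n₂}). -/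
lemma hammingDist_append {n₁ n₂ : ℕ} (a c : Fin n₁ → ℤ) (b d : Fin n₂ → ℤ) :
    hammingDist (Fin.append a b) (Fin.append c d) = hammingDist a c + hammingDist b d := by
  simp only [hammingDist, Finset.card_filter, Fin.sum_univ_add, Fin.append_left,
    Fin.append_right]

lemma dist_le_hDiam {n : ℕ} {A : Finset (Fin n → ℤ)} {x y : Fin n → ℤ}
    (hx : x ∈ A) (hy : y ∈ A) : hammingDist x y ≤ hDiam A :=
  le_trans (Finset.le_sup (f := fun y => hammingDist x y) hy)
    (Finset.le_sup (f := fun x => A.sup fun y => hammingDist x y) hx)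

lemma exists_far {n : ℕ} {A : Finset (Fin n → ℤ)} {r : ℕ} (hne : A.Nonempty)
    (hd : hDiam A = r) (hrig : IsRigid A) {a : Fin n → ℤ} (ha : a ∈ A) :
    ∃ x ∈ A, hammingDist x a = r := by
  obtain ⟨x, hx, hxe⟩ := Finset.exists_mem_eq_sup A hne (fun x => hammingDist x a)
  exact ⟨x, hx, by rw [← hxe, hrig a ha, hd]⟩

lemma nonempty_of_max {n : ℕ} {A : Finset (Fin n → ℤ)} {r : ℕ}
    (hmax : IsMaxDiam A r) : A.Nonempty := by
  by_contra h
  rw [Finset.not_nonempty_iff_eq_empty] at h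
  obtain ⟨a, ha, -⟩ := hmax.2 (fun _ => 1) (fun _ => Or.inl rfl) (by simp [h])
  simp [h] at ha

/-- Any hypercube point is at distance ≥ r from some point of a rigid
maximally diameter-r set. -/
lemma ge_r {n : ℕ} {A : Finset (Fin n → ℤ)} {r : ℕ}
    (hmax : IsMaxDiam A r) (hrig : IsRigid A) (y : Fin n → ℤ)
    (hy : ∀ i, y i = 1 ∨ y i = -1) : ∃ a ∈ A, r ≤ hammingDist y a := by
  by_cases hyA : y ∈ A
  · obtain ⟨x, hx, hxe⟩ := exists_far (nonempty_of_max hmax) hmax.1 hrig hyA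
    exact ⟨x, hx, by rw [hammingDist_comm]; exact hxe.ge⟩
  · obtain ⟨a, ha, hlt⟩ := hmax.2 y hy hyA
    exact ⟨a, ha, hlt.le⟩

theorem stmt_8 (n₁ n₂ r₁ r₂ : ℕ) (A₁ : Finset (Fin n₁ → ℤ)) (A₂ : Finset (Fin n₂ → ℤ))
    (hQ₁ : ∀ x ∈ A₁, ∀ i, x i = 1 ∨ x i = -1) (hQ₂ : ∀ x ∈ A₂, ∀ i, x i = 1 ∨ x i = -1)
    (hmax₁ : IsMaxDiam A₁ r₁) (hmax₂ : IsMaxDiam A₂ r₂)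
    (hrig₁ : IsRigid A₁) (hrig₂ : IsRigid A₂) :
    IsMaxDiam ((A₁ ×ˢ A₂).image fun p => Fin.append p.1 p.2) (r₁ + r₂) ∧
      IsRigid ((A₁ ×ˢ A₂).image fun p => Fin.append p.1 p.2) := by
  set P := (A₁ ×ˢ A₂).image fun p : (Fin n₁ → ℤ) × (Fin n₂ → ℤ) => Fin.append p.1 p.2 with hP
  have hne₁ := nonempty_of_max hmax₁
  have hne₂ := nonempty_of_max hmax₂
  have hmemP : ∀ x, x ∈ P ↔ ∃ a₁ ∈ A₁, ∃ a₂ ∈ A₂, Fin.append a₁ a₂ = x := by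
    intro x
    simp [hP, Finset.mem_image, Finset.mem_product]
    constructor
    · rintro ⟨a, b, ⟨ha, hb⟩, he⟩; exact ⟨a, ha, b, hb, he⟩
    · rintro ⟨a, ha, b, hb, he⟩; exact ⟨a, b, ⟨ha, hb⟩, he⟩
  -- rigidity-style sup computation: for b = append a₁ a₂ with parts in A₁, A₂,
  -- P.sup (fun x => dist x b) = r₁ + r₂
  have hsup : ∀ a₁ ∈ A₁, ∀ a₂ ∈ A₂,
      (P.sup fun x => hammingDist x (Fin.append a₁ a₂)) = r₁ + r₂ := by
    intro a₁ ha₁ a₂ ha₂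
    apply le_antisymm
    · apply Finset.sup_le
      intro x hx
      obtain ⟨x₁, hx₁, x₂, hx₂, he⟩ := (hmemP x).1 hx
      rw [← he, hammingDist_append]
      have h1 : hammingDist x₁ a₁ ≤ r₁ := by
        calc hammingDist x₁ a₁ ≤ A₁.sup fun z => hammingDist z a₁ := Finset.le_sup (f := fun z => hammingDist z a₁) hx₁
        _ = r₁ := by rw [hrig₁ a₁ ha₁, hmax₁.1]
      have h2 : hammingDist x₂ a₂ ≤ r₂ := by
        calc hammingDist x₂ a₂ ≤ A₂.sup fun z => hammingDist z a₂ := Finset.le_sup (f := fun z => hammingDist z a₂) hx₂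
        _ = r₂ := by rw [hrig₂ a₂ ha₂, hmax₂.1]
      omega
    · obtain ⟨x₁, hx₁, he₁⟩ := exists_far hne₁ hmax₁.1 hrig₁ ha₁
      obtain ⟨x₂, hx₂, he₂⟩ := exists_far hne₂ hmax₂.1 hrig₂ ha₂
      have hmem : Fin.append x₁ x₂ ∈ P := (hmemP _).2 ⟨x₁, hx₁, x₂, hx₂, rfl⟩
      calc r₁ + r₂ = hammingDist (Fin.append x₁ x₂) (Fin.append a₁ a₂) := by
            rw [hammingDist_append, he₁, he₂]
        _ ≤ P.sup fun x => hammingDist x (Fin.append a₁ a₂) := Finset.le_sup (f := fun x => hammingDist x (Fin.append a₁ a₂)) hmem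
  have hDiamP : hDiam P = r₁ + r₂ := by
    apply le_antisymm
    · apply Finset.sup_le
      intro x hx
      obtain ⟨x₁, hx₁, x₂, hx₂, he⟩ := (hmemP x).1 hx
      apply Finset.sup_le
      intro z hz
      obtain ⟨z₁, hz₁, z₂, hz₂, he'⟩ := (hmemP z).1 hz
      rw [← he, ← he', hammingDist_append]
      exact add_le_add (le_trans (dist_le_hDiam hx₁ hz₁) hmax₁.1.le)
        (le_trans (dist_le_hDiam hx₂ hz₂) hmax₂.1.le)
    · obtain ⟨a₁, ha₁⟩ := hne₁
      obtain ⟨a₂, ha₂⟩ := hne₂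
      rw [← hsup a₁ ha₁ a₂ ha₂]
      apply Finset.sup_le
      intro x hx
      exact le_trans (Finset.le_sup (f := fun y => hammingDist x y)
        ((hmemP _).2 ⟨a₁, ha₁, a₂, ha₂, rfl⟩))
        (Finset.le_sup (f := fun x => P.sup fun y => hammingDist x y) hx)
  refine ⟨⟨hDiamP, ?_⟩, ?_⟩
  · -- maximality
    intro y hy hyP
    set y₁ : Fin n₁ → ℤ := fun i => y (Fin.castAdd n₂ i) with hy₁def
    set y₂ : Fin n₂ → ℤ := fun j => y (Fin.natAdd n₁ j) with hy₂def
    have hy_eq : Fin.append y₁ y₂ = y := by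
      funext i
      induction i using Fin.addCases with
      | left i => rw [Fin.append_left]
      | right j => rw [Fin.append_right]
    have hcube₁ : ∀ i, y₁ i = 1 ∨ y₁ i = -1 := fun i => hy _
    have hcube₂ : ∀ j, y₂ j = 1 ∨ y₂ j = -1 := fun j => hy _
    have hnot : y₁ ∉ A₁ ∨ y₂ ∉ A₂ := by
      by_contra h
      push_neg at h
      exact hyP ((hmemP y).2 ⟨y₁, h.1, y₂, h.2, hy_eq⟩)
    rcases hnot with h₁ | h₂
    · obtain ⟨a₁, ha₁, hlt⟩ := hmax₁.2 y₁ hcube₁ h₁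
      obtain ⟨a₂, ha₂, hle⟩ := ge_r hmax₂ hrig₂ y₂ hcube₂
      refine ⟨Fin.append a₁ a₂, (hmemP _).2 ⟨a₁, ha₁, a₂, ha₂, rfl⟩, ?_⟩
      rw [← hy_eq, hammingDist_append]
      omega
    · obtain ⟨a₂, ha₂, hlt⟩ := hmax₂.2 y₂ hcube₂ h₂
      obtain ⟨a₁, ha₁, hle⟩ := ge_r hmax₁ hrig₁ y₁ hcube₁
      refine ⟨Fin.append a₁ a₂, (hmemP _).2 ⟨a₁, ha₁, a₂, ha₂, rfl⟩, ?_⟩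
      rw [← hy_eq, hammingDist_append]
      omega
  · -- rigidity
    intro b hb
    obtain ⟨b₁, hb₁, b₂, hb₂, he⟩ := (hmemP b).1 hb
    rw [← he, hsup b₁ hb₁ b₂ hb₂, hDiamP]
end

section
/- For any positive real numbers s₁,…,s_n, the number of non-negative integer solutions (x₁,…,x_n) of the inequality x₁/s₁ + ⋯ + x_n/s_n ≤ 1 is at least ∏_{i=1}^n (s_i / i). -/
open Finset

lemma pow_sub_pow_le' (n : ℕ) (a b d : ℝ) (hb : 0 ≤ b) (hba : b ≤ a) (ha1 : a ≤ 1)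
    (hd : a - b ≤ d) (hd0 : 0 ≤ d) :
    a ^ (n + 1) - b ^ (n + 1) ≤ (n + 1) * a ^ n * d := by
  have ha : 0 ≤ a := hb.trans hba
  have h := geom_sum₂_mul a b (n + 1)
  calc a ^ (n+1) - b ^ (n+1) = (∑ i ∈ range (n+1), a ^ i * b ^ (n + 1 - 1 - i)) * (a - b) := h.symm
    _ ≤ (∑ i ∈ range (n+1), a ^ n) * d := by
        apply mul_le_mul _ hd (by linarith) (by positivity)
        apply Finset.sum_le_sum
        intro i hi
        have hi' := mem_range.mp hi
        simp only [Nat.add_sub_cancel]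
        calc a ^ i * b ^ (n - i) ≤ a ^ i * a ^ (n - i) := by
              apply mul_le_mul_of_nonneg_left (pow_le_pow_left₀ hb hba _) (by positivity)
          _ = a ^ n := by
              rw [← pow_add]
              congr 1
              omega
    _ = (n + 1) * a ^ n * d := by
        rw [Finset.sum_const, card_range]
        push_cast
        ring

lemma telescope (n : ℕ) (c : ℝ) (hc : 0 < c) :
    c / (n + 1) ≤ ∑ k ∈ range ⌈c⌉₊, ((c - k) / c) ^ n := by
  set M := ⌈c⌉₊ with hM
  set b : ℕ → ℝ := fun k => max (c - k) 0 / c with hb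
  have hbnn : ∀ k, 0 ≤ b k := fun k => by positivity
  have hb1 : ∀ k, b k ≤ 1 := by
    intro k
    rw [hb, div_le_one hc]
    have : (0:ℝ) ≤ k := Nat.cast_nonneg k
    rcases le_or_gt (c - k) 0 with h | h
    · rw [max_eq_right h]; linarith
    · rw [max_eq_left h.le]; linarith
  have hmono : ∀ k, b (k+1) ≤ b k := by
    intro k
    rw [hb]
    dsimp only
    push_cast
    gcongr
    linarith [Nat.cast_nonneg (α := ℝ) k]
  have hdiff : ∀ k, b k - b (k+1) ≤ 1 / c := by
    intro k
    rw [hb, div_sub_div_same, div_le_div_iff₀ hc hc]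
    have h1 : max (c - k) 0 - max (c - (k+1:ℕ)) 0 ≤ 1 := by
      push_cast
      rcases le_or_gt (c - k) 0 with h | h
      · have : max (c-k) 0 = 0 := max_eq_right h
        rw [this]
        have := le_max_right (c - (k+1)) 0
        linarith
      rcases le_or_gt (c - (k+1)) 0 with h2 | h2
      · rw [max_eq_left h.le, max_eq_right h2]; linarith
      · rw [max_eq_left h.le, max_eq_left h2.le]; linarith
    nlinarith
  have key : ∀ k ∈ range M, b k ^ (n+1) - b (k+1) ^ (n+1) ≤ (n+1) * ((c - k)/c) ^ n * (1/c) := by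
    intro k hk
    have hkc : (k:ℝ) < c := Nat.lt_ceil.mp (mem_range.mp hk)
    have hbk : b k = (c - k)/c := by
      rw [hb]; dsimp only; rw [max_eq_left (by linarith)]
    rw [← hbk]
    exact pow_sub_pow_le' n (b k) (b (k+1)) (1/c) (hbnn _) (hmono _) (hb1 _) (hdiff _) (by positivity)
  have tele : ∑ k ∈ range M, (b k ^ (n+1) - b (k+1) ^ (n+1)) = b 0 ^ (n+1) - b M ^ (n+1) :=
    Finset.sum_range_sub' (fun k => b k ^ (n+1)) M
  have hb0 : b 0 = 1 := by
    rw [hb]; dsimp only; rw [Nat.cast_zero, sub_zero, max_eq_left hc.le, div_self hc.ne']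
  have hbM : b M = 0 := by
    rw [hb]; dsimp only
    rw [max_eq_right (by have := Nat.le_ceil c; rw [← hM] at this; linarith), zero_div]
  have h2 : 1 ≤ ∑ k ∈ range M, (n+1:ℝ) * ((c - k)/c) ^ n * (1/c) := by
    have := Finset.sum_le_sum key
    rw [tele, hb0, hbM] at this
    simpa using this
  have h3 : ∑ k ∈ range M, (n+1:ℝ) * ((c - k)/c) ^ n * (1/c)
      = ((n+1)/c) * ∑ k ∈ range M, ((c - k)/c) ^ n := by
    rw [Finset.mul_sum]
    apply Finset.sum_congr rfl
    intro k _
    ring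
  rw [h3] at h2
  rw [div_mul_eq_mul_div, le_div_iff₀ hc] at h2
  rw [div_le_iff₀ (by positivity)]
  linarith

lemma setFinite (n : ℕ) (s : Fin n → ℝ) (hs : ∀ i, 0 < s i) (r : ℝ) :
    {x : Fin n → ℕ | ∑ i, (x i : ℝ) / s i ≤ r}.Finite := by
  apply Set.Finite.subset (Set.Finite.pi (fun i : Fin n => Set.finite_Iic (⌊r * s i⌋₊)))
  intro x hx
  simp only [Set.mem_setOf_eq] at hx
  simp only [Set.mem_pi, Set.mem_Iic, Set.mem_univ, forall_true_left]
  intro j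
  have h1 : (x j : ℝ) / s j ≤ r := by
    refine le_trans ?_ hx
    exact Finset.single_le_sum (f := fun i => (x i : ℝ) / s i)
      (fun i _ => div_nonneg (Nat.cast_nonneg _) (hs i).le) (mem_univ j)
  have h2 : (x j : ℝ) ≤ r * s j := by
    rw [div_le_iff₀ (hs j)] at h1; linarith
  exact Nat.le_floor h2

theorem stmt_11 (n : ℕ) (s : Fin n → ℝ) (hs : ∀ i, 0 < s i) :
    ∏ i : Fin n, s i / ((i : ℕ) + 1) ≤
      (Set.ncard {x : Fin n → ℕ | ∑ i, (x i : ℝ) / s i ≤ 1} : ℝ) := by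
  induction n with
  | zero =>
    have h1 : {x : Fin 0 → ℕ | ∑ i, (x i : ℝ) / s i ≤ 1} = Set.univ := by
      ext x; simp
    rw [h1, Set.ncard_univ, Nat.card_unique]
    simp
  | succ n ih =>
    set c := s (Fin.last n) with hcdef
    have hc : 0 < c := hs _
    set t : Fin n → ℝ := fun i => s i.castSucc with ht
    have hts : ∀ i, 0 < t i := fun i => hs _
    set M := ⌈c⌉₊ with hM
    have hSfin := setFinite (n+1) s hs 1
    set F := hSfin.toFinset with hF
    have hQfin : ∀ k : ℕ, {y : Fin n → ℕ | ∑ i, (y i : ℝ) / t i ≤ 1 - k / c}.Finite :=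
      fun k => setFinite n t hts _
    set G : ℕ → Finset (Fin n → ℕ) := fun k => (hQfin k).toFinset with hG
    have hinj : ∀ k : ℕ, Function.Injective (fun y : Fin n → ℕ => (Fin.snoc y k : Fin (n+1) → ℕ)) := by
      intro k y1 y2 h
      have h2 := congrArg Fin.init h
      simpa [Fin.init_snoc] using h2
    have hmem : ∀ (k : ℕ) (y : Fin n → ℕ),
        (∑ i : Fin (n+1), ((Fin.snoc y k : Fin (n+1) → ℕ) i : ℝ) / s i)
          = (∑ i, (y i : ℝ) / t i) + k / c := by
      intro k y
      rw [Fin.sum_univ_castSucc]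
      simp [Fin.snoc_castSucc, Fin.snoc_last, ht, hcdef]
    have hsub : (range M).biUnion (fun k => (G k).image (fun y : Fin n → ℕ => (Fin.snoc y k : Fin (n+1) → ℕ))) ⊆ F := by
      intro x hx
      simp only [mem_biUnion, mem_image] at hx
      obtain ⟨k, hk, y, hy, rfl⟩ := hx
      rw [hF, Set.Finite.mem_toFinset]
      simp only [Set.mem_setOf_eq]
      rw [hmem k y]
      have hy' : ∑ i, (y i : ℝ) / t i ≤ 1 - k / c := by
        rw [hG] at hy
        simpa using (Set.Finite.mem_toFinset _).mp hy
      linarith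
    have hcard : ((range M).biUnion (fun k => (G k).image (fun y : Fin n → ℕ => (Fin.snoc y k : Fin (n+1) → ℕ)))).card
        = ∑ k ∈ range M, ((G k).image (fun y : Fin n → ℕ => (Fin.snoc y k : Fin (n+1) → ℕ))).card := by
      apply Finset.card_biUnion
      intro k1 _ k2 _ hne
      rw [Function.onFun, Finset.disjoint_left]
      intro x hx1 hx2
      simp only [mem_image] at hx1 hx2
      obtain ⟨y1, _, rfl⟩ := hx1
      obtain ⟨y2, _, h2⟩ := hx2
      apply hne
      have h3 := congrArg (fun f : Fin (n+1) → ℕ => f (Fin.last n)) h2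
      simpa [Fin.snoc_last] using h3.symm
    have himg : ∀ k, ((G k).image (fun y : Fin n → ℕ => (Fin.snoc y k : Fin (n+1) → ℕ))).card = (G k).card :=
      fun k => Finset.card_image_of_injective _ (hinj k)
    -- IH per slice
    have hslice : ∀ k ∈ range M,
        (∏ i : Fin n, t i / ((i : ℕ) + 1)) * ((c - k) / c) ^ n ≤ ((G k).card : ℝ) := by
      intro k hk
      have hkc : (k : ℝ) < c := Nat.lt_ceil.mp (mem_range.mp hk)
      have hr : 0 < (c - k) / c := div_pos (by linarith) hc
      set s' : Fin n → ℝ := fun i => t i * ((c - k) / c) with hs'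
      have hs'pos : ∀ i, 0 < s' i := fun i => mul_pos (hts i) hr
      have hEq : {y : Fin n → ℕ | ∑ i, (y i : ℝ) / s' i ≤ 1}
          = {y : Fin n → ℕ | ∑ i, (y i : ℝ) / t i ≤ 1 - k / c} := by
        ext y
        simp only [Set.mem_setOf_eq, hs']
        have : ∀ i : Fin n, (y i : ℝ) / (t i * ((c - k) / c)) = ((y i : ℝ) / t i) / ((c - k) / c) :=
          fun i => by rw [div_div]
        rw [Finset.sum_congr rfl (fun i _ => this i), ← Finset.sum_div, div_le_one hr]
        have : (c - k) / c = 1 - k / c := by field_simp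
        rw [this]
      have h1 := ih s' hs'pos
      rw [hEq] at h1
      have h2 : Set.ncard {y : Fin n → ℕ | ∑ i, (y i : ℝ) / t i ≤ 1 - k / c} = (G k).card := by
        rw [hG]
        exact Set.ncard_eq_toFinset_card _ (hQfin k)
      rw [h2] at h1
      refine le_trans (le_of_eq ?_) h1
      have he : ∀ i : Fin n, s' i / ((i:ℕ)+1) = t i / ((i:ℕ)+1) * ((c - k)/c) := fun i => by
        rw [hs']; ring
      rw [Finset.prod_congr rfl (fun i _ => he i), Finset.prod_mul_distrib, Finset.prod_const,
        Finset.card_univ, Fintype.card_fin]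
    have hP : 0 ≤ ∏ i : Fin n, t i / ((i:ℕ)+1) :=
      Finset.prod_nonneg fun i _ => div_nonneg (hts i).le (by positivity)
    have hprod : ∏ i : Fin (n+1), s i / ((i:ℕ)+1)
        = (∏ i : Fin n, t i / ((i:ℕ)+1)) * (c / ((n:ℝ)+1)) := by
      rw [Fin.prod_univ_castSucc]
      simp [ht, hcdef]
    have hsum : (∑ k ∈ range M, (G k).card) ≤ F.card := by
      calc ∑ k ∈ range M, (G k).card
          = ∑ k ∈ range M, ((G k).image (fun y : Fin n → ℕ => (Fin.snoc y k : Fin (n+1) → ℕ))).card :=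
            Finset.sum_congr rfl fun k _ => (himg k).symm
        _ = ((range M).biUnion (fun k => (G k).image (fun y : Fin n → ℕ => (Fin.snoc y k : Fin (n+1) → ℕ)))).card := hcard.symm
        _ ≤ F.card := Finset.card_le_card hsub
    have hncard : (Set.ncard {x : Fin (n+1) → ℕ | ∑ i, (x i : ℝ) / s i ≤ 1} : ℝ) = (F.card : ℝ) := by
      rw [hF, Set.ncard_eq_toFinset_card _ hSfin]
    calc ∏ i : Fin (n+1), s i / ((i:ℕ)+1)
        = (∏ i : Fin n, t i / ((i:ℕ)+1)) * (c / ((n:ℝ)+1)) := hprod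
      _ ≤ (∏ i : Fin n, t i / ((i:ℕ)+1)) * ∑ k ∈ range M, ((c - k)/c)^n :=
          mul_le_mul_of_nonneg_left (telescope n c hc) hP
      _ = ∑ k ∈ range M, (∏ i : Fin n, t i / ((i:ℕ)+1)) * ((c - k)/c)^n := Finset.mul_sum _ _ _
      _ ≤ ∑ k ∈ range M, ((G k).card : ℝ) := Finset.sum_le_sum hslice
      _ = ((∑ k ∈ range M, (G k).card : ℕ) : ℝ) := by push_cast; rfl
      _ ≤ (F.card : ℝ) := by exact_mod_cast hsum
      _ = _ := hncard.symm
end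

section
/- Let L be the clique complex of the graph on vertices {v₁,…,v_ℓ, v₋₁,…,v₋ℓ} where v_i and v_j are adjacent iff i ≠ −j (the boundary of the ℓ-dimensional cross-polytope). If L is a subcomplex of a simplicial complex K and some simplex of L is a maximal simplex (facet) of K, then the inclusion L ↪ K induces an injective map on (ℓ−1)-dimensional homology; in particular H_{ℓ−1}(K) ≠ 0. -/
/-- The boundary map of ordered simplicial chains. -/
noncomputable def bdry {V : Type*} {k : ℕ} (c : (Fin (k + 1) → V) →₀ ℤ) :
    (Fin k → V) →₀ ℤ :=
  c.sum fun σ a =>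
    ∑ i : Fin (k + 1), (a * (-1) ^ (i : ℕ)) • Finsupp.single (fun j => σ (i.succAbove j)) 1

/-- A chain is supported on a simplicial complex (given as its set of faces). -/
def ChainIn {V : Type*} [DecidableEq V] (S : Set (Finset V)) {k : ℕ}
    (c : (Fin k → V) →₀ ℤ) : Prop :=
  ∀ σ ∈ c.support, Finset.image σ Finset.univ ∈ S

/-- The faces of the boundary of the `ℓ`-dimensional cross-polytope, realized on
vertices `f (i, b)` (`i < ℓ`, `b` a sign): the cliques of the graph in which two
vertices are adjacent iff they are not antipodal. -/
def CrossPolytopalFaces {V : Type*} [DecidableEq V] (ℓ : ℕ) (f : Fin ℓ × Bool ↪ V) :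
    Set (Finset V) :=
  {t | ∃ s : Finset (Fin ℓ × Bool), (∀ a ∈ s, ∀ b ∈ s, a.1 = b.1 → a = b) ∧
    t = s.image f}

section Infra

variable {V : Type*}

/-- The boundary map, packaged as an additive monoid hom. -/
noncomputable def bdryHom (V : Type*) (k : ℕ) :
    ((Fin (k + 1) → V) →₀ ℤ) →+ ((Fin k → V) →₀ ℤ) :=
  Finsupp.liftAddHom fun σ => zmultiplesHom _
    (∑ i : Fin (k + 1), ((-1 : ℤ) ^ (i : ℕ)) • Finsupp.single (fun j => σ (i.succAbove j)) (1 : ℤ))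

lemma bdry_eq {k : ℕ} (c : (Fin (k + 1) → V) →₀ ℤ) : bdry c = bdryHom V k c := by
  rw [bdry, bdryHom, Finsupp.liftAddHom_apply]
  refine Finsupp.sum_congr fun σ _ => ?_
  rw [zmultiplesHom_apply, Finset.smul_sum]
  refine Finset.sum_congr rfl fun i _ => ?_
  rw [smul_smul]

lemma bdry_zero {k : ℕ} : bdry (0 : (Fin (k + 1) → V) →₀ ℤ) = 0 := by
  rw [bdry_eq]; exact map_zero _

lemma bdry_add {k : ℕ} (c d : (Fin (k + 1) → V) →₀ ℤ) :
    bdry (c + d) = bdry c + bdry d := by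
  rw [bdry_eq, bdry_eq, bdry_eq]; exact map_add _ _ _

lemma bdry_neg {k : ℕ} (c : (Fin (k + 1) → V) →₀ ℤ) : bdry (-c) = -bdry c := by
  rw [bdry_eq, bdry_eq]; exact map_neg _ _

lemma bdry_sub {k : ℕ} (c d : (Fin (k + 1) → V) →₀ ℤ) :
    bdry (c - d) = bdry c - bdry d := by
  rw [bdry_eq, bdry_eq, bdry_eq]; exact map_sub _ _ _

lemma bdry_smul {k : ℕ} (m : ℤ) (c : (Fin (k + 1) → V) →₀ ℤ) :
    bdry (m • c) = m • bdry c := by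
  rw [bdry_eq, bdry_eq]; exact map_zsmul _ _ _

lemma bdry_finsetSum {ι : Type*} {k : ℕ} (s : Finset ι) (g : ι → (Fin (k + 1) → V) →₀ ℤ) :
    bdry (∑ i ∈ s, g i) = ∑ i ∈ s, bdry (g i) := by
  rw [bdry_eq, map_sum]
  exact Finset.sum_congr rfl fun i _ => (bdry_eq _).symm

lemma bdry_single {k : ℕ} (σ : Fin (k + 1) → V) (a : ℤ) :
    bdry (Finsupp.single σ a) =
      ∑ i : Fin (k + 1), (a * (-1) ^ (i : ℕ)) • Finsupp.single (fun j => σ (i.succAbove j)) 1 := by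
  refine Finsupp.sum_single_index ?_
  simp

lemma val_succAbove {k : ℕ} (i : Fin (k + 1)) (j : Fin k) :
    ((i.succAbove j : Fin (k + 1)) : ℕ) = if (j : ℕ) < (i : ℕ) then (j : ℕ) else (j : ℕ) + 1 := by
  rw [Fin.succAbove]
  split_ifs with h1 h2 h2
  · simp
  · exact absurd (by simpa [Fin.lt_def] using h1) h2
  · exact absurd (by simpa [Fin.lt_def] using h2) h1
  · simp

lemma succAbove_succAbove_swap {n : ℕ} (i : Fin (n + 2)) (j : Fin (n + 1))
    (h : (j : ℕ) < (i : ℕ)) :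
    (fun k => i.succAbove (j.succAbove k)) =
      (fun k => (⟨(j : ℕ), by omega⟩ : Fin (n + 2)).succAbove
        ((⟨(i : ℕ) - 1, by omega⟩ : Fin (n + 1)).succAbove k)) := by
  funext k
  apply Fin.val_injective
  have hi := i.isLt
  have hk := k.isLt
  simp only [val_succAbove]
  split_ifs <;> omega

lemma bdry_bdry_single {k : ℕ} (σ : Fin (k + 2) → V) (a : ℤ) :
    bdry (bdry (Finsupp.single σ a)) = 0 := by
  rw [bdry_single, bdry_finsetSum]
  have h1 : ∀ i : Fin (k + 2),
      bdry ((a * (-1) ^ (i : ℕ)) • Finsupp.single (fun j => σ (i.succAbove j)) (1 : ℤ)) =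
      ∑ j : Fin (k + 1), (a * (-1) ^ (i : ℕ) * (-1) ^ (j : ℕ)) •
        Finsupp.single (fun l => σ (i.succAbove (j.succAbove l))) (1 : ℤ) := by
    intro i
    rw [bdry_smul, bdry_single, Finset.smul_sum]
    refine Finset.sum_congr rfl fun j _ => ?_
    rw [smul_smul]
    ring_nf
  simp only [h1]
  rw [← Finset.sum_product']
  refine Finset.sum_ninvolution (fun p => if h : (p.2 : ℕ) < (p.1 : ℕ) then
      (⟨(p.2 : ℕ), by have := p.2.isLt; omega⟩, ⟨(p.1 : ℕ) - 1, by have := p.1.isLt; omega⟩)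
      else (⟨(p.2 : ℕ) + 1, by have := p.2.isLt; omega⟩,
        ⟨(p.1 : ℕ), by have h2 := p.2.isLt; omega⟩))
    ?_ ?_ (fun _ => Finset.mem_product.2 ⟨Finset.mem_univ _, Finset.mem_univ _⟩) ?_
  · rintro ⟨i, j⟩
    dsimp only
    by_cases h : (j : ℕ) < (i : ℕ)
    · rw [dif_pos h]
      dsimp only
      have hfe := succAbove_succAbove_swap i j h
      have hfe2 : (fun l => σ (i.succAbove (j.succAbove l))) =
          (fun l => σ ((⟨(j : ℕ), by have := j.isLt; omega⟩ : Fin (k + 2)).succAbove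
            ((⟨(i : ℕ) - 1, by have := i.isLt; omega⟩ : Fin (k + 1)).succAbove l))) := by
        funext l
        rw [congrFun hfe l]
      rw [hfe2, ← add_smul]
      have hc : a * (-1 : ℤ) ^ (i : ℕ) * (-1) ^ (j : ℕ) +
          a * (-1) ^ (j : ℕ) * (-1) ^ ((i : ℕ) - 1) = 0 := by
        obtain ⟨e, he⟩ : ∃ e, (i : ℕ) = e + 1 := ⟨(i : ℕ) - 1, by omega⟩
        rw [he, Nat.add_sub_cancel, pow_succ]
        ring
      rw [hc, zero_smul]
    · rw [dif_neg h]
      dsimp only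
      have h' : ((⟨(i : ℕ), by have := j.isLt; omega⟩ : Fin (k + 1)) : ℕ) <
          ((⟨(j : ℕ) + 1, by have := j.isLt; omega⟩ : Fin (k + 2)) : ℕ) := by
        simp; omega
      have hfe := succAbove_succAbove_swap
        (⟨(j : ℕ) + 1, by have := j.isLt; omega⟩ : Fin (k + 2))
        (⟨(i : ℕ), by have := j.isLt; omega⟩ : Fin (k + 1)) h'
      have hfe2 : (fun l => σ ((⟨(j : ℕ) + 1, by have := j.isLt; omega⟩ : Fin (k + 2)).succAbove
            ((⟨(i : ℕ), by have := j.isLt; omega⟩ : Fin (k + 1)).succAbove l))) =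
          (fun l => σ (i.succAbove (j.succAbove l))) := by
        simp only [Fin.val_mk, Nat.add_sub_cancel, Fin.eta] at hfe
        funext l
        rw [congrFun hfe l]
      rw [hfe2, ← add_smul]
      have hc : a * (-1 : ℤ) ^ (i : ℕ) * (-1) ^ (j : ℕ) +
          a * (-1) ^ ((j : ℕ) + 1) * (-1) ^ (i : ℕ) = 0 := by
        rw [pow_succ]; ring
      rw [hc, zero_smul]
  · rintro ⟨i, j⟩ -
    dsimp only
    by_cases h : (j : ℕ) < (i : ℕ)
    · rw [dif_pos h]
      intro heq
      rw [Prod.ext_iff] at heq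
      have h2 := congrArg Fin.val heq.1
      simp only [Fin.val_mk] at h2
      omega
    · rw [dif_neg h]
      intro heq
      rw [Prod.ext_iff] at heq
      have h2 := congrArg Fin.val heq.1
      simp only [Fin.val_mk] at h2
      omega
  · rintro ⟨i, j⟩
    dsimp only
    by_cases h : (j : ℕ) < (i : ℕ)
    · rw [dif_pos h]
      dsimp only
      rw [dif_neg (by omega)]
      refine Prod.ext ?_ ?_ <;> apply Fin.val_injective <;> dsimp only <;> omega
    · rw [dif_neg h]
      dsimp only
      rw [dif_pos (by omega)]
      refine Prod.ext ?_ ?_ <;> apply Fin.val_injective <;> dsimp only <;> omega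

lemma bdry_bdry {k : ℕ} (c : (Fin (k + 2) → V) →₀ ℤ) : bdry (bdry c) = 0 := by
  induction c using Finsupp.induction with
  | zero => rw [bdry_zero, bdry_zero]
  | single_add σ a c _ _ ih =>
      rw [bdry_add, bdry_add, ih, bdry_bdry_single, zero_add]

/-- The cone on a chain with apex `v`, appending `v` as last vertex. -/
noncomputable def coneS (v : V) {k : ℕ} (c : (Fin k → V) →₀ ℤ) : (Fin (k + 1) → V) →₀ ℤ :=
  c.sum fun σ a => Finsupp.single (Fin.snoc σ v) a

noncomputable def coneSHom (v : V) (k : ℕ) : ((Fin k → V) →₀ ℤ) →+ ((Fin (k + 1) → V) →₀ ℤ) :=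
  Finsupp.liftAddHom fun σ => Finsupp.singleAddHom (Fin.snoc σ v)

lemma coneS_eq {k : ℕ} (v : V) (c : (Fin k → V) →₀ ℤ) : coneS v c = coneSHom v k c := rfl

lemma coneS_single {k : ℕ} (v : V) (σ : Fin k → V) (a : ℤ) :
    coneS v (Finsupp.single σ a) = Finsupp.single (Fin.snoc σ v) a :=
  Finsupp.sum_single_index (Finsupp.single_zero _)

lemma coneS_add {k : ℕ} (v : V) (c d : (Fin k → V) →₀ ℤ) :
    coneS v (c + d) = coneS v c + coneS v d := by
  rw [coneS_eq, coneS_eq, coneS_eq]; exact map_add _ _ _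

lemma coneS_sub {k : ℕ} (v : V) (c d : (Fin k → V) →₀ ℤ) :
    coneS v (c - d) = coneS v c - coneS v d := by
  rw [coneS_eq, coneS_eq, coneS_eq]; exact map_sub _ _ _

lemma coneS_smul {k : ℕ} (v : V) (m : ℤ) (c : (Fin k → V) →₀ ℤ) :
    coneS v (m • c) = m • coneS v c := by
  rw [coneS_eq, coneS_eq]; exact map_zsmul _ _ _

lemma coneS_finsetSum {ι : Type*} {k : ℕ} (v : V) (s : Finset ι) (g : ι → (Fin k → V) →₀ ℤ) :
    coneS v (∑ i ∈ s, g i) = ∑ i ∈ s, coneS v (g i) := by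
  rw [coneS_eq, map_sum]
  exact Finset.sum_congr rfl fun i _ => rfl

lemma snoc_succAbove_comm {k : ℕ} (v : V) (σ : Fin (k + 1) → V) (i : Fin (k + 1)) :
    (fun j => (Fin.snoc σ v : Fin (k + 2) → V) ((i.castSucc).succAbove j)) =
      Fin.snoc (fun j => σ (i.succAbove j)) v := by
  funext j
  refine Fin.lastCases ?_ (fun j' => ?_) j
  · have h1 : (i.castSucc).succAbove (Fin.last k) = Fin.last (k + 1) := by
      apply Fin.val_injective
      rw [val_succAbove]
      have hi := i.isLt
      simp only [Fin.val_last, Fin.coe_castSucc]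
      rw [if_neg (by omega)]
    rw [h1, Fin.snoc_last, Fin.snoc_last]
  · have h1 : (i.castSucc).succAbove (j'.castSucc) = (i.succAbove j').castSucc := by
      apply Fin.val_injective
      simp only [val_succAbove, Fin.coe_castSucc]
    rw [h1, Fin.snoc_castSucc, Fin.snoc_castSucc]

lemma coneS_zero {k : ℕ} (v : V) : coneS v (0 : (Fin k → V) →₀ ℤ) = 0 := by
  rw [coneS_eq]; exact map_zero _

lemma bdry_coneS_single {k : ℕ} (v : V) (σ : Fin (k + 1) → V) (a : ℤ) :
    bdry (Finsupp.single (Fin.snoc σ v : Fin (k + 2) → V) a) =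
      coneS v (bdry (Finsupp.single σ a)) + ((-1 : ℤ) ^ (k + 1)) • Finsupp.single σ a := by
  rw [bdry_single, Fin.sum_univ_castSucc, bdry_single, coneS_finsetSum]
  congr 1
  · refine Finset.sum_congr rfl fun i _ => ?_
    rw [coneS_smul, coneS_single, snoc_succAbove_comm]
    simp only [Fin.coe_castSucc]
  · have h1 : (fun j => (Fin.snoc σ v : Fin (k + 2) → V) ((Fin.last (k + 1)).succAbove j)) = σ := by
      funext j
      rw [Fin.succAbove_last, Fin.snoc_castSucc]
    rw [h1]
    rw [Finsupp.smul_single, Finsupp.smul_single]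
    simp only [Fin.val_last, smul_eq_mul, mul_one]
    rw [mul_comm]

lemma bdry_coneS {k : ℕ} (v : V) (c : (Fin (k + 1) → V) →₀ ℤ) :
    bdry (coneS v c) = coneS v (bdry c) + ((-1 : ℤ) ^ (k + 1)) • c := by
  induction c using Finsupp.induction with
  | zero => rw [coneS_zero, bdry_zero, bdry_zero, coneS_zero, smul_zero, add_zero]
  | single_add σ a c _ _ ih =>
      rw [coneS_add, bdry_add, ih, coneS_single, bdry_coneS_single, bdry_add, coneS_add,
        smul_add]
      abel

end Infra

section ChainInLemmas

variable {V : Type*} [DecidableEq V] {S : Set (Finset V)}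

lemma chainIn_zero {k : ℕ} : ChainIn S (0 : (Fin k → V) →₀ ℤ) := by
  intro σ hσ; simp at hσ

lemma ChainIn.add {k : ℕ} {c d : (Fin k → V) →₀ ℤ} (hc : ChainIn S c) (hd : ChainIn S d) :
    ChainIn S (c + d) := by
  intro σ hσ
  rcases Finset.mem_union.1 (Finsupp.support_add hσ) with h | h
  exacts [hc σ h, hd σ h]

lemma ChainIn.neg {k : ℕ} {c : (Fin k → V) →₀ ℤ} (hc : ChainIn S c) : ChainIn S (-c) := by
  intro σ hσ
  exact hc σ (by simpa using hσ)

lemma ChainIn.smul {k : ℕ} {c : (Fin k → V) →₀ ℤ} (m : ℤ) (hc : ChainIn S c) :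
    ChainIn S (m • c) := by
  intro σ hσ
  exact hc σ (Finsupp.support_smul hσ)

lemma ChainIn.sub {k : ℕ} {c d : (Fin k → V) →₀ ℤ} (hc : ChainIn S c) (hd : ChainIn S d) :
    ChainIn S (c - d) := by
  rw [sub_eq_add_neg]; exact hc.add hd.neg

lemma chainIn_single {k : ℕ} {σ : Fin k → V} (a : ℤ) (h : Finset.image σ Finset.univ ∈ S) :
    ChainIn S (Finsupp.single σ a) := by
  intro τ hτ
  have := Finsupp.support_single_subset hτ
  simp only [Finset.mem_singleton] at this
  subst this; exact h

lemma chainIn_finsetSum {ι : Type*} {k : ℕ} {s : Finset ι} {g : ι → (Fin k → V) →₀ ℤ}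
    (h : ∀ i ∈ s, ChainIn S (g i)) : ChainIn S (∑ i ∈ s, g i) := by
  classical
  induction s using Finset.induction_on with
  | empty => simpa using chainIn_zero
  | insert _ _ hni ih =>
      rw [Finset.sum_insert hni]
      exact (h _ (Finset.mem_insert_self _ _)).add
        (ih fun i hi => h i (Finset.mem_insert_of_mem hi))

lemma ChainIn.mono {k : ℕ} {T : Set (Finset V)} {c : (Fin k → V) →₀ ℤ}
    (hc : ChainIn S c) (hST : S ⊆ T) : ChainIn T c := fun σ hσ => hST (hc σ hσ)

lemma ChainIn.bdry {k : ℕ} {c : (Fin (k + 1) → V) →₀ ℤ}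
    (hS : ∀ t ∈ S, ∀ u ⊆ t, u ∈ S) (hc : ChainIn S c) : ChainIn S (bdry c) := by
  rw [_root_.bdry]
  refine chainIn_finsetSum fun σ hσ => ?_
  refine chainIn_finsetSum fun i _ => ?_
  refine (chainIn_single _ ?_).smul _
  refine hS _ (hc σ hσ) _ ?_
  intro x hx
  simp only [Finset.mem_image] at hx ⊢
  obtain ⟨j, -, rfl⟩ := hx
  exact ⟨i.succAbove j, Finset.mem_univ _, rfl⟩

lemma image_snoc {k : ℕ} (σ : Fin k → V) (v : V) :
    Finset.image (Fin.snoc σ v : Fin (k + 1) → V) Finset.univ =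
      insert v (Finset.image σ Finset.univ) := by
  ext x
  simp only [Finset.mem_image, Finset.mem_insert]
  constructor
  · rintro ⟨j, -, rfl⟩
    refine Fin.lastCases ?_ ?_ j
    · left; rw [Fin.snoc_last]
    · intro j'; right; exact ⟨j', Finset.mem_univ _, by rw [Fin.snoc_castSucc]⟩
  · rintro (rfl | ⟨j, -, rfl⟩)
    · exact ⟨Fin.last k, Finset.mem_univ _, Fin.snoc_last _ _⟩
    · exact ⟨j.castSucc, Finset.mem_univ _, by rw [Fin.snoc_castSucc]⟩

lemma ChainIn.coneS {k : ℕ} {S' : Set (Finset V)} {c : (Fin k → V) →₀ ℤ} {v : V}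
    (hc : ∀ σ ∈ c.support, insert v (Finset.image σ Finset.univ) ∈ S') :
    ChainIn S' (coneS v c) := by
  rw [_root_.coneS]
  refine chainIn_finsetSum fun σ hσ => ?_
  refine chainIn_single _ ?_
  rw [image_snoc]
  exact hc σ hσ

end ChainInLemmas

section CPF

variable {V : Type*} [DecidableEq V]

lemma CPF_down {ℓ : ℕ} (f : Fin ℓ × Bool ↪ V) :
    ∀ t ∈ CrossPolytopalFaces ℓ f, ∀ u ⊆ t, u ∈ CrossPolytopalFaces ℓ f := by
  rintro t ⟨s, hs, rfl⟩ u hu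
  refine ⟨s.filter (fun p => f p ∈ u), fun a ha b hb hab => hs a (Finset.mem_filter.1 ha).1 b
    (Finset.mem_filter.1 hb).1 hab, ?_⟩
  ext x
  simp only [Finset.mem_image, Finset.mem_filter]
  constructor
  · intro hx
    obtain ⟨p, hp, rfl⟩ := Finset.mem_image.1 (hu hx)
    exact ⟨p, ⟨hp, hx⟩, rfl⟩
  · rintro ⟨p, ⟨-, hp⟩, rfl⟩
    exact hp

lemma CPF_no_antipodal {ℓ : ℕ} (f : Fin ℓ × Bool ↪ V) {t : Finset V}
    (ht : t ∈ CrossPolytopalFaces ℓ f) (i : Fin ℓ) :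
    ¬(f (i, true) ∈ t ∧ f (i, false) ∈ t) := by
  obtain ⟨s, hs, rfl⟩ := ht
  rintro ⟨h1, h2⟩
  obtain ⟨p1, hp1, he1⟩ := Finset.mem_image.1 h1
  obtain ⟨p2, hp2, he2⟩ := Finset.mem_image.1 h2
  have e1 : p1 = (i, true) := f.injective he1
  have e2 : p2 = (i, false) := f.injective he2
  subst e1; subst e2
  exact Bool.noConfusion (congrArg Prod.snd (hs _ hp1 _ hp2 rfl))

lemma CPF_insert_top {n : ℕ} (f : Fin (n + 1) × Bool ↪ V) (u : Bool) {t : Finset V}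
    (ht : t ∈ CrossPolytopalFaces (n + 1) f) (h : f (Fin.last n, !u) ∉ t) :
    insert (f (Fin.last n, u)) t ∈ CrossPolytopalFaces (n + 1) f := by
  obtain ⟨s, hs, rfl⟩ := ht
  refine ⟨insert (Fin.last n, u) s, ?_, ?_⟩
  · have key : ∀ q ∈ s, q.1 = Fin.last n → q = (Fin.last n, u) := by
      rintro ⟨q1, q2⟩ hq hq1
      simp only at hq1
      subst hq1
      by_cases hq2 : q2 = u
      · subst hq2; rfl
      · exfalso
        have : q2 = !u := by cases q2 <;> cases u <;> simp_all
        subst this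
        exact h (Finset.mem_image_of_mem f hq)
    intro p hp q hq hpq
    rcases Finset.mem_insert.1 hp with rfl | hp <;> rcases Finset.mem_insert.1 hq with rfl | hq
    · rfl
    · exact (key q hq hpq.symm).symm
    · exact key p hp hpq
    · exact hs p hp q hq hpq
  · rw [Finset.image_insert]

end CPF

section ZCycle

variable {V : Type*} [DecidableEq V]

/-- The sign of a vertex of the cube. -/
def sgn {m : ℕ} (b : Fin m → Bool) : ℤ := ∏ j, (if b j then 1 else -1)

lemma sgn_ne_zero {m : ℕ} (b : Fin m → Bool) : sgn b ≠ 0 := by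
  rw [sgn]
  refine Finset.prod_ne_zero_iff.2 fun j _ => ?_
  split <;> norm_num

lemma sgn_update {m : ℕ} (b : Fin m → Bool) (i : Fin m) :
    sgn (Function.update b i (!b i)) = -sgn b := by
  have hfe : (fun j => (if (Function.update b i (!b i)) j then (1 : ℤ) else -1)) =
      Function.update (fun j => if b j then (1 : ℤ) else -1) i (if b i then -1 else 1) := by
    funext j
    by_cases hj : j = i
    · subst hj
      rw [Function.update_self, Function.update_self]
      cases b j <;> simp
    · rw [Function.update_of_ne hj, Function.update_of_ne hj]
  rw [sgn, sgn]
  calc ∏ j, (if (Function.update b i (!b i)) j then (1 : ℤ) else -1)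
      = ∏ j, Function.update (fun j => if b j then (1 : ℤ) else -1) i
          (if b i then -1 else 1) j := by rw [hfe]
    _ = (if b i then -1 else 1) * ∏ j ∈ Finset.univ.erase i, (if b j then (1 : ℤ) else -1) := by
        rw [Finset.prod_update_of_mem (Finset.mem_univ i), Finset.sdiff_singleton_eq_erase]
    _ = -((if b i then 1 else -1) * ∏ j ∈ Finset.univ.erase i, (if b j then (1 : ℤ) else -1)) := by
        cases b i <;> simp
    _ = -∏ j, (if b j then (1 : ℤ) else -1) :=
        congrArg Neg.neg (Finset.mul_prod_erase Finset.univ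
          (fun j => if b j then (1 : ℤ) else -1) (Finset.mem_univ i))

/-- The fundamental cycle of the cross-polytope boundary. -/
noncomputable def zCycle {m : ℕ} (f : Fin m × Bool ↪ V) : (Fin m → V) →₀ ℤ :=
  ∑ b : Fin m → Bool, Finsupp.single (fun j => f (j, b j)) (sgn b)

lemma chainIn_zCycle {m : ℕ} (f : Fin m × Bool ↪ V) :
    ChainIn (CrossPolytopalFaces m f) (zCycle f) := by
  refine chainIn_finsetSum fun b _ => ?_
  refine chainIn_single _ ?_
  refine ⟨Finset.image (fun j => (j, b j)) Finset.univ, ?_, ?_⟩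
  · intro p hp q hq hpq
    obtain ⟨j, -, rfl⟩ := Finset.mem_image.1 hp
    obtain ⟨j', -, rfl⟩ := Finset.mem_image.1 hq
    simp only at hpq
    subst hpq; rfl
  · rw [Finset.image_image]
    rfl

lemma bdry_zCycle {m : ℕ} (f : Fin (m + 1) × Bool ↪ V) : bdry (zCycle f) = 0 := by
  rw [zCycle, bdry_finsetSum]
  have h1 : ∀ b : Fin (m + 1) → Bool,
      bdry (Finsupp.single (fun j => (f (j, b j) : V)) (sgn b)) =
      ∑ i : Fin (m + 1), (sgn b * (-1) ^ (i : ℕ)) •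
        Finsupp.single (fun l => (f (i.succAbove l, b (i.succAbove l)) : V)) (1 : ℤ) := by
    intro b; rw [bdry_single]
  simp only [h1]
  rw [← Finset.sum_product']
  refine Finset.sum_ninvolution
    (fun p => (Function.update p.1 p.2 (!p.1 p.2), p.2)) ?_ ?_
    (fun _ => Finset.mem_product.2 ⟨Finset.mem_univ _, Finset.mem_univ _⟩) ?_
  · rintro ⟨b, i⟩
    dsimp only
    have hfun : (fun l => (f (i.succAbove l, Function.update b i (!b i) (i.succAbove l)) : V)) =
        (fun l => (f (i.succAbove l, b (i.succAbove l)) : V)) := by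
      funext l
      rw [Function.update_of_ne (Fin.succAbove_ne i l)]
    rw [hfun, sgn_update, ← add_smul]
    have hc : sgn b * (-1 : ℤ) ^ (i : ℕ) + -sgn b * (-1) ^ (i : ℕ) = 0 := by ring
    rw [hc, zero_smul]
  · rintro ⟨b, i⟩ -
    dsimp only
    intro heq
    have h2 := congrArg (fun q => q.1 i) heq
    simp only [Function.update_self] at h2
    exact (b i).not_ne_self h2
  · rintro ⟨b, i⟩
    dsimp only
    refine Prod.ext ?_ rfl
    show Function.update (Function.update b i (!b i)) i
      (!(Function.update b i (!b i) i)) = b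
    rw [Function.update_self, Bool.not_not, Function.update_idem, Function.update_eq_self]

/-- Snoc as an equivalence on cube vertices. -/
def snocBoolEquiv (m : ℕ) : (Fin m → Bool) × Bool ≃ (Fin (m + 1) → Bool) where
  toFun p := Fin.snoc p.1 p.2
  invFun b := (Fin.init b, b (Fin.last m))
  left_inv p := by simp [Fin.init_snoc, Fin.snoc_last]
  right_inv b := by simp [Fin.snoc_init_self]

lemma snocBoolEquiv_apply {m : ℕ} (p : (Fin m → Bool) × Bool) :
    snocBoolEquiv m p = (Fin.snoc p.1 p.2 : Fin (m + 1) → Bool) := rfl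

/-- The equator embedding. -/
def equatorEmb {m : ℕ} (f : Fin (m + 1) × Bool ↪ V) : Fin m × Bool ↪ V :=
  ⟨fun p => f (p.1.castSucc, p.2), by
    rintro ⟨i, u⟩ ⟨j, w⟩ h
    have := f.injective h
    simp only [Prod.mk.injEq] at this ⊢
    exact ⟨Fin.castSucc_injective _ this.1, this.2⟩⟩

lemma zCycle_succ {m : ℕ} (f : Fin (m + 1) × Bool ↪ V) :
    zCycle f = coneS (f (Fin.last m, true)) (zCycle (equatorEmb f)) -
      coneS (f (Fin.last m, false)) (zCycle (equatorEmb f)) := by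
  have key : ∀ (b' : Fin m → Bool) (u : Bool),
      (fun j => (f (j, (Fin.snoc b' u : Fin (m + 1) → Bool) j) : V)) =
        Fin.snoc (fun j => (equatorEmb f (j, b' j) : V)) (f (Fin.last m, u)) := by
    intro b' u
    funext j
    refine Fin.lastCases ?_ (fun j' => ?_) j
    · rw [Fin.snoc_last, Fin.snoc_last]
    · rw [Fin.snoc_castSucc, Fin.snoc_castSucc]
      rfl
  have hsgn : ∀ (b' : Fin m → Bool) (u : Bool),
      sgn (Fin.snoc b' u : Fin (m + 1) → Bool) = sgn b' * (if u then 1 else -1) := by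
    intro b' u
    rw [sgn, sgn, Fin.prod_univ_castSucc]
    congr 1
    · refine Finset.prod_congr rfl fun j _ => ?_
      rw [Fin.snoc_castSucc]
    · rw [Fin.snoc_last]
  rw [zCycle, ← Equiv.sum_comp (snocBoolEquiv m)
    (fun b => Finsupp.single (fun j => (f (j, b j) : V)) (sgn b)), Fintype.sum_prod_type]
  have hterm : ∀ p : (Fin m → Bool) × Bool,
      Finsupp.single (fun j => (f (j, snocBoolEquiv m p j) : V)) (sgn (snocBoolEquiv m p)) =
        Finsupp.single (Fin.snoc (fun j => (equatorEmb f (j, p.1 j) : V))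
          (f (Fin.last m, p.2))) (sgn p.1 * (if p.2 then 1 else -1)) := by
    rintro ⟨b', u⟩
    simp only [snocBoolEquiv_apply]
    rw [key, hsgn]
  simp only [hterm]
  simp only [Fintype.sum_bool]
  rw [zCycle, coneS_finsetSum, coneS_finsetSum, ← Finset.sum_sub_distrib]
  refine Finset.sum_congr rfl fun b' _ => ?_
  rw [coneS_single, coneS_single]
  simp [sub_eq_add_neg, Finsupp.single_neg]

lemma equator_sub {m : ℕ} (f : Fin (m + 1) × Bool ↪ V) :
    CrossPolytopalFaces m (equatorEmb f) ⊆ CrossPolytopalFaces (m + 1) f := by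
  rintro t ⟨s, hs, rfl⟩
  refine ⟨s.image (fun p => (p.1.castSucc, p.2)), ?_, ?_⟩
  · intro p hp q hq hpq
    obtain ⟨p', hp', rfl⟩ := Finset.mem_image.1 hp
    obtain ⟨q', hq', rfl⟩ := Finset.mem_image.1 hq
    simp only at hpq
    rw [hs p' hp' q' hq' (Fin.castSucc_injective _ hpq)]
  · rw [Finset.image_image]
    rfl

lemma equator_avoids {m : ℕ} (f : Fin (m + 1) × Bool ↪ V) {t : Finset V}
    (ht : t ∈ CrossPolytopalFaces m (equatorEmb f)) (u : Bool) : f (Fin.last m, u) ∉ t := by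
  obtain ⟨s, hs, rfl⟩ := ht
  intro hmem
  obtain ⟨p, hp, he⟩ := Finset.mem_image.1 hmem
  have : (p.1.castSucc, p.2) = (Fin.last m, u) := f.injective he
  exact (Fin.castSucc_lt_last p.1).ne (congrArg Prod.fst this)

lemma mem_equator_of {m : ℕ} (f : Fin (m + 1) × Bool ↪ V) {t : Finset V}
    (ht : t ∈ CrossPolytopalFaces (m + 1) f)
    (h1 : f (Fin.last m, true) ∉ t) (h2 : f (Fin.last m, false) ∉ t) :
    t ∈ CrossPolytopalFaces m (equatorEmb f) := by
  obtain ⟨s, hs, rfl⟩ := ht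
  have hns : ∀ p ∈ s, p.1 ≠ Fin.last m := by
    rintro ⟨p1, p2⟩ hp hp1
    simp only at hp1
    subst hp1
    cases p2
    · exact h2 (Finset.mem_image_of_mem f hp)
    · exact h1 (Finset.mem_image_of_mem f hp)
  refine ⟨Finset.univ.filter (fun q : Fin m × Bool => (q.1.castSucc, q.2) ∈ s), ?_, ?_⟩
  · intro p hp q hq hpq
    simp only [Finset.mem_filter, Finset.mem_univ, true_and] at hp hq
    have h3 := hs _ hp _ hq (by simpa using congrArg Fin.castSucc hpq)
    rw [Prod.ext_iff] at h3
    simp only at h3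
    exact Prod.ext (Fin.castSucc_injective _ h3.1) h3.2
  · ext x
    simp only [Finset.mem_image, Finset.mem_filter, Finset.mem_univ, true_and]
    constructor
    · rintro ⟨p, hp, rfl⟩
      obtain ⟨p1', hp1'⟩ := Fin.eq_castSucc_of_ne_last (hns p hp)
      refine ⟨(p1', p.2), ?_, ?_⟩
      · rw [hp1']; simpa using hp
      · show f (p1'.castSucc, p.2) = f p
        rw [hp1']
    · rintro ⟨q, hq, rfl⟩
      exact ⟨(q.1.castSucc, q.2), hq, rfl⟩

end ZCycle

section Phi

variable {V : Type*} [DecidableEq V]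

/-- Signed indicator determinant. -/
noncomputable def Fdet {m : ℕ} (τ : Fin m → V) (σ : Fin m → V) : ℤ :=
  Matrix.det (Matrix.of fun j k => if σ j = τ k then (1 : ℤ) else 0)

/-- The linear functional extracting the signed coefficient of the oriented simplex `τ`. -/
noncomputable def phi {m : ℕ} (τ : Fin m → V) : ((Fin m → V) →₀ ℤ) →+ ℤ :=
  Finsupp.liftAddHom fun σ => zmultiplesHom _ (Fdet τ σ)

lemma phi_single {m : ℕ} (τ : Fin m → V) (σ : Fin m → V) (a : ℤ) :
    phi τ (Finsupp.single σ a) = a * Fdet τ σ := by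
  rw [phi, Finsupp.liftAddHom_apply_single, zmultiplesHom_apply, smul_eq_mul]

lemma sum_F_faces {m : ℕ} (τ : Fin m → V) (σ : Fin (m + 1) → V) :
    ∑ i : Fin (m + 1), (-1 : ℤ) ^ (i : ℕ) * Fdet τ (fun j => σ (i.succAbove j)) =
      Matrix.det (Matrix.of fun i k =>
        Fin.cases (motive := fun _ => ℤ) 1 (fun k' => if σ i = τ k' then 1 else 0) k) := by
  rw [Matrix.det_succ_column_zero]
  refine Finset.sum_congr rfl fun i _ => ?_
  have hB0 : (Matrix.of fun i k => Fin.cases (motive := fun _ => ℤ) 1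
      (fun k' => if σ i = τ k' then 1 else 0) k) i 0 = 1 := rfl
  rw [hB0, mul_one, Fdet]
  congr 1

lemma phi_bdry {m : ℕ} {K : Set (Finset V)} (τ : Fin m → V)
    (hcard : (Finset.image τ Finset.univ).card ≤ m)
    (hmax : ∀ u ∈ K, Finset.image τ Finset.univ ⊆ u → u = Finset.image τ Finset.univ)
    (w : (Fin (m + 1) → V) →₀ ℤ) (hw : ChainIn K w) : phi τ (bdry w) = 0 := by
  rw [bdry, Finsupp.sum, map_sum]
  refine Finset.sum_eq_zero fun σ hσ => ?_
  rw [map_sum]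
  have hphi : ∀ i : Fin (m + 1),
      phi τ ((w σ * (-1) ^ (i : ℕ)) • Finsupp.single (fun j => σ (i.succAbove j)) (1 : ℤ)) =
        (w σ * (-1) ^ (i : ℕ)) * Fdet τ (fun j => σ (i.succAbove j)) := by
    intro i
    rw [Finsupp.smul_single, smul_eq_mul, mul_one, phi_single]
  simp only [hphi]
  have hre : (∑ i : Fin (m + 1), (w σ * (-1) ^ (i : ℕ)) * Fdet τ (fun j => σ (i.succAbove j))) =
      w σ * ∑ i : Fin (m + 1), (-1 : ℤ) ^ (i : ℕ) * Fdet τ (fun j => σ (i.succAbove j)) := by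
    rw [Finset.mul_sum]
    exact Finset.sum_congr rfl fun i _ => by ring
  rw [hre, sum_F_faces]
  have himg := hw σ hσ
  by_cases hinj : Function.Injective σ
  · have hex : ∃ k₀ : Fin m, ∀ i, σ i ≠ τ k₀ := by
      by_contra hcon
      push_neg at hcon
      have hsubs : Finset.image τ Finset.univ ⊆ Finset.image σ Finset.univ := by
        intro x hx
        obtain ⟨k, -, rfl⟩ := Finset.mem_image.1 hx
        obtain ⟨i, hi⟩ := hcon k
        exact Finset.mem_image.2 ⟨i, Finset.mem_univ _, hi⟩
      have heq := hmax _ himg hsubs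
      have hcard2 : (Finset.image σ Finset.univ).card = m + 1 := by
        rw [Finset.card_image_of_injective _ hinj, Finset.card_univ, Fintype.card_fin]
      rw [heq] at hcard2
      omega
    obtain ⟨k₀, hk₀⟩ := hex
    rw [Matrix.det_eq_zero_of_column_eq_zero k₀.succ ?_, mul_zero]
    intro i
    rw [Matrix.of_apply]
    simp only [Fin.cases_succ]
    rw [if_neg (hk₀ i)]
  · rw [Function.not_injective_iff] at hinj
    obtain ⟨x, y, hxy, hne⟩ := hinj
    rw [Matrix.det_zero_of_row_eq hne ?_, mul_zero]
    funext k
    refine Fin.cases ?_ (fun k' => ?_) k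
    · rfl
    · simp only [Matrix.of_apply, Fin.cases_succ, hxy]

lemma phi_zCycle {m : ℕ} (f : Fin m × Bool ↪ V) (b₀ : Fin m → Bool) :
    phi (fun k => f (k, b₀ k)) (zCycle f) = sgn b₀ := by
  rw [zCycle, map_sum]
  have hterm : ∀ b : Fin m → Bool,
      phi (fun k => (f (k, b₀ k) : V)) (Finsupp.single (fun j => (f (j, b j) : V)) (sgn b)) =
        sgn b * Fdet (fun k => (f (k, b₀ k) : V)) (fun j => (f (j, b j) : V)) :=
    fun b => phi_single _ _ _
  simp only [hterm]
  rw [Finset.sum_eq_single b₀]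
  · have hone : Fdet (fun k => (f (k, b₀ k) : V)) (fun j => (f (j, b₀ j) : V)) = 1 := by
      rw [Fdet]
      have hM : (Matrix.of fun j k => if (f (j, b₀ j) : V) = f (k, b₀ k) then (1 : ℤ) else 0) =
          (1 : Matrix (Fin m) (Fin m) ℤ) := by
        ext j k
        rw [Matrix.of_apply, Matrix.one_apply]
        by_cases hjk : j = k
        · subst hjk; simp
        · rw [if_neg, if_neg hjk]
          intro he
          exact hjk (congrArg Prod.fst (f.injective he))
      rw [hM, Matrix.det_one]
    rw [hone, mul_one]
  · intro b _ hb
    obtain ⟨j₀, hj₀⟩ : ∃ j₀, b j₀ ≠ b₀ j₀ := by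
      by_contra hcon
      push_neg at hcon
      exact hb (funext hcon)
    have hzero : Fdet (fun k => (f (k, b₀ k) : V)) (fun j => (f (j, b j) : V)) = 0 := by
      rw [Fdet]
      refine Matrix.det_eq_zero_of_row_eq_zero j₀ fun k => ?_
      rw [Matrix.of_apply, if_neg]
      intro he
      have hpe := f.injective he
      rw [Prod.mk.injEq] at hpe
      obtain ⟨h1, h2⟩ := hpe
      subst h1
      exact hj₀ h2
    rw [hzero, mul_zero]
  · intro h
    exact absurd (Finset.mem_univ _) h

end Phi

section Main

variable {V : Type*} [DecidableEq V]

lemma coneS_neg {k : ℕ} (v : V') (c : (Fin k → V') →₀ ℤ) : coneS v (-c) = -coneS v c := by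
  rw [coneS_eq, coneS_eq]; exact map_neg _ _

lemma zCycle_one (f : Fin 1 × Bool ↪ V) :
    zCycle f = Finsupp.single (fun _ => (f (0, true) : V)) 1 -
      Finsupp.single (fun _ => (f (0, false) : V)) (1 : ℤ) := by
  rw [zCycle, ← Equiv.sum_comp (Equiv.funUnique (Fin 1) Bool).symm
    (fun b => Finsupp.single (fun j => (f (j, b j) : V)) (sgn b)), Fintype.sum_bool]
  have h1 : sgn (fun _ : Fin 1 => true) = 1 := by simp [sgn]
  have h2 : sgn (fun _ : Fin 1 => false) = -1 := by simp [sgn]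
  have e1 : ((Equiv.funUnique (Fin 1) Bool).symm true) = (fun _ : Fin 1 => true) := rfl
  have e2 : ((Equiv.funUnique (Fin 1) Bool).symm false) = (fun _ : Fin 1 => false) := rfl
  rw [e1, e2, h1, h2]
  have h3 : (fun j : Fin 1 => (f (j, true) : V)) = (fun _ : Fin 1 => (f (0, true) : V)) := by
    funext j
    rw [Subsingleton.elim j 0]
  have h4 : (fun j : Fin 1 => (f (j, false) : V)) = (fun _ : Fin 1 => (f (0, false) : V)) := by
    funext j
    rw [Subsingleton.elim j 0]
  rw [h3, h4, Finsupp.single_neg, sub_eq_add_neg]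

lemma mainLemma : ∀ (n : ℕ) (f : Fin (n + 1) × Bool ↪ V) (c : (Fin (n + 1) → V) →₀ ℤ),
    ChainIn (CrossPolytopalFaces (n + 1) f) c → bdry c = 0 →
    ∃ (m : ℤ) (w : (Fin (n + 2) → V) →₀ ℤ),
      ChainIn (CrossPolytopalFaces (n + 1) f) w ∧ c = m • zCycle f + bdry w := by
  intro n
  induction n with
  | zero =>
    intro f c hc hcyc
    set v : V := f (0, true) with hv
    set v' : V := f (0, false) with hv'
    have hvne : v ≠ v' := fun h => Bool.noConfusion (congrArg Prod.snd (f.injective h))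
    have hfne : (fun _ : Fin 1 => v) ≠ (fun _ : Fin 1 => v') := by
      intro h
      exact hvne (congrFun h 0)
    have hsupp : ∀ σ ∈ c.support, σ = (fun _ => v) ∨ σ = (fun _ => v') := by
      intro σ hσ
      obtain ⟨s, hs, himg⟩ := hc σ hσ
      have h0 : σ 0 ∈ Finset.image σ Finset.univ :=
        Finset.mem_image_of_mem σ (Finset.mem_univ 0)
      rw [himg] at h0
      obtain ⟨p, hp, he⟩ := Finset.mem_image.1 h0
      have hconst : σ = fun _ => σ 0 := by
        funext j
        rw [Fin.fin_one_eq_zero j]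
      have hp' : p = (0, p.2) := Prod.ext (Fin.fin_one_eq_zero p.1) rfl
      rw [hp'] at he
      cases hu : p.2
      · right
        rw [hconst, ← he, hu]
      · left
        rw [hconst, ← he, hu]
    have hzero : (c.sum fun (_ : Fin 1 → V) (a : ℤ) => a) = 0 := by
      have h1 := congrArg (fun g : (Fin 0 → V) →₀ ℤ => g (fun i => i.elim0)) hcyc
      simp only [Finsupp.coe_zero, Pi.zero_apply] at h1
      rw [bdry, Finsupp.sum_apply] at h1
      rw [← h1]
      refine Finsupp.sum_congr fun σ _ => ?_
      rw [Finset.sum_apply', Fin.sum_univ_one, Finsupp.smul_apply, Finsupp.single_apply,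
        if_pos (Subsingleton.elim _ _)]
      simp
    have hsum : c (fun _ => v) + c (fun _ => v') = 0 := by
      have hsub2 : c.support ⊆ {(fun _ : Fin 1 => v), (fun _ : Fin 1 => v')} := by
        intro σ hσ
        rcases hsupp σ hσ with rfl | rfl
        · exact Finset.mem_insert_self _ _
        · exact Finset.mem_insert_of_mem (Finset.mem_singleton_self _)
      calc c (fun _ => v) + c (fun _ => v')
          = ∑ σ ∈ {(fun _ : Fin 1 => v), (fun _ : Fin 1 => v')}, c σ :=
            (Finset.sum_pair hfne).symm
        _ = ∑ σ ∈ c.support, c σ := by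
            refine (Finset.sum_subset hsub2 fun σ _ hσ => ?_).symm
            exact Finsupp.notMem_support_iff.1 hσ
        _ = 0 := hzero
    refine ⟨c (fun _ => v), 0, chainIn_zero, ?_⟩
    rw [bdry_zero, add_zero, zCycle_one]
    ext σ
    rw [Finsupp.smul_apply, Finsupp.sub_apply, Finsupp.single_apply, Finsupp.single_apply]
    by_cases hσ1 : (fun _ : Fin 1 => v) = σ
    · rw [if_pos hσ1, if_neg (by rw [← hσ1]; exact fun h => hfne h.symm), ← hσ1]
      simp
    · by_cases hσ2 : (fun _ : Fin 1 => v') = σ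
      · rw [if_neg hσ1, if_pos hσ2, ← hσ2]
        have hval : c (fun _ => v') = -c (fun _ => v) := by omega
        rw [hval]
        simp
      · rw [if_neg hσ1, if_neg hσ2]
        have hns : σ ∉ c.support := by
          intro hmem
          rcases hsupp σ hmem with rfl | rfl
          · exact hσ1 rfl
          · exact hσ2 rfl
        rw [Finsupp.notMem_support_iff.1 hns]
        simp
  | succ n ih =>
    intro f c hc hcyc
    set v : V := f (Fin.last (n + 1), true) with hv
    set v' : V := f (Fin.last (n + 1), false) with hv'
    set L := CrossPolytopalFaces (n + 2) f with hL
    set S₁ : Set (Finset V) := {t | t ∈ L ∧ v' ∉ t} with hS₁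
    set S₂ : Set (Finset V) := {t | t ∈ L ∧ v ∉ t} with hS₂
    set a := c.filter (fun σ : Fin (n + 2) → V => v' ∉ Finset.image σ Finset.univ) with hadef
    set b := c.filter
      (fun σ : Fin (n + 2) → V => ¬v' ∉ Finset.image σ Finset.univ) with hbdef
    have hab : a + b = c := Finsupp.filter_pos_add_filter_neg c _
    have hsa : ∀ σ ∈ a.support, σ ∈ c.support ∧ v' ∉ Finset.image σ Finset.univ := by
      intro σ hσ
      rw [hadef, Finsupp.support_filter, Finset.mem_filter] at hσ
      exact hσ
    have hsb : ∀ σ ∈ b.support, σ ∈ c.support ∧ v' ∈ Finset.image σ Finset.univ := by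
      intro σ hσ
      rw [hbdef, Finsupp.support_filter, Finset.mem_filter] at hσ
      exact ⟨hσ.1, not_not.1 hσ.2⟩
    have hca : ChainIn S₁ a := by
      intro σ hσ
      exact ⟨hc σ (hsa σ hσ).1, (hsa σ hσ).2⟩
    have hcb : ChainIn S₂ b := by
      intro σ hσ
      refine ⟨hc σ (hsb σ hσ).1, fun hvmem => ?_⟩
      exact CPF_no_antipodal f (hc σ (hsb σ hσ).1) (Fin.last (n + 1)) ⟨hvmem, (hsb σ hσ).2⟩
    have hdown1 : ∀ t ∈ S₁, ∀ u ⊆ t, u ∈ S₁ := by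
      rintro t ⟨htL, htv⟩ u hu
      exact ⟨CPF_down f t htL u hu, fun hm => htv (hu hm)⟩
    have hdown2 : ∀ t ∈ S₂, ∀ u ⊆ t, u ∈ S₂ := by
      rintro t ⟨htL, htv⟩ u hu
      exact ⟨CPF_down f t htL u hu, fun hm => htv (hu hm)⟩
    have hd1 : ChainIn S₁ (bdry a) := hca.bdry hdown1
    have hbd : bdry b = -bdry a := by
      refine eq_neg_of_add_eq_zero_left ?_
      rw [← bdry_add, add_comm b a, hab, hcyc]
    have hd2 : ChainIn S₂ (bdry a) := by
      have := (hcb.bdry hdown2).neg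
      rw [hbd, neg_neg] at this
      exact this
    have hdeq : ChainIn (CrossPolytopalFaces (n + 1) (equatorEmb f)) (bdry a) := by
      intro σ hσ
      exact mem_equator_of f (hd1 σ hσ).1 (hd2 σ hσ).2 (hd1 σ hσ).2
    obtain ⟨m, e, he, hde⟩ := ih (equatorEmb f) (bdry a) hdeq (bdry_bdry a)
    -- the candidate bounding chain
    set W : (Fin (n + 3) → V) →₀ ℤ := coneS v a + coneS v' b - coneS v e + coneS v' e with hW
    have hEb : bdry W = ((-1 : ℤ) ^ (n + 2)) • c + m • zCycle f := by
      rw [hW, bdry_add, bdry_sub, bdry_add]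
      rw [bdry_coneS, bdry_coneS, bdry_coneS, bdry_coneS]
      rw [hbd, coneS_neg, hde]
      rw [coneS_add, coneS_add, coneS_smul, coneS_smul, zCycle_succ f]
      rw [← hab]
      rw [smul_add]
      module
    refine ⟨-((-1 : ℤ) ^ (n + 2) * m), ((-1 : ℤ) ^ (n + 2)) • W, ?_, ?_⟩
    · refine ChainIn.smul _ ?_
      rw [hW]
      have hc1 : ChainIn L (coneS v a) := by
        refine ChainIn.coneS fun σ hσ => ?_
        exact CPF_insert_top f true (hc σ (hsa σ hσ).1) (hsa σ hσ).2
      have hc2 : ChainIn L (coneS v' b) := by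
        refine ChainIn.coneS fun σ hσ => ?_
        refine CPF_insert_top f false (hc σ (hsb σ hσ).1) ?_
        intro hvmem
        exact CPF_no_antipodal f (hc σ (hsb σ hσ).1) (Fin.last (n + 1))
          ⟨hvmem, (hsb σ hσ).2⟩
      have hc3 : ChainIn L (coneS v e) := by
        refine ChainIn.coneS fun σ hσ => ?_
        exact CPF_insert_top f true (equator_sub f (he σ hσ)) (equator_avoids f (he σ hσ) false)
      have hc4 : ChainIn L (coneS v' e) := by
        refine ChainIn.coneS fun σ hσ => ?_
        exact CPF_insert_top f false (equator_sub f (he σ hσ)) (equator_avoids f (he σ hσ) true)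
      exact ((hc1.add hc2).sub hc3).add hc4
    · rw [bdry_smul, hEb, smul_add, smul_smul, smul_smul]
      have hss : (-1 : ℤ) ^ (n + 2) * (-1 : ℤ) ^ (n + 2) = 1 := by
        rw [← pow_add]
        exact Even.neg_one_pow ⟨n + 2, by ring⟩
      rw [hss, one_smul, neg_smul]
      abel

lemma facet_eq {n : ℕ} (f : Fin (n + 1) × Bool ↪ V) (K : Set (Finset V))
    (hsub : CrossPolytopalFaces (n + 1) f ⊆ K) {t : Finset V}
    (ht : t ∈ CrossPolytopalFaces (n + 1) f) (hmax : ∀ u ∈ K, t ⊆ u → u = t) :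
    ∃ b₀ : Fin (n + 1) → Bool, t = Finset.image (fun j => f (j, b₀ j)) Finset.univ := by
  obtain ⟨s, hs, rfl⟩ := ht
  have hcov : ∀ i : Fin (n + 1), ∃ u : Bool, (i, u) ∈ s := by
    intro i
    by_contra hcon
    push_neg at hcon
    have hnoti : ∀ q ∈ s, q.1 ≠ i := by
      intro q hq hqi
      refine hcon q.2 ?_
      rw [← hqi, Prod.mk.eta]
      exact hq
    have hmem : (insert (i, true) s).image f ∈ CrossPolytopalFaces (n + 1) f := by
      refine ⟨insert (i, true) s, ?_, rfl⟩
      intro p hp q hq hpq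
      rcases Finset.mem_insert.1 hp with rfl | hp
      · rcases Finset.mem_insert.1 hq with rfl | hq
        · rfl
        · exact absurd hpq.symm (hnoti q hq)
      · rcases Finset.mem_insert.1 hq with rfl | hq
        · exact absurd hpq (hnoti p hp)
        · exact hs p hp q hq hpq
    have himg := hmax _ (hsub hmem)
      (by rw [Finset.image_insert]; exact Finset.subset_insert _ _)
    rw [Finset.image_insert] at himg
    have hmem2 : f (i, true) ∈ s.image f := by
      rw [← himg]; exact Finset.mem_insert_self _ _
    obtain ⟨p, hp, he⟩ := Finset.mem_image.1 hmem2
    exact hnoti p hp (congrArg Prod.fst (f.injective he))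
  choose b₀ hb₀ using hcov
  refine ⟨b₀, ?_⟩
  have hsgraph : s = Finset.univ.image (fun j : Fin (n + 1) => (j, b₀ j)) := by
    apply Finset.Subset.antisymm
    · intro p hp
      exact Finset.mem_image.2 ⟨p.1, Finset.mem_univ _, hs _ (hb₀ p.1) _ hp rfl⟩
    · intro p hp
      obtain ⟨j, -, rfl⟩ := Finset.mem_image.1 hp
      exact hb₀ j
  rw [hsgraph, Finset.image_image]
  rfl

end Main

/-- Cross-polytopal subcomplexes containing a facet of the ambient complex inject
on `(ℓ-1)`-homology; in particular the `(ℓ-1)`-homology of `K` is non-trivial. -/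
theorem stmt_14 {V : Type*} [DecidableEq V] (ℓ : ℕ) (hℓ : 1 ≤ ℓ)
    (f : Fin ℓ × Bool ↪ V) (K : Set (Finset V))
    (hdown : ∀ s ∈ K, ∀ t ⊆ s, t ∈ K)
    (hsub : CrossPolytopalFaces ℓ f ⊆ K)
    (hfacet : ∃ t ∈ CrossPolytopalFaces ℓ f, ∀ u ∈ K, t ⊆ u → u = t) :
    (∀ z : (Fin (ℓ - 1 + 1) → V) →₀ ℤ,
        ChainIn (CrossPolytopalFaces ℓ f) z → bdry z = 0 →
        (∃ w : (Fin (ℓ - 1 + 1 + 1) → V) →₀ ℤ, ChainIn K w ∧ bdry w = z) →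
        ∃ w' : (Fin (ℓ - 1 + 1 + 1) → V) →₀ ℤ,
          ChainIn (CrossPolytopalFaces ℓ f) w' ∧ bdry w' = z) ∧
    (∃ z : (Fin (ℓ - 1 + 1) → V) →₀ ℤ,
        ChainIn K z ∧ bdry z = 0 ∧ z ≠ 0 ∧
        ∀ w : (Fin (ℓ - 1 + 1 + 1) → V) →₀ ℤ, ChainIn K w → bdry w ≠ z) := by
  obtain ⟨n, rfl⟩ : ∃ n, ℓ = n + 1 := ⟨ℓ - 1, (Nat.succ_pred_eq_of_pos hℓ).symm⟩
  obtain ⟨t, ht, hmax⟩ := hfacet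
  obtain ⟨b₀, hb₀⟩ := facet_eq f K hsub ht hmax
  set τ : Fin (n + 1) → V := fun k => f (k, b₀ k) with hτ
  have hcard : (Finset.image τ Finset.univ).card ≤ n + 1 :=
    le_trans Finset.card_image_le (by simp)
  have hmaxτ : ∀ u ∈ K, Finset.image τ Finset.univ ⊆ u → u = Finset.image τ Finset.univ := by
    rw [← hb₀]
    exact hmax
  have hφz : phi τ (zCycle f) = sgn b₀ := phi_zCycle f b₀
  constructor
  · intro z hz hzcyc hw
    obtain ⟨w, hwK, hwz⟩ := hw
    obtain ⟨m, w', hw', heq⟩ := mainLemma n f z hz hzcyc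
    have h1 : phi τ z = 0 := by
      rw [← hwz]
      exact phi_bdry τ hcard hmaxτ w hwK
    have h2 : phi τ z = m * sgn b₀ := by
      rw [heq, map_add, map_zsmul, hφz, phi_bdry τ hcard hmaxτ w' (hw'.mono hsub), add_zero,
        smul_eq_mul]
    have hm : m = 0 := by
      rw [h1] at h2
      rcases mul_eq_zero.1 h2.symm with h | h
      · exact h
      · exact absurd h (sgn_ne_zero b₀)
    refine ⟨w', hw', ?_⟩
    rw [hm, zero_smul, zero_add] at heq
    exact heq.symm
  · refine ⟨zCycle f, (chainIn_zCycle f).mono hsub, bdry_zCycle f, ?_, ?_⟩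
    · intro h0
      have hz := hφz
      rw [h0, map_zero] at hz
      exact sgn_ne_zero b₀ hz.symm
    · intro w hwK heq
      have h1 := phi_bdry τ hcard hmaxτ w hwK
      rw [heq, hφz] at h1
      exact sgn_ne_zero b₀ h1
end

section
/- Let H be a normalized Hadamard matrix of order 2r with r ≥ 4, and let H⁻ be the set of columns of H other than the first. Fix ℓ ≥ r and n ≥ ℓ + r, and set A = H⁻ × {1_{ℓ−r}} × {−1_{n−ℓ−r}} ⊆ L^n_ℓ. Then A is a maximally diameter-r subset of L^n_ℓ: diam(A) = r and for every x ∈ L^n_ℓ \ A there exists a ∈ A with d(x,a) > r. -/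
open Finset

/-- The level set `L^n_ℓ`: vectors in `{±1}^n` with exactly `ℓ` entries equal to `1`. -/
def levelSet (n ℓ : ℕ) : Set (Fin n → ℤ) :=
  {x | (∀ i, x i = 1 ∨ x i = -1) ∧ (Finset.univ.filter fun i => x i = 1).card = ℓ}

/-- The vector of `Q_n` whose first `2r` coordinates form the `j`-th column of `H`,
whose next `ℓ - r` coordinates are `1`, and whose remaining coordinates are `-1`. -/
def extCol {r n ℓ : ℕ} (H : Matrix (Fin (2 * r)) (Fin (2 * r)) ℤ) (j : Fin (2 * r)) :
    Fin n → ℤ :=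
  fun i => if h : (i : ℕ) < 2 * r then H ⟨i, h⟩ j else if (i : ℕ) < ℓ + r then 1 else -1


/-- sum of ±1 vector vs count of ones -/
lemma sum_pm_eq {ι : Type*} [DecidableEq ι] (s : Finset ι) (v : ι → ℤ)
    (h : ∀ i ∈ s, v i = 1 ∨ v i = -1) :
    ∑ i ∈ s, v i = 2 * ((s.filter fun i => v i = 1).card : ℤ) - s.card := by
  classical
  rw [← Finset.sum_filter_add_sum_filter_not s (fun i => v i = 1)]
  have h1 : ∑ i ∈ s.filter (fun i => v i = 1), v i
      = ((s.filter fun i => v i = 1).card : ℤ) := by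
    rw [Finset.sum_congr rfl (fun i hi => (Finset.mem_filter.1 hi).2)]
    simp
  have h2 : ∑ i ∈ s.filter (fun i => ¬ v i = 1), v i
      = -((s.filter fun i => ¬ v i = 1).card : ℤ) := by
    have hv : ∀ i ∈ s.filter (fun i => ¬ v i = 1), v i = -1 := by
      intro i hi
      have := Finset.mem_filter.1 hi
      rcases h i this.1 with h' | h'
      · exact absurd h' this.2
      · exact h'
    rw [Finset.sum_congr rfl hv]
    simp
  have h3 : (s.filter fun i => v i = 1).card + (s.filter fun i => ¬ v i = 1).card = s.card :=
    Finset.card_filter_add_card_filter_not _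
  rw [h1, h2]
  have := congrArg (Nat.cast : ℕ → ℤ) h3
  push_cast at this ⊢
  linarith

/-- inner product vs hamming distance for ±1 vectors -/
lemma inner_eq_dist {n : ℕ} (x y : Fin n → ℤ) (hx : ∀ i, x i = 1 ∨ x i = -1)
    (hy : ∀ i, y i = 1 ∨ y i = -1) :
    ∑ i, x i * y i = (n : ℤ) - 2 * (hammingDist x y : ℤ) := by
  classical
  have key : ∀ i, x i * y i = if x i = y i then 1 else -1 := by
    intro i
    rcases hx i with h1 | h1 <;> rcases hy i with h2 | h2 <;> simp [h1, h2] <;> norm_num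
  rw [Finset.sum_congr rfl (fun i _ => key i), Finset.sum_ite, Finset.sum_const,
    Finset.sum_const]
  have hd : hammingDist x y = (Finset.univ.filter fun i => ¬ x i = y i).card := rfl
  have h3 : (Finset.univ.filter fun i => x i = y i).card
      + (Finset.univ.filter fun i => ¬ x i = y i).card = n := by
    rw [Finset.card_filter_add_card_filter_not]
    simp
  have h4 := congrArg (Nat.cast : ℕ → ℤ) h3
  push_cast at h4 ⊢
  rw [hd]
  simp only [nsmul_eq_mul, smul_eq_mul, mul_one, mul_neg_one]
  linarith

/-- if all terms ≤ 1 and sum = card, all terms are 1 -/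
lemma all_one_of_sum {ι : Type*} (s : Finset ι) (f : ι → ℤ) (h : ∀ i ∈ s, f i ≤ 1)
    (hs : ∑ i ∈ s, f i = s.card) : ∀ i ∈ s, f i = 1 := by
  have h0 : ∑ i ∈ s, (1 - f i) = 0 := by
    rw [Finset.sum_sub_distrib, Finset.sum_const, hs]; simp
  have := (Finset.sum_eq_zero_iff_of_nonneg (fun i hi => by linarith [h i hi])).1 h0
  intro i hi
  linarith [this i hi]

lemma all_neg_one_of_sum {ι : Type*} (s : Finset ι) (f : ι → ℤ) (h : ∀ i ∈ s, -1 ≤ f i)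
    (hs : ∑ i ∈ s, f i = -s.card) : ∀ i ∈ s, f i = -1 := by
  have h0 : ∑ i ∈ s, (f i + 1) = 0 := by
    rw [Finset.sum_add_distrib, Finset.sum_const, hs]; simp
  have := (Finset.sum_eq_zero_iff_of_nonneg (fun i hi => by linarith [h i hi])).1 h0
  intro i hi
  linarith [this i hi]

/-- row orthogonality from column orthogonality -/
lemma row_orth {m : ℕ} (H : Matrix (Fin m) (Fin m) ℤ) (hm : 0 < m)
    (hHad : H.transpose * H = (m : ℤ) • 1) :
    H * H.transpose = (m : ℤ) • 1 := by
  set Hq := H.map (Int.cast : ℤ → ℚ) with hHq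
  have hq : Hq.transpose * Hq = (m : ℚ) • 1 := by
    ext i j
    have h1 := congrFun (congrFun hHad i) j
    simp only [Matrix.mul_apply, Matrix.transpose_apply, Matrix.map_apply, Matrix.smul_apply,
      Matrix.one_apply, smul_eq_mul, hHq] at h1 ⊢
    rw [show ∑ k, ((H k i : ℚ)) * ((H k j : ℚ)) = ((∑ k, H k i * H k j : ℤ) : ℚ) by
      push_cast; rfl, h1]
    split <;> push_cast <;> ring
  have hm' : (m : ℚ) ≠ 0 := by positivity
  have hB : ((m : ℚ)⁻¹ • Hq.transpose) * Hq = 1 := by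
    rw [Matrix.smul_mul, hq, smul_smul, inv_mul_cancel₀ hm', one_smul]
  have hB' := mul_eq_one_comm.1 hB
  have hq2 : Hq * Hq.transpose = (m : ℚ) • 1 := by
    have h5 := congrArg (fun M => (m : ℚ) • M) hB'
    simp only [Matrix.mul_smul, smul_smul, mul_inv_cancel₀ hm', one_smul, smul_eq_mul] at h5
    simpa using h5
  ext i k
  have h2 := congrFun (congrFun hq2 i) k
  simp only [Matrix.mul_apply, Matrix.transpose_apply, Matrix.map_apply, Matrix.smul_apply,
    Matrix.one_apply, smul_eq_mul, hHq] at h2 ⊢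
  have h3 : ((∑ j, H i j * H k j : ℤ) : ℚ) = ∑ j, (H i j : ℚ) * (H k j : ℚ) := by
    push_cast; rfl
  by_cases hik : i = k
  · rw [if_pos hik]
    have h4 : ((∑ j, H i j * H k j : ℤ) : ℚ) = (((m : ℤ) * 1 : ℤ) : ℚ) := by
      rw [h3, h2, if_pos hik]; push_cast; ring
    exact Int.cast_injective h4
  · rw [if_neg hik]
    have h4 : ((∑ j, H i j * H k j : ℤ) : ℚ) = (((m : ℤ) * 0 : ℤ) : ℚ) := by
      rw [h3, h2, if_neg hik]; push_cast; ring
    exact Int.cast_injective h4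

/-- bridge: sum over Fin n equals sum over range n of an ℕ-indexed function -/
lemma fin_sum_bridge {n : ℕ} (F : Fin n → ℤ) (G : ℕ → ℤ) (h : ∀ i : Fin n, F i = G i) :
    ∑ i, F i = ∑ k ∈ Finset.range n, G k := by
  rw [Finset.sum_congr rfl (fun i _ => h i)]
  exact Fin.sum_univ_eq_sum_range (fun k => G k) n

/-- split a range-n sum into three consecutive blocks -/
lemma range_split (a b n : ℕ) (hab : a ≤ b) (hbn : b ≤ n) (G : ℕ → ℤ) :
    ∑ k ∈ Finset.range n, G k =
      (∑ k ∈ Finset.range a, G k) + (∑ k ∈ Finset.Ico a b, G k) + (∑ k ∈ Finset.Ico b n, G k) := by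
  rw [Finset.range_eq_Ico,
    ← Finset.sum_Ico_consecutive G (Nat.zero_le a) (le_trans hab hbn),
    ← Finset.sum_Ico_consecutive G hab hbn, ← Finset.range_eq_Ico]
  ring

lemma extCol_pair_sum {r n ℓ : ℕ} (hℓ : r ≤ ℓ) (hn : ℓ + r ≤ n)
    (H : Matrix (Fin (2 * r)) (Fin (2 * r)) ℤ) (j : Fin (2 * r))
    (x : Fin n → ℤ) (xe : ℕ → ℤ) (hxe : ∀ i : Fin n, x i = xe i) :
    ∑ i, x i * extCol (ℓ := ℓ) H j i =
      (∑ i : Fin (2 * r), xe i * H i j) + (∑ t ∈ Finset.Ico (2 * r) (ℓ + r), xe t)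
        - (∑ t ∈ Finset.Ico (ℓ + r) n, xe t) := by
  have h2r : 2 * r ≤ ℓ + r := by omega
  set G : ℕ → ℤ := fun t => xe t *
    (if h : t < 2 * r then H ⟨t, h⟩ j else if t < ℓ + r then 1 else -1) with hG
  have hb : ∑ i, x i * extCol (ℓ := ℓ) H j i = ∑ k ∈ Finset.range n, G k := by
    apply fin_sum_bridge
    intro i
    simp only [hG, extCol, hxe i]
  rw [hb, range_split (2 * r) (ℓ + r) n h2r hn G]
  have hb1 : ∑ k ∈ Finset.range (2 * r), G k = ∑ i : Fin (2 * r), xe i * H i j := by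
    rw [(fin_sum_bridge (fun i : Fin (2 * r) => xe i * H i j) G ?_)]
    intro i
    simp only [hG, dif_pos i.isLt, Fin.eta]
  have hb2 : ∑ t ∈ Finset.Ico (2 * r) (ℓ + r), G t = ∑ t ∈ Finset.Ico (2 * r) (ℓ + r), xe t := by
    apply Finset.sum_congr rfl
    intro t ht
    have ht' := Finset.mem_Ico.1 ht
    simp only [hG]
    rw [dif_neg (by omega), if_pos (by omega), mul_one]
  have hb3 : ∑ t ∈ Finset.Ico (ℓ + r) n, G t = -∑ t ∈ Finset.Ico (ℓ + r) n, xe t := by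
    rw [← Finset.sum_neg_distrib]
    apply Finset.sum_congr rfl
    intro t ht
    have ht' := Finset.mem_Ico.1 ht
    simp only [hG]
    rw [dif_neg (by omega), if_neg (by omega)]
    ring
  rw [hb1, hb2, hb3]
  ring



lemma arith1 (R e2 e3 : ℤ) (hr' : 4 ≤ R) (he2 : 0 ≤ e2) (he3 : 0 ≤ e3)
    (hT2r : e2 + e3 ≤ 2 * R)
    (hmain : 2 * R * (2 * R) - (e2 - e3) * (e2 - e3)
      - ((e2 + e3) + 2 * R) * (2 * R * 1 - (e2 - e3))
      + (2 * R - 1) * ((e2 + e3) * (2 * R)) ≤ 0) : e2 + e3 ≤ 0 := by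
  by_contra hpos
  push_neg at hpos
  nlinarith [hmain, mul_nonneg he3 (show (0 : ℤ) ≤ 2 * R - e3 by linarith),
    mul_nonneg he2 he3, mul_nonneg (show (0 : ℤ) ≤ R by linarith) he2,
    mul_pos hpos (show (0 : ℤ) < 4 * R * R - 10 * R by nlinarith)]

lemma arith2 (R e2 e3 : ℤ) (hr' : 4 ≤ R) (he2 : 0 ≤ e2) (he3 : 0 ≤ e3)
    (h : (2 * R - 1) * (e2 + e3) ≤ 2 * R * -1 - (e2 - e3)) : False := by
  nlinarith [mul_nonneg he3 (show (0 : ℤ) ≤ R - 1 by linarith),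
    mul_nonneg he2 (show (0 : ℤ) ≤ R by linarith)]

lemma arith3 (R a : ℤ) (h0 : 0 ≤ a) (h2 : a ≤ 2 * R) : a * a ≤ 2 * R * a := by
  nlinarith [mul_nonneg h0 (show (0 : ℤ) ≤ 2 * R - a by linarith)]

set_option maxHeartbeats 1600000 in
lemma max_aux (r n ℓ : ℕ) (hr : 4 ≤ r) (hℓ : r ≤ ℓ) (hn : ℓ + r ≤ n)
    (H : Matrix (Fin (2 * r)) (Fin (2 * r)) ℤ)
    (hent : ∀ i j, H i j = 1 ∨ H i j = -1)
    (row_orth' : ∀ i k, ∑ j, H i j * H k j = if i = k then (2 * r : ℤ) else 0)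
    (hnorm_row : ∀ j, H ⟨0, Nat.mul_pos (by norm_num) (by omega)⟩ j = 1)
    (hnorm_col : ∀ i, H i ⟨0, Nat.mul_pos (by norm_num) (by omega)⟩ = 1)
    (x : Fin n → ℤ) (hxpm : ∀ i, x i = 1 ∨ x i = -1)
    (hxsum : ∑ i, x i = 2 * (ℓ : ℤ) - n)
    (hcon : ∀ j : Fin (2 * r), j ≠ ⟨0, Nat.mul_pos (by norm_num) (by omega)⟩ →
      hammingDist x (extCol (ℓ := ℓ) H j) ≤ r) :
    ∃ j : Fin (2 * r), j ≠ ⟨0, Nat.mul_pos (by norm_num) (by omega)⟩ ∧ x = extCol (ℓ := ℓ) H j := by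
  set z : Fin (2 * r) := ⟨0, by omega⟩ with hz
  have row_sum : ∀ i, ∑ j, H i j = if i = z then (2 * r : ℤ) else 0 := by
    intro i
    have h1 := row_orth' i z
    rw [Finset.sum_congr rfl (fun j _ => by rw [show H z j = 1 from hnorm_row j, mul_one])] at h1
    exact h1
  have hext_pm : ∀ j (i : Fin n), extCol (ℓ := ℓ) H j i = 1 ∨ extCol (ℓ := ℓ) H j i = -1 := by
    intro j i
    unfold extCol
    split
    · exact hent _ _
    · split
      · exact Or.inl rfl
      · exact Or.inr rfl
  have h2rn : 2 * r ≤ n := by omega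
  have hr' : (4 : ℤ) ≤ (r : ℤ) := by exact_mod_cast hr
  set xe : ℕ → ℤ := fun t => if h : t < n then x ⟨t, h⟩ else 0 with hxe
  have hxe' : ∀ i : Fin n, x i = xe i := by
    intro i
    simp [hxe, i.isLt]
  have hxen : ∀ t, t < n → xe t = 1 ∨ xe t = -1 := by
    intro t ht
    simp only [hxe, dif_pos ht]
    exact hxpm _
  set c : Fin (2 * r) → ℤ := fun j => ∑ i : Fin (2 * r), xe i * H i j with hcdef
  set S2 : ℤ := ∑ t ∈ Finset.Ico (2 * r) (ℓ + r), xe t with hS2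
  set S3 : ℤ := ∑ t ∈ Finset.Ico (ℓ + r) n, xe t with hS3
  have hinner : ∀ j : Fin (2 * r),
      ∑ i : Fin n, x i * extCol (ℓ := ℓ) H j i = c j + S2 - S3 :=
    fun j => extCol_pair_sum hℓ hn H j x xe hxe'
  -- per-column bound from the distance hypothesis
  have hge : ∀ j, j ≠ z → (n : ℤ) - 2 * r ≤ c j + S2 - S3 := by
    intro j hj
    have hd : hammingDist x (extCol (ℓ := ℓ) H j) ≤ r := hcon j hj
    have h1 := inner_eq_dist x (extCol (ℓ := ℓ) H j) hxpm (hext_pm j)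
    rw [hinner j] at h1
    have h2 : (hammingDist x (extCol (ℓ := ℓ) H j) : ℤ) ≤ r := by exact_mod_cast hd
    linarith
  -- split of total sum
  have hsplit : (∑ i : Fin (2 * r), xe i) + S2 + S3 = 2 * (ℓ : ℤ) - n := by
    have hb := fin_sum_bridge x xe hxe'
    rw [range_split (2 * r) (ℓ + r) n (by omega) hn xe] at hb
    have hb1 : ∑ k ∈ Finset.range (2 * r), xe k = ∑ i : Fin (2 * r), xe i :=
      (fin_sum_bridge (fun i : Fin (2 * r) => xe i) xe (fun i => rfl)).symm
    rw [hb1] at hb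
    rw [← hxsum, hb, hS2, hS3]
  have hcz : c z = ∑ i : Fin (2 * r), xe i := by
    rw [hcdef]
    exact Finset.sum_congr rfl (fun i _ => by rw [hnorm_col i, mul_one])
  -- e2 and e3
  have he2 : 0 ≤ (ℓ : ℤ) - r - S2 := by
    have h1 : S2 ≤ (Finset.Ico (2 * r) (ℓ + r)).card • (1 : ℤ) := by
      apply Finset.sum_le_card_nsmul
      intro t ht
      have ht' := Finset.mem_Ico.1 ht
      rcases hxen t (by omega) with h | h <;> omega
    rw [Nat.card_Ico] at h1
    simp only [nsmul_eq_mul, mul_one] at h1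
    omega
  have he3 : 0 ≤ S3 + ((n : ℤ) - ℓ - r) := by
    have h1 : (Finset.Ico (ℓ + r) n).card • (-1 : ℤ) ≤ S3 := by
      apply Finset.card_nsmul_le_sum
      intro t ht
      have ht' := Finset.mem_Ico.1 ht
      rcases hxen t (by omega) with h | h <;> omega
    rw [Nat.card_Ico] at h1
    simp only [nsmul_eq_mul, mul_neg_one] at h1
    omega
  set e2 : ℤ := (ℓ : ℤ) - r - S2 with he2d
  set e3 : ℤ := S3 + ((n : ℤ) - ℓ - r) with he3d
  have hczval : c z = e2 - e3 := by
    rw [hcz]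
    rw [he2d, he3d]
    linarith [hsplit]
  -- xe at Fin (2r) indices is ±1
  have hpm2r : ∀ i : Fin (2 * r), xe i = 1 ∨ xe i = -1 := by
    intro i
    exact hxen i (by omega)
  -- c j ≤ 2r
  have hcle : ∀ j, c j ≤ 2 * (r : ℤ) := by
    intro j
    have h1 : c j ≤ (Finset.univ : Finset (Fin (2 * r))).card • (1 : ℤ) := by
      rw [hcdef]
      apply Finset.sum_le_card_nsmul
      intro i _
      rcases hpm2r i with h | h <;> rcases hent i j with h' | h' <;>
        simp [h, h']
    rw [Finset.card_univ, Fintype.card_fin] at h1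
    simp only [nsmul_eq_mul, mul_one] at h1
    push_cast at h1 ⊢
    linarith
  -- c j ≥ e2 + e3 for j ≠ z
  have hgect : ∀ j, j ≠ z → e2 + e3 ≤ c j := by
    intro j hj
    have := hge j hj
    rw [he2d, he3d]
    linarith
  -- total sum of c
  have hsumc : ∑ j, c j = 2 * (r : ℤ) * xe 0 := by
    rw [hcdef]
    rw [Finset.sum_comm]
    have h1 : ∀ i : Fin (2 * r), ∑ j, xe (i : ℕ) * H i j
        = xe (i : ℕ) * (if i = z then (2 * r : ℤ) else 0) := by
      intro i
      rw [← Finset.mul_sum, row_sum i]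
    rw [Finset.sum_congr rfl (fun i _ => h1 i)]
    rw [Finset.sum_congr rfl (fun i _ => mul_ite (i = z) (xe (i : ℕ)) (2 * (r : ℤ)) 0)]
    simp only [mul_zero]
    rw [Finset.sum_ite_eq' Finset.univ z (fun i => xe (i : ℕ) * (2 * (r : ℤ)))]
    simp only [Finset.mem_univ, if_true]
    first
    | (rw [show ((z : Fin (2 * r)) : ℕ) = 0 from rfl]; ring)
    | ring
  -- Parseval
  have hpars : ∑ j, c j * c j = 2 * (r : ℤ) * (2 * r) := by
    have h1 : ∀ j, c j * c j
        = ∑ i : Fin (2 * r), ∑ i' : Fin (2 * r), (xe i * xe i') * (H i j * H i' j) := by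
      intro j
      rw [hcdef, Finset.sum_mul_sum]
      exact Finset.sum_congr rfl (fun i _ => Finset.sum_congr rfl (fun i' _ => by ring))
    rw [Finset.sum_congr rfl (fun j _ => h1 j)]
    rw [Finset.sum_comm]
    have h2 : ∀ i : Fin (2 * r), ∑ j, ∑ i' : Fin (2 * r), (xe i * xe i') * (H i j * H i' j)
        = ∑ i' : Fin (2 * r), (xe i * xe i') * (if i = i' then (2 * r : ℤ) else 0) := by
      intro i
      rw [Finset.sum_comm]
      apply Finset.sum_congr rfl
      intro i' _
      rw [← Finset.mul_sum, row_orth' i i']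
    rw [Finset.sum_congr rfl (fun i _ => h2 i)]
    have h3 : ∀ i : Fin (2 * r), ∑ i' : Fin (2 * r), (xe i * xe i') * (if i = i' then (2 * r : ℤ) else 0)
        = (2 * r : ℤ) := by
      intro i
      rw [Finset.sum_congr rfl (fun i' _ => mul_ite (i = i') (xe (i : ℕ) * xe (i' : ℕ)) (2 * (r : ℤ)) 0)]
      simp only [mul_zero]
      rw [Finset.sum_ite_eq Finset.univ i (fun i' => xe (i : ℕ) * xe (i' : ℕ) * (2 * (r : ℤ)))]
      simp only [Finset.mem_univ, if_true]
      rcases hpm2r i with h | h <;> rw [h] <;> ring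
    rw [Finset.sum_congr rfl (fun i _ => h3 i)]
    rw [Finset.sum_const, Finset.card_univ, Fintype.card_fin]
    push_cast
    ring
  -- the erased set
  set J : Finset (Fin (2 * r)) := Finset.univ.erase z with hJ
  have hJcard : (J.card : ℤ) = 2 * (r : ℤ) - 1 := by
    rw [hJ, Finset.card_erase_of_mem (Finset.mem_univ z), Finset.card_univ, Fintype.card_fin]
    push_cast [Nat.cast_sub (by omega : 1 ≤ 2 * r)]
    ring
  have hJsum : ∑ j ∈ J, c j = 2 * (r : ℤ) * xe 0 - c z := by
    have := Finset.sum_erase_add Finset.univ c (Finset.mem_univ z)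
    rw [hJ]
    linarith [hsumc, this]
  have hJsq : ∑ j ∈ J, c j * c j = 2 * (r : ℤ) * (2 * r) - c z * c z := by
    have := Finset.sum_erase_add Finset.univ (fun j => c j * c j) (Finset.mem_univ z)
    rw [hJ]
    linarith [hpars, this]
  have hmemJ : ∀ j ∈ J, j ≠ z := fun j hj => (Finset.mem_erase.1 hj).1
  -- key quadratic inequality
  have hkey : ∑ j ∈ J, (c j - (e2 + e3)) * (c j - 2 * r) ≤ 0 := by
    apply Finset.sum_nonpos
    intro j hj
    apply mul_nonpos_of_nonneg_of_nonpos
    · linarith [hgect j (hmemJ j hj)]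
    · linarith [hcle j]
  have hexp : ∑ j ∈ J, (c j - (e2 + e3)) * (c j - 2 * r)
      = (∑ j ∈ J, c j * c j) - ((e2 + e3) + 2 * r) * (∑ j ∈ J, c j)
        + (J.card : ℤ) * ((e2 + e3) * (2 * r)) := by
    rw [Finset.sum_congr rfl (fun j _ => show (c j - (e2 + e3)) * (c j - 2 * r)
      = c j * c j - ((e2 + e3) + 2 * r) * c j + (e2 + e3) * (2 * r) by ring)]
    rw [Finset.sum_add_distrib, Finset.sum_sub_distrib, ← Finset.mul_sum, Finset.sum_const,
      nsmul_eq_mul]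
  -- lower bound on sum of c over J
  have hJlb : (J.card : ℤ) * (e2 + e3) ≤ ∑ j ∈ J, c j := by
    rw [← nsmul_eq_mul]
    apply Finset.card_nsmul_le_sum
    intro j hj
    exact hgect j (hmemJ j hj)
  -- t ≤ 2r
  have hj1 : (⟨1, by omega⟩ : Fin (2 * r)) ∈ J := by
    rw [hJ, Finset.mem_erase]
    exact ⟨by simp [hz, Fin.ext_iff], Finset.mem_univ _⟩
  have hT2r : e2 + e3 ≤ 2 * (r : ℤ) :=
    le_trans (hgect _ (hmemJ _ hj1)) (hcle _)
  have hx0pm : xe 0 = 1 ∨ xe 0 = -1 := hxen 0 (by omega)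
  -- conclude e2 + e3 = 0
  have hmain : 2 * (r : ℤ) * (2 * r) - c z * c z
      - ((e2 + e3) + 2 * r) * (2 * (r : ℤ) * xe 0 - c z)
      + (2 * (r : ℤ) - 1) * ((e2 + e3) * (2 * r)) ≤ 0 := by
    rw [← hJcard, ← hJsum, ← hJsq]
    linarith [hkey, hexp]
  have hq10 : (0 : ℤ) < 4 * (r : ℤ) * r - 10 * r := by
    nlinarith [hr', mul_pos (show (0 : ℤ) < (r : ℤ) by linarith)
      (show (0 : ℤ) < 2 * (r : ℤ) - 5 by linarith)]
  rw [hJcard] at hJlb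
  have hT0 : e2 + e3 ≤ 0 := by
    rcases hx0pm with h0 | h0
    · rw [h0, hczval] at hmain
      exact arith1 (r : ℤ) e2 e3 hr' he2 he3 hT2r hmain
    · exfalso
      rw [h0, hczval] at hJsum
      exact arith2 (r : ℤ) e2 e3 hr' he2 he3 (hJsum ▸ hJlb)
  have he20 : e2 = 0 := by linarith
  have he30 : e3 = 0 := by linarith
  have hcz0 : c z = 0 := by rw [hczval]; linarith
  -- xe 0 = 1
  have hx01 : xe 0 = 1 := by
    rcases hx0pm with h0 | h0
    · exact h0
    · exfalso
      have hub : ∑ j ∈ J, c j * c j ≤ 2 * (r : ℤ) * ∑ j ∈ J, c j := by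
        rw [Finset.mul_sum]
        apply Finset.sum_le_sum
        intro j hj
        have h1 := hgect j (hmemJ j hj)
        exact arith3 (r : ℤ) (c j) (by linarith) (hcle j)
      rw [hJsq, hJsum, hcz0, h0] at hub
      have hrr : (0 : ℤ) < (r : ℤ) * (r : ℤ) :=
        mul_pos (by linarith) (by linarith)
      linarith
  -- each c j ∈ {0, 2r}
  have hzero : ∑ j ∈ J, c j * (2 * (r : ℤ) - c j) = 0 := by
    rw [Finset.sum_congr rfl (fun j _ => show c j * (2 * (r : ℤ) - c j)
      = 2 * (r : ℤ) * c j - c j * c j by ring)]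
    rw [Finset.sum_sub_distrib, ← Finset.mul_sum, hJsum, hJsq, hcz0, hx01]
    ring
  have hdico : ∀ j ∈ J, c j = 0 ∨ c j = 2 * (r : ℤ) := by
    intro j hj
    have h1 := (Finset.sum_eq_zero_iff_of_nonneg (fun j hj => by
      have h2 := hgect j (hmemJ j hj)
      have h3 := hcle j
      exact mul_nonneg (by linarith) (by linarith) :
        ∀ j ∈ J, 0 ≤ c j * (2 * (r : ℤ) - c j))).1 hzero j hj
    rcases mul_eq_zero.1 h1 with h | h
    · exact Or.inl h
    · exact Or.inr (by linarith)
  -- find the column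
  have hexj : ∃ j ∈ J, c j = 2 * (r : ℤ) := by
    by_contra hno
    push_neg at hno
    have hall : ∀ j ∈ J, c j = 0 := by
      intro j hj
      rcases hdico j hj with h | h
      · exact h
      · exact absurd h (hno j hj)
    have : ∑ j ∈ J, c j = 0 := Finset.sum_eq_zero hall
    rw [hJsum, hcz0, hx01] at this
    linarith
  obtain ⟨js, hjsJ, hcjs⟩ := hexj
  have hjsz : js ≠ z := hmemJ js hjsJ
  -- all coordinates of the first block match
  have hallone : ∀ i : Fin (2 * r), xe (i : ℕ) * H i js = 1 := by
    intro i
    refine all_one_of_sum Finset.univ (fun i : Fin (2 * r) => xe (i : ℕ) * H i js) ?_ ?_ i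
      (Finset.mem_univ i)
    · intro i _
      rcases hpm2r i with h | h <;> rcases hent i js with h' | h' <;> simp [h, h']
    · show (∑ i : Fin (2 * r), xe (i : ℕ) * H i js) = _
      rw [show (∑ i : Fin (2 * r), xe (i : ℕ) * H i js) = c js from rfl, hcjs,
        Finset.card_univ, Fintype.card_fin]
      push_cast
      ring
  have hyH : ∀ i : Fin (2 * r), xe (i : ℕ) = H i js := by
    intro i
    have h1 := hallone i
    rcases hent i js with h' | h' <;> rcases hpm2r i with h | h <;>
      rw [h, h'] at h1 ⊢ <;> omega
  -- middle block all ones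
  have hmid : ∀ t ∈ Finset.Ico (2 * r) (ℓ + r), xe t = 1 := by
    apply all_one_of_sum
    · intro t ht
      have ht' := Finset.mem_Ico.1 ht
      rcases hxen t (by omega) with h | h <;> omega
    · rw [Nat.card_Ico, ← hS2]
      have : S2 = (ℓ : ℤ) - r := by rw [he2d] at he20; linarith
      rw [this]
      omega
  -- tail block all minus-ones
  have htail : ∀ t ∈ Finset.Ico (ℓ + r) n, xe t = -1 := by
    apply all_neg_one_of_sum
    · intro t ht
      have ht' := Finset.mem_Ico.1 ht
      rcases hxen t (by omega) with h | h <;> omega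
    · rw [Nat.card_Ico, ← hS3]
      have : S3 = -((n : ℤ) - ℓ - r) := by rw [he3d] at he30; linarith
      rw [this]
      omega
  -- x is the extended column js
  refine ⟨js, hjsz, ?_⟩
  funext i
  rw [hxe' i]
  unfold extCol
  by_cases h1 : (i : ℕ) < 2 * r
  · rw [dif_pos h1]
    exact hyH ⟨(i : ℕ), h1⟩
  · rw [dif_neg h1]
    by_cases h2 : (i : ℕ) < ℓ + r
    · rw [if_pos h2]
      exact hmid (i : ℕ) (Finset.mem_Ico.2 ⟨by omega, h2⟩)
    · rw [if_neg h2]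
      exact htail (i : ℕ) (Finset.mem_Ico.2 ⟨by omega, i.isLt⟩)


theorem stmt_16 (r n ℓ : ℕ) (hr : 4 ≤ r) (hℓ : r ≤ ℓ) (hn : ℓ + r ≤ n)
    (H : Matrix (Fin (2 * r)) (Fin (2 * r)) ℤ)
    (hent : ∀ i j, H i j = 1 ∨ H i j = -1)
    (hHad : H.transpose * H = (2 * r : ℤ) • 1)
    (hnorm_row : ∀ j, H ⟨0, by omega⟩ j = 1) (hnorm_col : ∀ i, H i ⟨0, by omega⟩ = 1)
    (A : Set (Fin n → ℤ))
    (hA : A = {v | ∃ j : Fin (2 * r), j ≠ ⟨0, by omega⟩ ∧ v = extCol (ℓ := ℓ) H j}) :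
    A ⊆ levelSet n ℓ ∧
    (∀ a ∈ A, ∀ b ∈ A, hammingDist a b ≤ r) ∧
    (∃ a ∈ A, ∃ b ∈ A, hammingDist a b = r) ∧
    (∀ x ∈ levelSet n ℓ, x ∉ A → ∃ a ∈ A, r < hammingDist x a) := by
  have hrpos : (0 : ℕ) < 2 * r := by omega
  set z : Fin (2 * r) := ⟨0, by omega⟩ with hz
  -- entrywise column orthogonality
  have col_orth : ∀ j k, ∑ i, H i j * H i k = if j = k then (2 * r : ℤ) else 0 := by
    intro j k
    have h1 := congrFun (congrFun hHad j) k
    simp only [Matrix.mul_apply, Matrix.transpose_apply, Matrix.smul_apply, Matrix.one_apply,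
      smul_eq_mul] at h1
    rw [h1]
    split <;> push_cast <;> ring
  have hHad2 : H.transpose * H = ((2 * r : ℕ) : ℤ) • 1 := by
    rw [hHad]; norm_cast
  have hrowo := row_orth H hrpos hHad2
  have row_orth' : ∀ i k, ∑ j, H i j * H k j = if i = k then (2 * r : ℤ) else 0 := by
    intro i k
    have h1 := congrFun (congrFun hrowo i) k
    simp only [Matrix.mul_apply, Matrix.transpose_apply, Matrix.smul_apply, Matrix.one_apply,
      smul_eq_mul] at h1
    rw [h1]
    split <;> push_cast <;> ring
  have row_sum : ∀ i, ∑ j, H i j = if i = z then (2 * r : ℤ) else 0 := by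
    intro i
    have h1 := row_orth' i z
    rw [Finset.sum_congr rfl (fun j _ => by rw [show H z j = 1 from hnorm_row j, mul_one])] at h1
    exact h1
  have col_sum : ∀ j, j ≠ z → ∑ i, H i j = 0 := by
    intro j hj
    have h1 := col_orth j z
    rw [Finset.sum_congr rfl (fun i _ => by rw [show H i z = 1 from hnorm_col i, mul_one]),
      if_neg hj] at h1
    exact h1
  have hext_pm : ∀ j (i : Fin n), extCol (ℓ := ℓ) H j i = 1 ∨ extCol (ℓ := ℓ) H j i = -1 := by
    intro j i
    unfold extCol
    split
    · exact hent _ _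
    · split
      · exact Or.inl rfl
      · exact Or.inr rfl
  -- sum of extCol entries
  have hext_sum : ∀ j, j ≠ z → ∑ i : Fin n, extCol (ℓ := ℓ) H j i = 2 * (ℓ : ℤ) - n := by
    intro j hj
    have h1 := extCol_pair_sum hℓ hn H j (fun _ => (1 : ℤ)) (fun _ => (1 : ℤ)) (fun _ => rfl)
    simp only [one_mul] at h1
    rw [h1, Finset.sum_const, Finset.sum_const, col_sum j hj, Nat.card_Ico, Nat.card_Ico]
    simp only [nsmul_eq_mul, mul_one]
    omega
  -- membership in level set
  have hsub : A ⊆ levelSet n ℓ := by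
    rw [hA]
    rintro v ⟨j, hj, rfl⟩
    refine ⟨hext_pm j, ?_⟩
    have h1 := sum_pm_eq Finset.univ (extCol (ℓ := ℓ) H j) (fun i _ => hext_pm j i)
    rw [hext_sum j hj, Finset.card_univ, Fintype.card_fin] at h1
    omega
  -- distance between distinct extended columns is r
  have hdist : ∀ j k, j ≠ k →
      hammingDist (extCol (r := r) (n := n) (ℓ := ℓ) H j) (extCol (ℓ := ℓ) H k) = r := by
    intro j k hjk
    have h1 := extCol_pair_sum hℓ hn H k (extCol (ℓ := ℓ) H j)
      (fun t => if h : t < 2 * r then H ⟨t, h⟩ j else if t < ℓ + r then 1 else -1)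
      (fun i => rfl)
    have h2 : (∑ i : Fin (2 * r),
        (if h : (i : ℕ) < 2 * r then H ⟨(i : ℕ), h⟩ j else if (i : ℕ) < ℓ + r then 1 else -1)
          * H i k) = ∑ i, H i j * H i k := by
      apply Finset.sum_congr rfl
      intro i _
      rw [dif_pos i.isLt]
    have h3 : (∑ t ∈ Finset.Ico (2 * r) (ℓ + r),
        (if h : t < 2 * r then H ⟨t, h⟩ j else if t < ℓ + r then (1 : ℤ) else -1))
        = ((ℓ : ℤ) - r) := by
      have hpt : ∀ t ∈ Finset.Ico (2 * r) (ℓ + r),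
          (if h : t < 2 * r then H ⟨t, h⟩ j else if t < ℓ + r then (1 : ℤ) else -1) = 1 := by
        intro t ht
        have ht' := Finset.mem_Ico.1 ht
        rw [dif_neg (by omega), if_pos (by omega)]
      rw [Finset.sum_congr rfl hpt, Finset.sum_const, Nat.card_Ico]
      simp only [nsmul_eq_mul, mul_one]
      omega
    have h4 : (∑ t ∈ Finset.Ico (ℓ + r) n,
        (if h : t < 2 * r then H ⟨t, h⟩ j else if t < ℓ + r then (1 : ℤ) else -1))
        = -((n : ℤ) - ℓ - r) := by
      have hpt : ∀ t ∈ Finset.Ico (ℓ + r) n,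
          (if h : t < 2 * r then H ⟨t, h⟩ j else if t < ℓ + r then (1 : ℤ) else -1) = -1 := by
        intro t ht
        have ht' := Finset.mem_Ico.1 ht
        rw [dif_neg (by omega), if_neg (by omega)]
      rw [Finset.sum_congr rfl hpt, Finset.sum_const, Nat.card_Ico]
      simp only [nsmul_eq_mul, mul_neg_one]
      omega
    rw [h2, h3, h4, col_orth, if_neg hjk] at h1
    have h5 := inner_eq_dist (extCol (ℓ := ℓ) H j) (extCol (ℓ := ℓ) H k) (hext_pm j) (hext_pm k)
    rw [h5] at h1
    have hd2 : hammingDist (extCol (r := r) (n := n) (ℓ := ℓ) H j) (extCol (ℓ := ℓ) H k) ≤ n := by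
      apply le_trans (Finset.card_le_card (Finset.subset_univ _))
      simp
    omega
  refine ⟨hsub, ?_, ?_, ?_⟩
  · -- diameter at most r
    rintro a ha b hb
    rw [hA] at ha hb
    obtain ⟨j, hj, rfl⟩ := ha
    obtain ⟨k, hk, rfl⟩ := hb
    by_cases hjk : j = k
    · subst hjk
      rw [hammingDist_self]
      omega
    · rw [hdist j k hjk]
  · -- some pair at distance exactly r
    refine ⟨extCol (ℓ := ℓ) H ⟨1, by omega⟩, ?_, extCol (ℓ := ℓ) H ⟨2, by omega⟩, ?_, ?_⟩
    · rw [hA]; exact ⟨⟨1, by omega⟩, by simp [Fin.ext_iff], rfl⟩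
    · rw [hA]; exact ⟨⟨2, by omega⟩, by simp [Fin.ext_iff], rfl⟩
    · exact hdist _ _ (by simp [Fin.ext_iff])
  · -- maximality
    intro x hx hxA
    by_contra hcon
    push_neg at hcon
    obtain ⟨hxpm, hxcard⟩ := hx
    have hxsum : ∑ i : Fin n, x i = 2 * (ℓ : ℤ) - n := by
      have h1 := sum_pm_eq Finset.univ x (fun i _ => hxpm i)
      rw [hxcard, Finset.card_univ, Fintype.card_fin] at h1
      exact h1
    obtain ⟨js, hjz, hxeq⟩ := max_aux r n ℓ hr hℓ hn H hent row_orth' hnorm_row hnorm_col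
      x hxpm hxsum (fun j hj => hcon _ (by rw [hA]; exact ⟨j, hj, rfl⟩))
    exact hxA (by rw [hA]; exact ⟨js, hjz, hxeq⟩)
end

section
/- If a Hadamard matrix of order 2r exists with r ≥ 4, then for all integers n, ℓ with ℓ ≥ r and n ≥ ℓ + r, the (2r−2)-dimensional homology of the Vietoris–Rips complex VR(L^n_ℓ; r) is non-trivial. -/
/-- The faces of the Vietoris–Rips complex of a subset `X ⊆ {±1}^n` at scale `r`. -/
def VRfaces {n : ℕ} (X : Set (Fin n → ℤ)) (r : ℕ) : Set (Finset (Fin n → ℤ)) :=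
  {s | ↑s ⊆ X ∧ ∀ x ∈ s, ∀ y ∈ s, hammingDist x y ≤ r}

set_option maxHeartbeats 1000000
open Finset

namespace S17
set_option linter.unusedVariables false
set_option linter.unnecessarySimpa false
/-- ±1 predicate -/
def pm (a : ℤ) : Prop := a = 1 ∨ a = -1

lemma pm.sq {a : ℤ} (h : pm a) : a * a = 1 := by rcases h with h|h <;> simp [h]

lemma pm.mul {a b : ℤ} (ha : pm a) (hb : pm b) : pm (a*b) := by
  rcases ha with h|h <;> rcases hb with h'|h' <;> simp [pm, h, h']

lemma pm.neg {a : ℤ} (ha : pm a) : pm (-a) := by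
  rcases ha with h|h <;> simp [pm, h]

lemma pm.le_one {a b : ℤ} (ha : pm a) (hb : pm b) : a * b ≤ 1 := by
  rcases ha with h|h <;> rcases hb with h'|h' <;> simp [h, h']

lemma pm.prod_eq {a b : ℤ} (ha : pm a) (hb : pm b) : a * b = if a = b then 1 else -1 := by
  rcases ha with h|h <;> rcases hb with h'|h' <;> simp [h, h']

lemma pm.eq_of_mul_eq_one {a b : ℤ} (ha : pm a) (hb : pm b) (h : a * b = 1) : a = b := by
  rw [ha.prod_eq hb] at h
  by_contra hne
  rw [if_neg hne] at h; norm_num at h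

lemma dot_hamming {m : ℕ} (u w : Fin m → ℤ) (hu : ∀ j, pm (u j)) (hw : ∀ j, pm (w j)) :
    (∑ j, u j * w j) = (m:ℤ) - 2 * hammingDist u w := by
  have h1 : ∀ j, u j * w j = 1 - 2 * (if u j ≠ w j then (1:ℤ) else 0) := by
    intro j
    rw [(hu j).prod_eq (hw j)]
    by_cases h : u j = w j <;> simp [h]
  rw [Finset.sum_congr rfl (fun j _ => h1 j)]
  rw [Finset.sum_sub_distrib]
  rw [← Finset.mul_sum, Finset.sum_boole]
  simp [hammingDist]

lemma ones_card {m : ℕ} (y : Fin m → ℤ) (hy : ∀ j, pm (y j)) :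
    2 * (((univ.filter fun j => y j = 1)).card : ℤ) = (m:ℤ) + ∑ j, y j := by
  have h1 : ∀ j, y j = 2 * (if y j = 1 then (1:ℤ) else 0) - 1 := by
    intro j
    rcases hy j with h|h <;> simp [h]
  rw [Finset.sum_congr rfl (fun j _ => h1 j)]
  rw [Finset.sum_sub_distrib, ← Finset.mul_sum, Finset.sum_boole]
  simp


variable {r n ℓ : ℕ}


lemma col_orth (H : Matrix (Fin (2*r)) (Fin (2*r)) ℤ)
    (hHad : H.transpose * H = (2 * r : ℤ) • 1) (j j' : Fin (2*r)) :
    ∑ i, H i j * H i j' = if j = j' then (2*r:ℤ) else 0 := by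
  have := congrFun (congrFun hHad j) j'
  simp only [Matrix.mul_apply, Matrix.transpose_apply, Matrix.smul_apply,
    Matrix.one_apply, smul_eq_mul] at this
  rw [this]
  by_cases h : j = j' <;> simp [h]

lemma row_orth (H : Matrix (Fin (2*r)) (Fin (2*r)) ℤ) (hr : 4 ≤ r)
    (hHad : H.transpose * H = (2 * r : ℤ) • 1) (i i' : Fin (2*r)) :
    ∑ j, H i j * H i' j = if i = i' then (2*r:ℤ) else 0 := by
  have h2r : ((2*r : ℤ) : ℚ) ≠ 0 := by push_cast; positivity
  let M : Matrix (Fin (2*r)) (Fin (2*r)) ℚ := H.map (Int.cast)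
  have hM : M.transpose * M = ((2*r : ℤ) : ℚ) • 1 := by
    ext a b
    have hco := col_orth H hHad a b
    simp only [Matrix.mul_apply, Matrix.transpose_apply, Matrix.smul_apply,
      Matrix.one_apply, M, Matrix.map_apply, smul_eq_mul]
    have hc : ((∑ x, H x a * H x b : ℤ) : ℚ) = ∑ x, (H x a : ℚ) * (H x b : ℚ) := by
      push_cast; rfl
    rw [← hc, hco]
    by_cases h : a = b <;> simp [h]
  have h1 : (((2*r:ℤ):ℚ)⁻¹ • M.transpose) * M = 1 := by
    rw [Matrix.smul_mul, hM, smul_smul, inv_mul_cancel₀ h2r, one_smul]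
  have h2 : M * (((2*r:ℤ):ℚ)⁻¹ • M.transpose) = 1 := mul_eq_one_comm.mp h1
  have h3 : M * M.transpose = ((2*r:ℤ):ℚ) • 1 := by
    have := congrArg (fun A => ((2*r:ℤ):ℚ) • A) h2
    simp only [Matrix.mul_smul, smul_smul, mul_inv_cancel₀ h2r, one_smul] at this
    rw [this]
  have hfin := congrFun (congrFun h3 i) i'
  simp only [Matrix.mul_apply, Matrix.transpose_apply, Matrix.smul_apply, Matrix.one_apply,
    Matrix.map_apply, M, smul_eq_mul] at hfin
  have hc : ((∑ j, H i j * H i' j : ℤ) : ℚ) = ∑ x, (H i x : ℚ) * (H i' x : ℚ) := by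
    push_cast; rfl
  by_cases h : i = i'
  · rw [if_pos h] at hfin ⊢
    rw [mul_one] at hfin
    exact_mod_cast hc.trans hfin
  · rw [if_neg h] at hfin ⊢
    rw [mul_zero] at hfin
    exact_mod_cast hc.trans hfin


def fz (hr : 4 ≤ r) : Fin (2*r) := ⟨0, by omega⟩

def vv (H : Matrix (Fin (2*r)) (Fin (2*r)) ℤ) (hr : 4 ≤ r) (i j : Fin (2*r)) : ℤ :=
  H i (fz hr) * H (fz hr) (fz hr) * H i j * H (fz hr) j

def ι (hr : 4 ≤ r) (i : Fin (2*r-2+1)) : Fin (2*r) :=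
  ⟨i.1+1, by have := i.isLt; omega⟩

lemma hpm {H : Matrix (Fin (2*r)) (Fin (2*r)) ℤ}
    (hent : ∀ i j, H i j = 1 ∨ H i j = -1) (i j : Fin (2*r)) : pm (H i j) := hent i j

section vvfacts
variable (H : Matrix (Fin (2*r)) (Fin (2*r)) ℤ) (hr : 4 ≤ r)
  (hent : ∀ i j, H i j = 1 ∨ H i j = -1)
  (hHad : H.transpose * H = (2 * r : ℤ) • 1)

include hent in
lemma vv_pm (i j : Fin (2*r)) : pm (vv H hr i j) :=
  (((hpm hent _ _).mul (hpm hent _ _)).mul (hpm hent _ _)).mul (hpm hent _ _)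

include hent in
lemma vv_z (j : Fin (2*r)) : vv H hr (fz hr) j = 1 := by
  unfold vv
  linear_combination (H (fz hr) j * H (fz hr) j) * (hpm hent (fz hr) (fz hr)).sq
    + (hpm hent (fz hr) j).sq

include hent hHad in
lemma vv_col (j j' : Fin (2*r)) :
    ∑ i, vv H hr i j * vv H hr i j' = if j = j' then (2*r:ℤ) else 0 := by
  have key : ∀ i, vv H hr i j * vv H hr i j' =
      (H (fz hr) j * H (fz hr) j') * (H i j * H i j') := by
    intro i
    unfold vv
    linear_combination (H (fz hr) (fz hr) * H (fz hr) (fz hr) * H i j * H (fz hr) j * H i j' * H (fz hr) j') * (hpm hent i (fz hr)).sq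
      + (H i j * H (fz hr) j * H i j' * H (fz hr) j') * (hpm hent (fz hr) (fz hr)).sq
  rw [Finset.sum_congr rfl (fun i _ => key i), ← Finset.mul_sum, col_orth H hHad]
  by_cases h : j = j'
  · rw [if_pos h]
    subst h
    linear_combination (2*(r:ℤ)) * (hpm hent (fz hr) j).sq
  · simp [h]

include hent hHad in
lemma vv_row (i i' : Fin (2*r)) :
    ∑ j, vv H hr i j * vv H hr i' j = if i = i' then (2*r:ℤ) else 0 := by
  have key : ∀ j, vv H hr i j * vv H hr i' j =
      (H i (fz hr) * H i' (fz hr)) * (H i j * H i' j) := by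
    intro j
    unfold vv
    linear_combination (H i (fz hr) * H i j * H (fz hr) j * H i' (fz hr) * H i' j * H (fz hr) j) * (hpm hent (fz hr) (fz hr)).sq
      + (H i (fz hr) * H i j * H i' (fz hr) * H i' j) * (hpm hent (fz hr) j).sq
  rw [Finset.sum_congr rfl (fun j _ => key j), ← Finset.mul_sum, row_orth H hr hHad]
  by_cases h : i = i'
  · rw [if_pos h]
    subst h
    linear_combination (2*(r:ℤ)) * (hpm hent i (fz hr)).sq
  · simp [h]

include hent hHad in
lemma vv_sum (j : Fin (2*r)) :
    ∑ i, vv H hr i j = if j = fz hr then (2*r:ℤ) else 0 := by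
  have key : ∀ i, vv H hr i j = (H (fz hr) (fz hr) * H (fz hr) j) * (H i (fz hr) * H i j) := by
    intro i; unfold vv; ring
  rw [Finset.sum_congr rfl (fun i _ => key i), ← Finset.mul_sum, col_orth H hHad]
  by_cases h : j = fz hr
  · rw [if_pos h, if_pos (by rw [h])]
    subst h
    linear_combination (2*(r:ℤ)) * (hpm hent (fz hr) (fz hr)).sq
  · rw [if_neg h, if_neg (fun hh => h hh.symm), mul_zero]

end vvfacts

lemma ι_ne_fz (hr : 4 ≤ r) (i : Fin (2*r-2+1)) : ι hr i ≠ fz hr := by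
  intro h
  have : (ι hr i).1 = (fz hr).1 := by rw [h]
  simp [ι, fz] at this

lemma ι_inj (hr : 4 ≤ r) {i i' : Fin (2*r-2+1)} (h : ι hr i = ι hr i') : i = i' := by
  have h1 : (ι hr i).1 = (ι hr i').1 := by rw [h]
  simp only [ι] at h1
  exact Fin.ext (by omega)

lemma sum_split_fin2r (hr : 4 ≤ r) (g : Fin (2*r) → ℤ) :
    ∑ i, g i = g (fz hr) + ∑ i : Fin (2*r-2+1), g (ι hr i) := by
  have e : (2*r-2+1)+1 = 2*r := by omega
  rw [← Equiv.sum_comp (finCongr e) g]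
  rw [Fin.sum_univ_succ]
  have h0 : (finCongr e) 0 = fz hr := by apply Fin.ext; simp [fz]
  have hs : ∀ i : Fin (2*r-2+1), (finCongr e) i.succ = ι hr i := by
    intro i; apply Fin.ext; simp [ι]
  rw [h0]
  exact congrArg _ (Finset.sum_congr rfl fun i _ => by rw [hs i])


def padc (r ℓ : ℕ) {n : ℕ} (j : Fin n) : ℤ := if (j:ℕ) < r + ℓ then 1 else -1

def pad (r ℓ : ℕ) {n : ℕ} (u : Fin (2*r) → ℤ) (j : Fin n) : ℤ :=
  if h : (j:ℕ) < 2*r then u ⟨j.1, h⟩ else padc r ℓ j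

def padF (r n : ℕ) : Finset (Fin n) := univ.filter (fun j => ¬ (j:ℕ) < 2*r)

def emb (h : 2*r ≤ n) (i : Fin (2*r)) : Fin n := ⟨i.1, lt_of_lt_of_le i.2 h⟩

lemma sum_split_n (h2rn : 2*r ≤ n) (g : Fin n → ℤ) :
    ∑ j, g j = (∑ i : Fin (2*r), g (emb h2rn i)) + ∑ j ∈ padF r n, g j := by
  rw [← Finset.sum_filter_add_sum_filter_not univ (fun j : Fin n => (j:ℕ) < 2*r) g]
  congr 1
  refine Finset.sum_bij' (fun (a : Fin n) (ha : a ∈ univ.filter (fun j : Fin n => (j:ℕ) < 2*r)) =>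
      (⟨a.1, by simpa using ha⟩ : Fin (2*r)))
    (fun (b : Fin (2*r)) _ => emb h2rn b) ?_ ?_ ?_ ?_ ?_
  · intro a ha; exact mem_univ _
  · intro b hb; simp [emb]
  · intro a ha; apply Fin.ext; simp [emb]
  · intro b hb; apply Fin.ext; simp [emb]
  · intro a ha; congr 1

lemma card_filter_lt (t : ℕ) (ht : t ≤ n) :
    ((univ : Finset (Fin n)).filter fun j : Fin n => (j:ℕ) < t).card = t := by
  rw [← Finset.card_range t]
  refine Finset.card_bij' (fun (a : Fin n) _ => a.1)
    (fun (b : ℕ) (hb : b ∈ Finset.range t) =>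
      (⟨b, lt_of_lt_of_le (Finset.mem_range.mp hb) ht⟩ : Fin n)) ?_ ?_ ?_ ?_
  · intro a ha; simp at ha; simpa using ha
  · intro b hb; simp [Finset.mem_range.mp hb]
  · intro a ha; apply Fin.ext; rfl
  · intro b hb; rfl

lemma card_padF (h2rn : 2*r ≤ n) : (padF r n).card = n - 2*r := by
  have := Finset.card_filter_add_card_filter_not
    (s := (univ : Finset (Fin n))) (p := fun j => (j:ℕ) < 2*r)
  have h2 := card_filter_lt (n := n) (2*r) h2rn
  simp only [card_univ, Fintype.card_fin] at this
  unfold padF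
  omega

lemma pad_block (h2rn : 2*r ≤ n) (u : Fin (2*r) → ℤ) (i : Fin (2*r)) :
    pad r ℓ u (emb h2rn i) = u i := by
  unfold pad
  rw [dif_pos (by simpa [emb] using i.2)]
  exact congrArg u (by apply Fin.ext; rfl)

lemma pad_in_padF (u : Fin (2*r) → ℤ) {j : Fin n} (hj : j ∈ padF r n) :
    pad r ℓ u j = padc r ℓ j := by
  unfold pad
  rw [dif_neg (by simpa [padF] using hj)]

lemma padc_pm (j : Fin n) : pm (padc r ℓ j) := by
  unfold padc; by_cases h : (j:ℕ) < r + ℓ <;> simp [pm, h]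

lemma pad_pm {u : Fin (2*r) → ℤ} (hu : ∀ i, pm (u i)) (j : Fin n) : pm (pad r ℓ u j) := by
  unfold pad
  by_cases h : (j:ℕ) < 2*r
  · rw [dif_pos h]; exact hu _
  · rw [dif_neg h]; exact padc_pm j

lemma padc_block (h2rn : 2*r ≤ n) (hℓ : r ≤ ℓ) (i : Fin (2*r)) :
    padc r ℓ (emb h2rn i) = 1 := by
  unfold padc
  rw [if_pos]
  have := i.2
  simp only [emb]
  omega

lemma padF_sum_one (h2rn : 2*r ≤ n) : ∑ _j ∈ padF r n, (1:ℤ) = (n:ℤ) - 2*r := by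
  rw [Finset.sum_const, card_padF h2rn]
  simp only [nsmul_eq_mul, mul_one]
  omega

lemma padc_sum (hr : 4 ≤ r) (hℓ : r ≤ ℓ) (hn : ℓ + r ≤ n) :
    ∑ j ∈ padF r n, padc r ℓ j = 2*(ℓ:ℤ) - n := by
  have h2rn : 2*r ≤ n := by omega
  have h1 : ∑ j : Fin n, padc r ℓ j = 2*((r:ℤ)+ℓ) - n := by
    have hc : ∀ j : Fin n, padc r ℓ j = 2 * (if (j:ℕ) < r+ℓ then (1:ℤ) else 0) - 1 := by
      intro j; unfold padc; by_cases h : (j:ℕ) < r+ℓ <;> simp [h]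
    rw [Finset.sum_congr rfl (fun j _ => hc j), Finset.sum_sub_distrib, ← Finset.mul_sum,
      Finset.sum_boole, card_filter_lt (r+ℓ) (by omega)]
    simp
  have h2 := sum_split_n h2rn (padc r ℓ)
  rw [Finset.sum_congr rfl (fun i _ => padc_block h2rn hℓ i), Finset.sum_const] at h2
  simp only [card_univ, Fintype.card_fin, nsmul_eq_mul, mul_one] at h2
  rw [h1] at h2
  push_cast at h2 ⊢
  linarith



end S17

namespace S17

def bs (b : Bool) : ℤ := if b then 1 else -1

lemma bs_pm (b : Bool) : pm (bs b) := by cases b <;> simp [pm, bs]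

def tup (n ℓ : ℕ) {r : ℕ} (H : Matrix (Fin (2*r)) (Fin (2*r)) ℤ) (hr : 4 ≤ r)
    (ε : Fin (2*r-2+1) → Bool) (k : Fin (2*r-2+1)) : Fin n → ℤ :=
  pad r ℓ (fun j => bs (ε k) * vv H hr (ι hr k) j)

def xv (n ℓ : ℕ) {r : ℕ} (H : Matrix (Fin (2*r)) (Fin (2*r)) ℤ) (hr : 4 ≤ r)
    (i : Fin (2*r-2+1)) : Fin n → ℤ := tup n ℓ H hr (fun _ => true) i

def sgn {r : ℕ} (ε : Fin (2*r-2+1) → Bool) : ℤ := ∏ i, bs (ε i)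

noncomputable def zc (n ℓ : ℕ) {r : ℕ} (H : Matrix (Fin (2*r)) (Fin (2*r)) ℤ) (hr : 4 ≤ r) :
    ((Fin (2*r-2+1) → (Fin n → ℤ)) →₀ ℤ) :=
  ∑ ε : Fin (2*r-2+1) → Bool, Finsupp.single (tup n ℓ H hr ε) (sgn ε)

section facts
variable {r n ℓ : ℕ} (H : Matrix (Fin (2*r)) (Fin (2*r)) ℤ) (hr : 4 ≤ r)
  (hent : ∀ i j, H i j = 1 ∨ H i j = -1)
  (hHad : H.transpose * H = (2 * r : ℤ) • 1)
  (hℓ : r ≤ ℓ) (hn : ℓ + r ≤ n)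

lemma mem_level (y : Fin n → ℤ) (hy : ∀ j, pm (y j))
    (hsum : ∑ j, y j = 2*(ℓ:ℤ) - n) (hln : ℓ ≤ n) : y ∈ levelSet n ℓ := by
  refine ⟨fun i => hy i, ?_⟩
  have h := ones_card y hy
  rw [hsum] at h
  omega

lemma level_sum (y : Fin n → ℤ) (hy : y ∈ levelSet n ℓ) :
    (∀ j, pm (y j)) ∧ ∑ j, y j = 2*(ℓ:ℤ) - n := by
  obtain ⟨h1, h2⟩ := hy
  refine ⟨h1, ?_⟩
  have h := ones_card y h1
  rw [h2] at h
  omega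

include hent hHad in
lemma vblock_sum (k : Fin (2*r-2+1)) : ∑ j : Fin (2*r), vv H hr (ι hr k) j = 0 := by
  have h := vv_row H hr hent hHad (ι hr k) (fz hr)
  rw [if_neg (ι_ne_fz hr k)] at h
  rw [← h]
  apply Finset.sum_congr rfl
  intro j _
  rw [vv_z H hr hent j, mul_one]

include hent hHad hℓ hn in
lemma tup_sum (ε : Fin (2*r-2+1) → Bool) (k : Fin (2*r-2+1)) :
    ∑ j, tup n ℓ H hr ε k j = 2*(ℓ:ℤ) - n := by
  have h2rn : 2*r ≤ n := by omega
  rw [sum_split_n h2rn]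
  have hb : ∀ i : Fin (2*r), tup n ℓ H hr ε k (emb h2rn i) = bs (ε k) * vv H hr (ι hr k) i :=
    fun i => pad_block h2rn _ i
  rw [Finset.sum_congr rfl (fun i _ => hb i), ← Finset.mul_sum,
    vblock_sum H hr hent hHad k, mul_zero, zero_add]
  have hp : ∀ j ∈ padF r n, tup n ℓ H hr ε k j = padc r ℓ j := by
    intro j hj; unfold tup; exact pad_in_padF _ hj
  rw [Finset.sum_congr rfl hp]
  exact padc_sum hr hℓ hn

include hent hHad hℓ hn in
lemma tup_mem (ε : Fin (2*r-2+1) → Bool) (k : Fin (2*r-2+1)) :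
    tup n ℓ H hr ε k ∈ levelSet n ℓ := by
  apply mem_level _ (fun j => pad_pm (fun i => (bs_pm _).mul (vv_pm H hr hent _ i)) j)
    (tup_sum H hr hent hHad hℓ hn ε k) (by omega)

include hent hHad hℓ hn in
lemma tup_dot (ε ε' : Fin (2*r-2+1) → Bool) (k k' : Fin (2*r-2+1)) (hkk' : k ≠ k') :
    ∑ j, tup n ℓ H hr ε k j * tup n ℓ H hr ε' k' j = (n:ℤ) - 2*r := by
  have h2rn : 2*r ≤ n := by omega
  rw [sum_split_n h2rn]
  have hb : ∀ i : Fin (2*r), tup n ℓ H hr ε k (emb h2rn i) * tup n ℓ H hr ε' k' (emb h2rn i)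
      = (bs (ε k) * bs (ε' k')) * (vv H hr (ι hr k) i * vv H hr (ι hr k') i) := by
    intro i
    unfold tup
    rw [pad_block h2rn _ i, pad_block h2rn _ i]
    ring
  rw [Finset.sum_congr rfl (fun i _ => hb i), ← Finset.mul_sum,
    vv_row H hr hent hHad, if_neg (fun h => hkk' (ι_inj hr h)), mul_zero, zero_add]
  have hp : ∀ j ∈ padF r n, tup n ℓ H hr ε k j * tup n ℓ H hr ε' k' j = 1 := by
    intro j hj
    unfold tup
    rw [pad_in_padF _ hj, pad_in_padF _ hj]
    exact (padc_pm j).sq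
  rw [Finset.sum_congr rfl hp]
  exact padF_sum_one h2rn

include hent hHad hℓ hn in
lemma tup_dist (ε ε' : Fin (2*r-2+1) → Bool) (k k' : Fin (2*r-2+1)) (hkk' : k ≠ k') :
    hammingDist (tup n ℓ H hr ε k) (tup n ℓ H hr ε' k') ≤ r := by
  have hd := dot_hamming (tup n ℓ H hr ε k) (tup n ℓ H hr ε' k')
    (fun j => pad_pm (fun i => (bs_pm _).mul (vv_pm H hr hent _ i)) j)
    (fun j => pad_pm (fun i => (bs_pm _).mul (vv_pm H hr hent _ i)) j)
  rw [tup_dot H hr hent hHad hℓ hn ε ε' k k' hkk'] at hd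
  omega

include hent hHad hℓ hn in
lemma zc_chain : ChainIn (VRfaces (levelSet n ℓ) r) (zc n ℓ H hr) := by
  intro σ hσ
  have hmem := Finsupp.support_finset_sum hσ
  rw [Finset.mem_biUnion] at hmem
  obtain ⟨ε, -, hε⟩ := hmem
  have hσε : σ = tup n ℓ H hr ε := by
    have := Finsupp.support_single_subset hε
    simpa using this
  subst hσε
  constructor
  · intro y hy
    rw [Finset.mem_coe, Finset.mem_image] at hy
    obtain ⟨k, -, rfl⟩ := hy
    exact tup_mem H hr hent hHad hℓ hn ε k
  · intro a ha b hb
    rw [Finset.mem_image] at ha hb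
    obtain ⟨k, -, rfl⟩ := ha
    obtain ⟨k', -, rfl⟩ := hb
    by_cases hkk' : k = k'
    · subst hkk'; rw [hammingDist_self]; omega
    · exact tup_dist H hr hent hHad hℓ hn ε ε k k' hkk'

include hent hHad in
lemma vv_sumI (j : Fin (2*r)) :
    ∑ i : Fin (2*r-2+1), vv H hr (ι hr i) j = (if j = fz hr then (2*r:ℤ) else 0) - 1 := by
  have h := sum_split_fin2r hr (fun i => vv H hr i j)
  rw [vv_sum H hr hent hHad j, vv_z H hr hent j] at h
  linarith

include hent hHad in
lemma parseval (a : Fin (2*r) → ℤ) (ha : ∀ j, pm (a j)) :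
    ∑ i : Fin (2*r), (∑ j, a j * vv H hr i j)^2 = (2*(r:ℤ)) * (2*(r:ℤ)) := by
  have step1 : ∀ i : Fin (2*r), (∑ j, a j * vv H hr i j)^2
      = ∑ j, ∑ j', (a j * a j') * (vv H hr i j * vv H hr i j') := by
    intro i
    rw [pow_two, Finset.sum_mul_sum]
    apply Finset.sum_congr rfl; intro j _
    apply Finset.sum_congr rfl; intro j' _
    ring
  rw [Finset.sum_congr rfl (fun i _ => step1 i)]
  rw [Finset.sum_comm]
  have step2 : ∀ j : Fin (2*r), (∑ i, ∑ j', (a j * a j') * (vv H hr i j * vv H hr i j'))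
      = ∑ j', (a j * a j') * (∑ i, vv H hr i j * vv H hr i j') := by
    intro j
    rw [Finset.sum_comm]
    apply Finset.sum_congr rfl; intro j' _
    rw [Finset.mul_sum]
  rw [Finset.sum_congr rfl (fun j _ => step2 j)]
  have step3 : ∀ j : Fin (2*r), (∑ j', (a j * a j') * (∑ i, vv H hr i j * vv H hr i j'))
      = 2*(r:ℤ) := by
    intro j
    rw [Finset.sum_eq_single j]
    · rw [vv_col H hr hent hHad j j, if_pos rfl, (ha j).sq, one_mul]
    · intro j' _ hne
      rw [vv_col H hr hent hHad j j', if_neg (fun h => hne h.symm), mul_zero]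
    · intro h; exact absurd (mem_univ j) h
  rw [Finset.sum_congr rfl (fun j _ => step3 j), Finset.sum_const]
  simp only [card_univ, Fintype.card_fin, nsmul_eq_mul]
  push_cast
  ring

include hent hHad hℓ hn in
lemma maximality (y : Fin n → ℤ) (hy : y ∈ levelSet n ℓ)
    (hd : ∀ i : Fin (2*r-2+1), hammingDist y (xv n ℓ H hr i) ≤ r) :
    ∃ m, y = xv n ℓ H hr m := by
  have h2rn : 2*r ≤ n := by omega
  obtain ⟨hypm, hysum⟩ := level_sum y hy
  have hxpm : ∀ i j, pm (xv n ℓ H hr i j) :=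
    fun i j => pad_pm (fun t => (bs_pm _).mul (vv_pm H hr hent _ t)) j
  set a : Fin (2*r) → ℤ := fun j => y (emb h2rn j) with ha
  have hapm : ∀ j, pm (a j) := fun j => hypm _
  set s : Fin (2*r-2+1) → ℤ := fun i => ∑ j : Fin (2*r), a j * vv H hr (ι hr i) j with hs
  set P : ℤ := ∑ j ∈ padF r n, y j * padc r ℓ j with hP
  set sy : ℤ := ∑ j : Fin (2*r), a j with hsy
  set q : ℤ := ((n:ℤ) - 2*r) - P with hq
  -- xv on block and padding
  have hxblock : ∀ i (j : Fin (2*r)), xv n ℓ H hr i (emb h2rn j) = vv H hr (ι hr i) j := by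
    intro i j
    unfold xv tup
    rw [pad_block h2rn]
    simp [bs]
  have hxpad : ∀ i, ∀ j ∈ padF r n, xv n ℓ H hr i j = padc r ℓ j := by
    intro i j hj
    unfold xv tup
    exact pad_in_padF _ hj
  -- Step A/B : s i ≥ q
  have hsi : ∀ i, q ≤ s i := by
    intro i
    have hdot := dot_hamming y (xv n ℓ H hr i) hypm (hxpm i)
    have hdle : (hammingDist y (xv n ℓ H hr i) : ℤ) ≤ r := by exact_mod_cast hd i
    have hsplit := sum_split_n h2rn (fun j => y j * xv n ℓ H hr i j)
    have hbl : ∀ j : Fin (2*r), y (emb h2rn j) * xv n ℓ H hr i (emb h2rn j)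
        = a j * vv H hr (ι hr i) j := by
      intro j; rw [hxblock i j, ha]
    have hpd : ∀ j ∈ padF r n, y j * xv n ℓ H hr i j = y j * padc r ℓ j := by
      intro j hj; rw [hxpad i j hj]
    rw [Finset.sum_congr rfl (fun j _ => hbl j), Finset.sum_congr rfl hpd] at hsplit
    rw [hsplit] at hdot
    have : s i + P = (n:ℤ) - 2 * (hammingDist y (xv n ℓ H hr i) : ℤ) := hdot
    omega
  -- Step C : q = 2*T ≥ 0
  have hqsum : q = ∑ j ∈ padF r n, (1 - y j * padc r ℓ j) := by
    rw [hq, Finset.sum_sub_distrib, ← hP, ← padF_sum_one h2rn (r := r) (n := n)]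
  have hterm : ∀ j ∈ padF r n, (1 - y j * padc r ℓ j) = 2 * (if y j = padc r ℓ j then 0 else 1) := by
    intro j _
    rcases hypm j with h1|h1 <;> rcases padc_pm (r := r) (ℓ := ℓ) j with h2|h2 <;>
      simp [h1, h2] <;> norm_num
  have hqT : q = 2 * ∑ j ∈ padF r n, (if y j = padc r ℓ j then (0:ℤ) else 1) := by
    rw [hqsum, Finset.sum_congr rfl hterm, ← Finset.mul_sum]
  have hq0 : 0 ≤ q := by
    rw [hqT]
    have : (0:ℤ) ≤ ∑ j ∈ padF r n, (if y j = padc r ℓ j then (0:ℤ) else 1) := by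
      apply Finset.sum_nonneg; intro j _; by_cases h : y j = padc r ℓ j <;> simp [h]
    omega
  -- Step D : |sy| ≤ q
  have hsyq : sy = ∑ j ∈ padF r n, (padc r ℓ j - y j) := by
    have h1 := sum_split_n h2rn y
    have h2 : ∑ j ∈ padF r n, (padc r ℓ j - y j) = (2*(ℓ:ℤ) - n) - ∑ j ∈ padF r n, y j := by
      rw [Finset.sum_sub_distrib, padc_sum hr hℓ hn]
    rw [h2, ← hysum, h1, hsy, ha]
    ring
  have hsyub : sy ≤ q := by
    rw [hsyq, hqsum]
    apply Finset.sum_le_sum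
    intro j _
    rcases hypm j with h1|h1 <;> rcases padc_pm (r := r) (ℓ := ℓ) j with h2|h2 <;>
      rw [h1, h2] <;> norm_num
  have hsylb : -q ≤ sy := by
    rw [hsyq, hqsum, ← Finset.sum_neg_distrib]
    apply Finset.sum_le_sum
    intro j _
    rcases hypm j with h1|h1 <;> rcases padc_pm (r := r) (ℓ := ℓ) j with h2|h2 <;>
      rw [h1, h2] <;> norm_num
  -- Step E : ∑ s = 2r y0 - sy
  have hsum_s : ∑ i, s i = (2*(r:ℤ)) * a (fz hr) - sy := by
    rw [hs]
    rw [Finset.sum_comm]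
    have h1 : ∀ j : Fin (2*r), (∑ i : Fin (2*r-2+1), a j * vv H hr (ι hr i) j)
        = a j * ((if j = fz hr then (2*r:ℤ) else 0) - 1) := by
      intro j
      rw [← Finset.mul_sum, vv_sumI H hr hent hHad j]
    rw [Finset.sum_congr rfl (fun j _ => h1 j)]
    have h2 : ∀ j : Fin (2*r), a j * ((if j = fz hr then (2*r:ℤ) else 0) - 1)
        = a j * (if j = fz hr then (2*r:ℤ) else 0) - a j := by
      intro j; ring
    rw [Finset.sum_congr rfl (fun j _ => h2 j), Finset.sum_sub_distrib]
    congr 1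
    rw [Finset.sum_eq_single (fz hr)]
    · rw [if_pos rfl]; ring
    · intro j _ hne; rw [if_neg hne, mul_zero]
    · intro h; exact absurd (mem_univ _) h
  -- Step F/G : q = 0
  have hcard : ((2*r-2+1 : ℕ):ℤ) = 2*(r:ℤ) - 1 := by omega
  have hlb : (2*(r:ℤ) - 1) * q ≤ ∑ i, s i := by
    calc (2*(r:ℤ) - 1) * q = ∑ _i : Fin (2*r-2+1), q := by
          rw [Finset.sum_const, card_univ, Fintype.card_fin, nsmul_eq_mul, hcard]
      _ ≤ ∑ i, s i := Finset.sum_le_sum (fun i _ => hsi i)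
  have ha0le : a (fz hr) ≤ 1 := by rcases hapm (fz hr) with h|h <;> rw [h] <;> norm_num
  have hub : ∑ i, s i ≤ 2*(r:ℤ) + q := by
    rw [hsum_s]
    nlinarith
  have hqeq0 : q = 0 := by
    have h24 : (2*(r:ℤ) - 2) * q ≤ 2*(r:ℤ) := by nlinarith
    have hr' : (4:ℤ) ≤ (r:ℤ) := by exact_mod_cast hr
    obtain ⟨T, hT2⟩ : ∃ T, q = 2*T := ⟨_, hqT⟩
    by_contra hne
    have hq2 : 2 ≤ q := by omega
    nlinarith
  -- consequences
  have hsy0 : sy = 0 := by omega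
  have hpadeq : ∀ j ∈ padF r n, y j = padc r ℓ j := by
    have hz : ∑ j ∈ padF r n, (1 - y j * padc r ℓ j) = 0 := by rw [← hqsum, hqeq0]
    have hnn : ∀ j ∈ padF r n, 0 ≤ 1 - y j * padc r ℓ j := by
      intro j _
      have := (hypm j).le_one (padc_pm (r := r) (ℓ := ℓ) j)
      omega
    have := (Finset.sum_eq_zero_iff_of_nonneg hnn).mp hz
    intro j hj
    have h1 : y j * padc r ℓ j = 1 := by have := this j hj; omega
    exact (hypm j).eq_of_mul_eq_one (padc_pm j) h1
  -- Step I : y0 = 1, ∑ s = 2r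
  have hs_nonneg : ∀ i, 0 ≤ s i := fun i => le_trans (le_of_eq hqeq0.symm) (hsi i)
  have ha0 : a (fz hr) = 1 := by
    rcases hapm (fz hr) with h|h
    · exact h
    · exfalso
      have h1 : ∑ i, s i = -(2*(r:ℤ)) := by rw [hsum_s, h, hsy0]; ring
      have h2 : (0:ℤ) ≤ ∑ i, s i := Finset.sum_nonneg (fun i _ => hs_nonneg i)
      have hr' : (4:ℤ) ≤ (r:ℤ) := by exact_mod_cast hr
      omega
  have hsum2r : ∑ i, s i = 2*(r:ℤ) := by rw [hsum_s, ha0, hsy0]; ring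
  -- Step J : ∑ s² = 4r²
  have hsq : ∑ i, (s i)^2 = (2*(r:ℤ)) * (2*(r:ℤ)) := by
    have hP := parseval H hr hent hHad a hapm
    have hsplit := sum_split_fin2r hr (fun i => (∑ j, a j * vv H hr i j)^2)
    rw [hP] at hsplit
    have hfz : (∑ j, a j * vv H hr (fz hr) j) = sy := by
      rw [hsy]
      apply Finset.sum_congr rfl
      intro j _
      rw [vv_z H hr hent j, mul_one]
    rw [hfz, hsy0] at hsplit
    simp only [ne_eq, OfNat.ofNat_ne_zero, not_false_eq_true, zero_pow, zero_add] at hsplit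
    have hrfl : ∑ i : Fin (2*r-2+1), (s i)^2
        = ∑ i : Fin (2*r-2+1), (∑ j, a j * vv H hr (ι hr i) j)^2 := rfl
    rw [hrfl]
    linarith
  -- Step K : each s i ∈ {0, 2r}, and some s m = 2r
  have hs_le : ∀ i, s i ≤ 2*(r:ℤ) := by
    intro i
    show (∑ j : Fin (2*r), a j * vv H hr (ι hr i) j) ≤ 2*(r:ℤ)
    calc ∑ j : Fin (2*r), a j * vv H hr (ι hr i) j ≤ ∑ _j : Fin (2*r), (1:ℤ) :=
          Finset.sum_le_sum (fun j _ => (hapm j).le_one (vv_pm H hr hent (ι hr i) j))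
      _ = 2*(r:ℤ) := by rw [Finset.sum_const, card_univ, Fintype.card_fin, nsmul_eq_mul]; push_cast; ring
  have hprod0 : ∀ i ∈ univ, s i * (2*(r:ℤ) - s i) = 0 := by
    apply (Finset.sum_eq_zero_iff_of_nonneg ?_).mp
    · have : ∑ i, s i * (2*(r:ℤ) - s i) = (2*(r:ℤ)) * (∑ i, s i) - ∑ i, (s i)^2 := by
        rw [Finset.mul_sum, ← Finset.sum_sub_distrib]
        apply Finset.sum_congr rfl
        intro i _; ring
      rw [this, hsum2r, hsq]; ring
    · intro i _
      exact mul_nonneg (hs_nonneg i) (by linarith [hs_le i])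
  have hexists : ∃ m, s m = 2*(r:ℤ) := by
    by_contra hcon
    push_neg at hcon
    have hall0 : ∀ i ∈ univ, s i = 0 := by
      intro i _
      have := hprod0 i (mem_univ i)
      rcases mul_eq_zero.mp this with h|h
      · exact h
      · exact absurd (by linarith : s i = 2*(r:ℤ)) (hcon i)
    have : ∑ i, s i = 0 := Finset.sum_eq_zero hall0
    rw [hsum2r] at this
    have hr' : (4:ℤ) ≤ (r:ℤ) := by exact_mod_cast hr
    linarith
  obtain ⟨m, hm⟩ := hexists
  -- Step L : block equality
  have hblockeq : ∀ j : Fin (2*r), a j = vv H hr (ι hr m) j := by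
    have hz : ∑ j : Fin (2*r), (1 - a j * vv H hr (ι hr m) j) = 0 := by
      have hsm : ∑ j : Fin (2*r), a j * vv H hr (ι hr m) j = 2*(r:ℤ) := hm
      rw [Finset.sum_sub_distrib, hsm, Finset.sum_const, card_univ, Fintype.card_fin,
        nsmul_eq_mul, mul_one]
      push_cast; ring
    have hnn : ∀ j ∈ univ, (0:ℤ) ≤ 1 - a j * vv H hr (ι hr m) j := by
      intro j _
      have := (hapm j).le_one (vv_pm H hr hent (ι hr m) j)
      omega
    have hall := (Finset.sum_eq_zero_iff_of_nonneg hnn).mp hz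
    intro j
    have h1 : a j * vv H hr (ι hr m) j = 1 := by have := hall j (mem_univ j); omega
    exact (hapm j).eq_of_mul_eq_one (vv_pm H hr hent _ j) h1
  -- Step M : conclude
  refine ⟨m, ?_⟩
  funext j
  by_cases hj : (j:ℕ) < 2*r
  · have hje : j = emb h2rn ⟨j.1, hj⟩ := by apply Fin.ext; rfl
    rw [hje, hxblock m ⟨j.1, hj⟩]
    exact hblockeq ⟨j.1, hj⟩
  · have hjm : j ∈ padF r n := by
      unfold padF
      rw [Finset.mem_filter]
      exact ⟨mem_univ _, hj⟩
    rw [hpadeq j hjm, hxpad m j hjm]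

end facts

-- additivity of bdry
lemma bdry_add {V : Type*} {k : ℕ} (c c' : (Fin (k + 1) → V) →₀ ℤ) :
    bdry (c + c') = bdry c + bdry c' := by
  unfold bdry
  apply Finsupp.sum_add_index'
  · intro σ; simp
  · intro σ a b
    rw [← Finset.sum_add_distrib]
    apply Finset.sum_congr rfl
    intro i _
    rw [← add_smul, ← add_mul]

lemma bdry_single {V : Type*} {k : ℕ} (σ : Fin (k + 1) → V) (a : ℤ) :
    bdry (Finsupp.single σ a) =
      ∑ i : Fin (k + 1), (a * (-1) ^ (i : ℕ)) • Finsupp.single (fun j => σ (i.succAbove j)) 1 := by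
  unfold bdry
  apply Finsupp.sum_single_index
  simp

noncomputable def bdryH {V : Type*} {k : ℕ} : ((Fin (k + 1) → V) →₀ ℤ) →+ ((Fin k → V) →₀ ℤ) :=
  AddMonoidHom.mk' bdry bdry_add

lemma sgn_update {r : ℕ} (ε : Fin (2*r-2+1) → Bool) (i : Fin (2*r-2+1)) :
    sgn (Function.update ε i (!(ε i))) = - sgn ε := by
  unfold sgn
  rw [← Finset.mul_prod_erase univ _ (mem_univ i), ← Finset.mul_prod_erase univ (fun x => bs (ε x)) (mem_univ i)]
  have h1 : ∀ x ∈ univ.erase i, bs (Function.update ε i (!(ε i)) x) = bs (ε x) := by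
    intro x hx
    rw [Function.update_of_ne (Finset.ne_of_mem_erase hx)]
  rw [Finset.prod_congr rfl h1, Function.update_self]
  have : bs (!(ε i)) = - bs (ε i) := by cases h : ε i <;> simp [bs]
  rw [this]; ring

lemma tup_face_update (n ℓ : ℕ) {r : ℕ} (H : Matrix (Fin (2*r)) (Fin (2*r)) ℤ) (hr : 4 ≤ r)
    (ε : Fin (2*r-2+1) → Bool) (i : Fin (2*r-2+1)) (b : Bool) :
    (fun j : Fin (2*r-2) => tup n ℓ H hr (Function.update ε i b) (i.succAbove j))
      = (fun j : Fin (2*r-2) => tup n ℓ H hr ε (i.succAbove j)) := by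
  funext j
  unfold tup
  rw [Function.update_of_ne (Fin.succAbove_ne i j)]

lemma bdry_zc {r n ℓ : ℕ} (H : Matrix (Fin (2*r)) (Fin (2*r)) ℤ) (hr : 4 ≤ r) :
    bdry (zc n ℓ H hr) = 0 := by
  have hz : bdry (zc n ℓ H hr) = bdryH (zc n ℓ H hr) := rfl
  rw [hz]
  unfold zc
  rw [map_sum]
  have h1 : ∀ ε : Fin (2*r-2+1) → Bool, bdryH (V := Fin n → ℤ) (k := 2*r-2)
      (Finsupp.single (tup n ℓ H hr ε) (sgn ε)) =
      ∑ i : Fin (2*r-2+1), (sgn ε * (-1) ^ (i:ℕ)) •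
        Finsupp.single (fun j => tup n ℓ H hr ε (i.succAbove j)) 1 := by
    intro ε
    exact bdry_single _ _
  rw [Finset.sum_congr rfl (fun ε _ => h1 ε), Finset.sum_comm]
  apply Finset.sum_eq_zero
  intro i _
  apply Finset.sum_involution
    (fun (ε : Fin (2*r-2+1) → Bool) (_ : ε ∈ (univ : Finset (Fin (2*r-2+1) → Bool))) =>
      Function.update ε i (!(ε i)))
  · intro ε _
    rw [sgn_update, tup_face_update]
    rw [← add_smul]
    have : (-sgn ε * (-1) ^ (i:ℕ)) = -(sgn ε * (-1) ^ (i:ℕ)) := by ring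
    rw [this, add_neg_cancel, zero_smul]
  · intro ε _ _
    intro hcon
    have := congrFun hcon i
    rw [Function.update_self] at this
    exact (Bool.not_ne_self (ε i)) this
  · intro ε _; exact mem_univ _
  · intro ε _
    rw [Function.update_idem, Function.update_self, Bool.not_not, Function.update_eq_self]


-- determinant cochain
noncomputable def fdet (n ℓ : ℕ) {r : ℕ} (H : Matrix (Fin (2*r)) (Fin (2*r)) ℤ) (hr : 4 ≤ r)
    (σ : Fin (2*r-2+1) → (Fin n → ℤ)) : ℤ :=
  Matrix.det (Matrix.of fun i k : Fin (2*r-2+1) =>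
    if σ k = xv n ℓ H hr i then (1:ℤ) else 0)

noncomputable def phi (n ℓ : ℕ) {r : ℕ} (H : Matrix (Fin (2*r)) (Fin (2*r)) ℤ) (hr : 4 ≤ r) :
    ((Fin (2*r-2+1) → (Fin n → ℤ)) →₀ ℤ) →ₗ[ℤ] ℤ :=
  Finsupp.linearCombination ℤ (fdet n ℓ H hr)

lemma det_zero_of_vecMul {N : ℕ} (B : Matrix (Fin N) (Fin N) ℤ) (c : Fin N → ℤ) (i₀ : Fin N)
    (hc : c i₀ = 1) (h : Matrix.vecMul c B = 0) : B.det = 0 := by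
  have h2 : Matrix.vecMul c (B * B.adjugate) = 0 := by
    rw [← Matrix.vecMul_vecMul, h, Matrix.zero_vecMul]
  rw [Matrix.mul_adjugate] at h2
  have h3 := congrFun h2 i₀
  simp only [Matrix.vecMul, dotProduct, Matrix.smul_apply, Matrix.one_apply,
    smul_eq_mul, Pi.zero_apply, mul_ite, mul_one, mul_zero] at h3
  rw [Finset.sum_eq_single i₀ (fun b _ hb => by rw [if_neg hb]) (fun hh => absurd (mem_univ _) hh)] at h3
  rw [if_pos rfl, hc, one_mul] at h3
  exact h3

section cocycle
variable {r n ℓ : ℕ} (H : Matrix (Fin (2*r)) (Fin (2*r)) ℤ) (hr : 4 ≤ r)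
  (hent : ∀ i j, H i j = 1 ∨ H i j = -1)
  (hHad : H.transpose * H = (2 * r : ℤ) • 1)
  (hℓ : r ≤ ℓ) (hn : ℓ + r ≤ n)

include hent hHad hℓ hn in
lemma xv_inj {i i' : Fin (2*r-2+1)} (h : xv n ℓ H hr i = xv n ℓ H hr i') : i = i' := by
  by_contra hne
  have h1 := tup_dot H hr hent hHad hℓ hn (fun _ => true) (fun _ => true) i i' hne
  have hpm : ∀ j, pm (xv n ℓ H hr i' j) :=
    fun j => pad_pm (fun t => (bs_pm _).mul (vv_pm H hr hent _ t)) j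
  have h2 : ∑ j, xv n ℓ H hr i j * xv n ℓ H hr i' j = (n:ℤ) := by
    rw [h]
    rw [Finset.sum_congr rfl (fun j _ => (hpm j).sq), Finset.sum_const, card_univ,
      Fintype.card_fin, nsmul_eq_mul, mul_one]
  have h3 : (n:ℤ) = (n:ℤ) - 2*(r:ℤ) := h2.symm.trans h1
  omega

include hent hHad hℓ hn in
lemma tup_eq_xv_iff (ε : Fin (2*r-2+1) → Bool) (k i : Fin (2*r-2+1)) :
    tup n ℓ H hr ε k = xv n ℓ H hr i ↔ (ε k = true ∧ k = i) := by
  have h2rn : 2*r ≤ n := by omega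
  constructor
  · intro h
    have hb : ∀ j : Fin (2*r), bs (ε k) * vv H hr (ι hr k) j = vv H hr (ι hr i) j := by
      intro j
      have := congrFun h (emb h2rn j)
      unfold xv tup at this
      rw [pad_block h2rn, pad_block h2rn] at this
      simpa [bs] using this
    have hdot : ∑ j, (bs (ε k) * vv H hr (ι hr k) j) * vv H hr (ι hr i) j = 2*(r:ℤ) := by
      rw [Finset.sum_congr rfl (fun j _ => by rw [hb j])]
      rw [Finset.sum_congr rfl (fun j _ => (vv_pm H hr hent (ι hr i) j).sq), Finset.sum_const,
        card_univ, Fintype.card_fin, nsmul_eq_mul, mul_one]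
      push_cast; ring
    have hdot2 : bs (ε k) * ∑ j, vv H hr (ι hr k) j * vv H hr (ι hr i) j = 2*(r:ℤ) := by
      rw [Finset.mul_sum, ← hdot]
      exact Finset.sum_congr rfl (fun j _ => by ring)
    rw [vv_row H hr hent hHad] at hdot2
    by_cases hki : ι hr k = ι hr i
    · rw [if_pos hki] at hdot2
      have hik : k = i := ι_inj hr hki
      cases hεk : ε k
      · exfalso
        rw [hεk] at hdot2
        simp [bs] at hdot2
        omega
      · exact ⟨rfl, hik⟩
    · exfalso
      rw [if_neg hki] at hdot2
      simp [bs] at hdot2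
      rcases hdot2 with ⟨_, h0⟩ | ⟨_, h0⟩ <;> omega
  · rintro ⟨h1, rfl⟩
    unfold tup xv tup
    rw [h1]

include hent hHad hℓ hn in
lemma fdet_tup_allTrue : fdet n ℓ H hr (tup n ℓ H hr (fun _ => true)) = 1 := by
  unfold fdet
  have hM : (Matrix.of fun i k : Fin (2*r-2+1) =>
      if tup n ℓ H hr (fun _ => true) k = xv n ℓ H hr i then (1:ℤ) else 0) = 1 := by
    ext i k
    rw [Matrix.of_apply, Matrix.one_apply]
    by_cases h : tup n ℓ H hr (fun _ => true) k = xv n ℓ H hr i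
    · rw [if_pos h, if_pos]
      exact ((tup_eq_xv_iff H hr hent hHad hℓ hn _ k i).mp h).2.symm
    · rw [if_neg h, if_neg]
      intro hik
      exact h ((tup_eq_xv_iff H hr hent hHad hℓ hn _ k i).mpr ⟨rfl, hik.symm⟩)
  rw [hM, Matrix.det_one]

include hent hHad hℓ hn in
lemma fdet_tup_false (ε : Fin (2*r-2+1) → Bool) (k₀ : Fin (2*r-2+1)) (hk : ε k₀ = false) :
    fdet n ℓ H hr (tup n ℓ H hr ε) = 0 := by
  unfold fdet
  apply Matrix.det_eq_zero_of_column_eq_zero k₀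
  intro i
  rw [Matrix.of_apply, if_neg]
  intro h
  have := ((tup_eq_xv_iff H hr hent hHad hℓ hn ε k₀ i).mp h).1
  rw [hk] at this
  exact Bool.false_ne_true this

include hent hHad hℓ hn in
lemma phi_zc : phi n ℓ H hr (zc n ℓ H hr) = 1 := by
  unfold zc phi
  rw [map_sum]
  have h1 : ∀ ε : Fin (2*r-2+1) → Bool,
      Finsupp.linearCombination ℤ (fdet n ℓ H hr) (Finsupp.single (tup n ℓ H hr ε) (sgn ε))
      = sgn ε * fdet n ℓ H hr (tup n ℓ H hr ε) := by
    intro ε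
    rw [Finsupp.linearCombination_single, smul_eq_mul]
  rw [Finset.sum_congr rfl (fun ε _ => h1 ε)]
  rw [Finset.sum_eq_single (fun _ => true)]
  · rw [fdet_tup_allTrue H hr hent hHad hℓ hn]
    unfold sgn
    simp [bs]
  · intro ε _ hne
    have : ∃ k₀, ε k₀ = false := by
      by_contra hcon
      push_neg at hcon
      apply hne
      funext k
      have := hcon k
      revert this
      cases ε k <;> simp
    obtain ⟨k₀, hk₀⟩ := this
    rw [fdet_tup_false H hr hent hHad hℓ hn ε k₀ hk₀, mul_zero]
  · intro h; exact absurd (mem_univ _) h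

include hent hHad hℓ hn in
lemma cocycle (σ : Fin (2*r-2+1+1) → (Fin n → ℤ))
    (hσ : Finset.image σ Finset.univ ∈ VRfaces (levelSet n ℓ) r) :
    ∑ i : Fin (2*r-2+1+1), (-1:ℤ)^(i:ℕ) * fdet n ℓ H hr (fun j => σ (i.succAbove j)) = 0 := by
  set B : Matrix (Fin (2*r-2+1+1)) (Fin (2*r-2+1+1)) ℤ :=
    Matrix.of (fun i k => Fin.cases 1 (fun i' => if σ k = xv n ℓ H hr i' then (1:ℤ) else 0) i)
    with hB
  have hdet : B.det = ∑ i : Fin (2*r-2+1+1), (-1:ℤ)^(i:ℕ) *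
      fdet n ℓ H hr (fun j => σ (i.succAbove j)) := by
    rw [Matrix.det_succ_row_zero]
    apply Finset.sum_congr rfl
    intro j _
    have hB0 : B 0 j = 1 := rfl
    have hsub : B.submatrix Fin.succ j.succAbove = Matrix.of (fun i' k' : Fin (2*r-2+1) =>
        if σ (j.succAbove k') = xv n ℓ H hr i' then (1:ℤ) else 0) := by
      ext i' k'
      rfl
    rw [hB0, hsub, mul_one]
    rfl
  rw [← hdet]
  by_cases hall : ∀ i' : Fin (2*r-2+1), ∃ k, σ k = xv n ℓ H hr i'
  · by_cases hall2 : ∀ k, ∃ i', σ k = xv n ℓ H hr i'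
    · apply det_zero_of_vecMul B (fun i => if i = 0 then 1 else -1) 0 (if_pos rfl)
      funext k
      have hv : Matrix.vecMul (fun i : Fin (2*r-2+1+1) => if i = 0 then (1:ℤ) else -1) B k
          = ∑ i : Fin (2*r-2+1+1), (if i = 0 then (1:ℤ) else -1) * B i k := by
        simp [Matrix.vecMul, dotProduct]
      rw [Pi.zero_apply, hv, Fin.sum_univ_succ]
      rw [if_pos rfl]
      have hB0 : B 0 k = 1 := rfl
      have hBs : ∀ i' : Fin (2*r-2+1), B i'.succ k = if σ k = xv n ℓ H hr i' then (1:ℤ) else 0 := by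
        intro i'; rfl
      rw [hB0]
      have hstep : ∀ i' : Fin (2*r-2+1),
          (if (i'.succ : Fin (2*r-2+1+1)) = 0 then (1:ℤ) else -1) * B i'.succ k
          = -(if σ k = xv n ℓ H hr i' then (1:ℤ) else 0) := by
        intro i'
        rw [if_neg (Fin.succ_ne_zero i'), hBs i']
        ring
      rw [Finset.sum_congr rfl (fun i' _ => hstep i'), Finset.sum_neg_distrib]
      obtain ⟨i₀, hi₀⟩ := hall2 k
      rw [Finset.sum_eq_single i₀]
      · rw [if_pos hi₀]; ring
      · intro i' _ hne
        rw [if_neg]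
        intro hcon
        exact hne (xv_inj H hr hent hHad hℓ hn (hcon.symm.trans hi₀))
      · intro h; exact absurd (mem_univ _) h
    · exfalso
      push_neg at hall2
      obtain ⟨k₀, hk₀⟩ := hall2
      obtain ⟨hsub, hdist⟩ := hσ
      have hy : σ k₀ ∈ levelSet n ℓ := by
        apply hsub
        rw [Finset.mem_coe, Finset.mem_image]
        exact ⟨k₀, mem_univ _, rfl⟩
      have hdy : ∀ i' : Fin (2*r-2+1), hammingDist (σ k₀) (xv n ℓ H hr i') ≤ r := by
        intro i'
        obtain ⟨k, hk⟩ := hall i'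
        rw [← hk]
        apply hdist
        · rw [Finset.mem_image]; exact ⟨k₀, mem_univ _, rfl⟩
        · rw [Finset.mem_image]; exact ⟨k, mem_univ _, rfl⟩
      obtain ⟨m, hm⟩ := maximality H hr hent hHad hℓ hn (σ k₀) hy hdy
      exact hk₀ m hm
  · push_neg at hall
    obtain ⟨i₀, hi₀⟩ := hall
    apply Matrix.det_eq_zero_of_row_eq_zero i₀.succ
    intro k
    have : B i₀.succ k = if σ k = xv n ℓ H hr i₀ then (1:ℤ) else 0 := rfl
    rw [this, if_neg (hi₀ k)]

include hent hHad hℓ hn in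
lemma phi_bdry (w : (Fin (2*r-2+1+1) → (Fin n → ℤ)) →₀ ℤ)
    (hw : ChainIn (VRfaces (levelSet n ℓ) r) w) : phi n ℓ H hr (bdry w) = 0 := by
  unfold bdry
  rw [map_finsuppSum]
  apply Finset.sum_eq_zero
  intro σ hσ
  show phi n ℓ H hr (∑ i : Fin (2*r-2+1+1),
    (w σ * (-1) ^ (i:ℕ)) • Finsupp.single (fun j => σ (i.succAbove j)) (1:ℤ)) = 0
  rw [map_sum]
  have h1 : ∀ i : Fin (2*r-2+1+1),
      phi n ℓ H hr ((w σ * (-1) ^ (i:ℕ)) • Finsupp.single (fun j => σ (i.succAbove j)) 1)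
      = w σ * ((-1:ℤ)^(i:ℕ) * fdet n ℓ H hr (fun j => σ (i.succAbove j))) := by
    intro i
    rw [map_smul]
    unfold phi
    rw [Finsupp.linearCombination_single, smul_eq_mul, smul_eq_mul]
    ring
  rw [Finset.sum_congr rfl (fun i _ => h1 i), ← Finset.mul_sum]
  rw [cocycle H hr hent hHad hℓ hn σ (hw σ hσ), mul_zero]

end cocycle

end S17

/-- If a Hadamard matrix of order `2r` exists, `r ≥ 4`, `ℓ ≥ r` and `n ≥ ℓ + r`,
then the `(2r-2)`-dimensional homology of `VR(L^n_ℓ; r)` is non-trivial: there is a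
`(2r-2)`-cycle of the complex which is not the boundary of any chain of the complex. -/
theorem stmt_17 (r n ℓ : ℕ) (hr : 4 ≤ r) (hℓ : r ≤ ℓ) (hn : ℓ + r ≤ n)
    (H : Matrix (Fin (2 * r)) (Fin (2 * r)) ℤ)
    (hent : ∀ i j, H i j = 1 ∨ H i j = -1)
    (hHad : H.transpose * H = (2 * r : ℤ) • 1) :
    ∃ z : (Fin (2 * r - 2 + 1) → (Fin n → ℤ)) →₀ ℤ,
      ChainIn (VRfaces (levelSet n ℓ) r) z ∧ bdry z = 0 ∧ z ≠ 0 ∧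
      ∀ w : (Fin (2 * r - 2 + 1 + 1) → (Fin n → ℤ)) →₀ ℤ,
        ChainIn (VRfaces (levelSet n ℓ) r) w → bdry w ≠ z := by
  refine ⟨S17.zc n ℓ H hr, S17.zc_chain H hr hent hHad hℓ hn, S17.bdry_zc H hr, ?_, ?_⟩
  · intro h0
    have h1 := S17.phi_zc H hr hent hHad hℓ hn
    rw [h0, map_zero] at h1
    exact one_ne_zero h1.symm
  · intro w hw hbw
    have h1 := S17.phi_bdry H hr hent hHad hℓ hn w hw
    rw [hbw, S17.phi_zc H hr hent hHad hℓ hn] at h1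
    exact one_ne_zero h1
end
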